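/- arXiv:2510.04418 — 7 statements merged into one kernel-verified Lean document; each statement's English description precedes it below -/
import Mathlib

section
/- Let G = (C, I, E) be a block-split graph that is not a tree and not isomorphic to K_3. Then G admits a HIST if and only if G contains at least two good vertices, where a vertex u in the clique C is good if its degree is not equal to |C|. -/
open SimpleGraph

namespace HistAux

variable {V : Type*}

/-- The graph of edges `{v, f v}`. -/
def fTree (f : V → V) : SimpleGraph V where
  Adj x y := x ≠ y ∧ (f x = y ∨ f y = x)
  symm := ⟨fun x y ⟨h1, h2⟩ => ⟨h1.symm, h2.symm⟩⟩
  loopless := ⟨fun x ⟨h, _⟩ => h rfl⟩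

lemma fTree_adj (f : V → V) {x y : V} :
    (fTree f).Adj x y ↔ x ≠ y ∧ (f x = y ∨ f y = x) := Iff.rfl

theorem fTree_connected (f : V → V) (r : V) (m : V → ℕ)
    (hm : ∀ v, v ≠ r → m (f v) < m v) : (fTree f).Connected := by
  have key : ∀ n v, m v < n → (fTree f).Reachable v r := by
    intro n
    induction n with
    | zero => intro v hv; exact absurd hv (Nat.not_lt_zero _)
    | succ n ih =>
      intro v hv
      by_cases hvr : v = r
      · subst hvr; exact Reachable.refl _
      · have hlt := hm v hvr
        have hne : v ≠ f v := by
          intro h; rw [← h] at hlt; exact lt_irrefl _ hlt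
        have hadj : (fTree f).Adj v (f v) := ⟨hne, Or.inl rfl⟩
        exact (hadj.reachable).trans (ih (f v) (by omega))
  haveI : Nonempty V := ⟨r⟩
  exact ⟨fun u v => (key (m u + 1) u (by omega)).trans (key (m v + 1) v (by omega)).symm⟩

/-- A cycle starting at `x` gives two distinct neighbors of `x` in its support. -/
theorem cycle_start_two_nbrs {G : SimpleGraph V} {x : V} {c : G.Walk x x} (hc : c.IsCycle) :
    ∃ w z, w ≠ z ∧ G.Adj x w ∧ G.Adj x z ∧ w ∈ c.support ∧ z ∈ c.support := by
  cases c with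
  | nil => exact absurd rfl hc.ne_nil
  | @cons _ w _ h q =>
    cases hq : q.reverse with
    | nil =>
      exfalso
      have : q = Walk.nil.reverse := by rw [← hq, Walk.reverse_reverse]
      rw [Walk.reverse_nil] at this
      exact G.ne_of_adj h (by cases this; rfl)
    | @cons _ z _ h2 q2 =>
      have hzq : z ∈ q.support := by
        have : z ∈ q.reverse.support := by
          rw [hq, Walk.support_cons]
          exact List.mem_cons_of_mem _ q2.start_mem_support
        rwa [Walk.support_reverse, List.mem_reverse] at this
      refine ⟨w, z, ?_, h, h2, ?_, ?_⟩
      · intro hwz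
        have hedge : s(x, z) ∈ q.edges := by
          have : s(x, z) ∈ q.reverse.edges := by
            rw [hq, Walk.edges_cons]; exact List.mem_cons_self
          rwa [Walk.edges_reverse, List.mem_reverse] at this
        have htrail := hc.isCircuit.isTrail.edges_nodup
        rw [Walk.edges_cons] at htrail
        rw [← hwz] at hedge
        exact (List.nodup_cons.mp htrail).1 hedge
      · rw [Walk.support_cons]
        exact List.mem_cons_of_mem _ q.start_mem_support
      · rw [Walk.support_cons]
        exact List.mem_cons_of_mem _ hzq

theorem cycle_two_nbrs [DecidableEq V] {G : SimpleGraph V} {v x : V} {c : G.Walk v v} (hc : c.IsCycle)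
    (hx : x ∈ c.support) :
    ∃ w z, w ≠ z ∧ G.Adj x w ∧ G.Adj x z ∧ w ∈ c.support ∧ z ∈ c.support := by
  obtain ⟨w, z, hwz, haw, haz, hw, hz⟩ := cycle_start_two_nbrs (hc.rotate hx)
  have hsub : ∀ y, y ∈ (c.rotate x hx).support → y ∈ c.support := by
    intro y hy
    rw [Walk.rotate, Walk.mem_support_append_iff] at hy
    rcases hy with hy | hy
    · exact c.support_dropUntil_subset hx hy
    · exact c.support_takeUntil_subset hx hy
  exact ⟨w, z, hwz, haw, haz, hsub w hw, hsub z hz⟩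

theorem fTree_acyclic [DecidableEq V] (f : V → V) (r : V) (m : V → ℕ)
    (hr : f r = r) (hm : ∀ v, v ≠ r → m (f v) < m v) : (fTree f).IsAcyclic := by
  intro v c hc
  obtain ⟨x, hx, hmax⟩ := (c.support.toFinset).exists_max_image m
    ⟨v, by simp [c.start_mem_support]⟩
  rw [List.mem_toFinset] at hx
  obtain ⟨w, z, hwz, haw, haz, hw, hz⟩ := cycle_two_nbrs hc hx
  have key : ∀ y, (fTree f).Adj x y → y ∈ c.support → f x = y := by
    rintro y ⟨hne, hy | hy⟩ hmem
    · exact hy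
    · exfalso
      have hyr : y ≠ r := by
        intro h
        rw [h, hr] at hy
        exact hne (hy.symm.trans h.symm)
      have := hm y hyr
      rw [hy] at this
      exact absurd (hmax y (by rwa [List.mem_toFinset])) (by omega)
  exact hwz ((key w haw hw).symm.trans (key z haz hz))

/-- Everything is in a set closed under adjacency, in a connected graph. -/
theorem mem_of_closed {G : SimpleGraph V} (hconn : G.Connected) (S : Set V)
    (hS : ∀ x ∈ S, ∀ y, G.Adj x y → y ∈ S) {s : V} (hs : s ∈ S) (v : V) : v ∈ S := by
  have : ∀ {a b : V} (_ : G.Walk a b), a ∈ S → b ∈ S := by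
    intro a b p
    induction p with
    | nil => exact id
    | cons h q ih => intro ha; exact ih (hS _ ha _ h)
  exact (hconn.preconnected s v).elim fun p => this p hs

theorem exists_adj {G : SimpleGraph V} (hconn : G.Connected) {v w : V} (hvw : v ≠ w) :
    ∃ u, G.Adj v u := by
  obtain ⟨p⟩ := hconn.preconnected v w
  cases p with
  | nil => exact absurd rfl hvw
  | cons h _ => exact ⟨_, h⟩

theorem three_le_ncard {S : Set V} {a b c : V} (ha : a ∈ S) (hb : b ∈ S) (hc : c ∈ S)
    (hab : a ≠ b) (hac : a ≠ c) (hbc : b ≠ c) (hfin : S.Finite) : 3 ≤ S.ncard := by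
  have hsub : ({a, b, c} : Set V) ⊆ S := by
    intro x hx; rcases hx with rfl | rfl | rfl <;> assumption
  have : ({a, b, c} : Set V).ncard = 3 := by
    rw [Set.ncard_insert_of_notMem (by simp [hab, hac]) ((Set.finite_singleton c).insert b),
      Set.ncard_pair hbc]
  rw [← this]
  exact Set.ncard_le_ncard hsub hfin

end HistAux
section Main

open SimpleGraph HistAux Finset

/-- A homeomorphically irreducible spanning tree (HIST) of `G`. -/
def IsHIST {V : Type*} (G T : SimpleGraph V) : Prop :=
  T ≤ G ∧ T.Connected ∧ T.IsAcyclic ∧ ∀ v : V, (T.neighborSet v).ncard ≠ 2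

/-- A block-split graph (split graph whose independent-set vertices have degree at most 1)
that is not a tree and not isomorphic to `K₃` admits a HIST iff it has at least
two good vertices (vertices `u ∈ C` with `d(u) ≠ |C|`). -/
theorem stmt2 {V : Type*} [Fintype V] [DecidableEq V] (G : SimpleGraph V) [DecidableRel G.Adj]
    (C I : Finset V)
    (hunion : C ∪ I = Finset.univ) (hdisj : Disjoint C I)
    (hclique : G.IsClique (C : Set V))
    (hindep : ∀ v ∈ I, ∀ w ∈ I, ¬ G.Adj v w)
    (hblock : ∀ v ∈ I, G.degree v ≤ 1)
    (hconn : G.Connected)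
    (hnotTree : ¬ (G.Connected ∧ G.IsAcyclic))
    (hnotK3 : IsEmpty (G ≃g (⊤ : SimpleGraph (Fin 3)))) :
    (∃ T, IsHIST G T) ↔ 2 ≤ (C.filter (fun u => G.degree u ≠ C.card)).card := by
  classical
  have hmem : ∀ v : V, v ∈ C ∨ v ∈ I := by
    intro v
    have : v ∈ C ∪ I := by rw [hunion]; exact Finset.mem_univ v
    exact Finset.mem_union.mp this
  have hCI : ∀ v ∈ C, v ∉ I := fun v hv hv' => (Finset.disjoint_left.mp hdisj) hv hv'
  have hIC : ∀ v ∈ I, v ∉ C := fun v hv hv' => (Finset.disjoint_left.mp hdisj) hv' hv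
  have hnex : ∀ v : V, (∃ w : V, w ≠ v) → ∃ w, G.Adj v w := by
    rintro v ⟨w, hw⟩
    exact exists_adj hconn (Ne.symm hw)
  let n : V → V := fun v => if h : ∃ w, G.Adj v w then h.choose else v
  have hnadj : ∀ v, (∃ w, G.Adj v w) → G.Adj v (n v) := fun v h => by
    show G.Adj v (dite _ _ _)
    rw [dif_pos h]
    exact h.choose_spec
  have huniq : ∀ v ∈ I, ∀ y z : V, G.Adj v y → G.Adj v z → y = z := by
    intro v hv y z hy hz
    have h1 : y ∈ G.neighborFinset v := by rwa [SimpleGraph.mem_neighborFinset]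
    have h2 : z ∈ G.neighborFinset v := by rwa [SimpleGraph.mem_neighborFinset]
    have hd := hblock v hv
    rw [← SimpleGraph.card_neighborFinset_eq_degree] at hd
    exact Finset.card_le_one.mp hd y h1 z h2
  -- |C| ≥ 3
  have hC3 : 3 ≤ C.card := by
    by_contra hlt
    push_neg at hlt
    apply hnotTree
    refine ⟨hconn, ?_⟩
    by_cases hedge : ∃ x y, G.Adj x y
    · obtain ⟨x, y, hxy⟩ := hedge
      have hCne : ∃ g, g ∈ C := by
        rcases hmem x with hx | hx
        · exact ⟨x, hx⟩
        · rcases hmem y with hy | hy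
          · exact ⟨y, hy⟩
          · exact absurd hxy (hindep x hx y hy)
      obtain ⟨g, hg⟩ := hCne
      have hV2 : ∀ v : V, ∃ w : V, w ≠ v := by
        intro v
        by_cases h : v = x
        · exact ⟨y, by rw [h]; exact fun hh => G.ne_of_adj hxy hh.symm⟩
        · exact ⟨x, fun hh => h hh.symm⟩
      have hG : G = fTree (fun v => if v ∈ I then n v else g) := by
        ext a b
        rw [fTree_adj]
        constructor
        · intro hab
          refine ⟨G.ne_of_adj hab, ?_⟩
          by_cases ha : a ∈ I
          · left
            simp only [if_pos ha]
            exact huniq a ha (n a) b (hnadj a ⟨b, hab⟩) hab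
          · by_cases hb : b ∈ I
            · right
              simp only [if_pos hb]
              exact huniq b hb (n b) a (hnadj b ⟨a, hab.symm⟩) hab.symm
            · have haC : a ∈ C := (hmem a).resolve_right ha
              have hbC : b ∈ C := (hmem b).resolve_right hb
              have hor : a = g ∨ b = g := by
                by_contra hcon
                push_neg at hcon
                have hsub : ({g, a, b} : Finset V) ⊆ C := by
                  intro t ht
                  simp only [Finset.mem_insert, Finset.mem_singleton] at ht
                  rcases ht with rfl | rfl | rfl <;> assumption
                have hcard : ({g, a, b} : Finset V).card = 3 := by
                  rw [Finset.card_insert_of_notMem (by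
                      simp only [Finset.mem_insert, Finset.mem_singleton]
                      push_neg
                      exact ⟨fun h => hcon.1 h.symm, fun h => hcon.2 h.symm⟩),
                    Finset.card_insert_of_notMem (by
                      simp only [Finset.mem_singleton]
                      exact G.ne_of_adj hab),
                    Finset.card_singleton]
                have := Finset.card_le_card hsub
                omega
              rcases hor with rfl | rfl
              · right; simp only [if_neg hb]
              · left; simp only [if_neg ha]
        · rintro ⟨hab, hfa | hfb⟩
          · by_cases ha : a ∈ I
            · rw [if_pos ha] at hfa
              rw [← hfa]
              exact hnadj a (hnex a (hV2 a))
            · rw [if_neg ha] at hfa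
              have haC : a ∈ C := (hmem a).resolve_right ha
              exact hclique (Finset.mem_coe.mpr haC) (Finset.mem_coe.mpr (hfa ▸ hg)) hab
          · by_cases hb : b ∈ I
            · rw [if_pos hb] at hfb
              rw [← hfb]
              exact (hnadj b (hnex b (hV2 b))).symm
            · rw [if_neg hb] at hfb
              have hbC : b ∈ C := (hmem b).resolve_right hb
              exact hclique (Finset.mem_coe.mpr (hfb ▸ hg)) (Finset.mem_coe.mpr hbC) hab
      rw [hG]
      refine fTree_acyclic _ g (fun v => if v = g then 0 else if v ∈ I then 2 else 1) ?_ ?_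
      · simp only [if_neg (hCI g hg)]
      · intro v hv
        show (if (if v ∈ I then n v else g) = g then 0 else
            if (if v ∈ I then n v else g) ∈ I then 2 else 1) <
          (if v = g then 0 else if v ∈ I then 2 else 1)
        by_cases hvI : v ∈ I
        · have hadj : G.Adj v (n v) := hnadj v (hnex v (hV2 v))
          have hnI : n v ∉ I := fun h => hindep v hvI (n v) h hadj
          have hvg : v ≠ g := fun h => (hIC v hvI) (h ▸ hg)
          rw [if_pos hvI, if_neg hvg, if_pos hvI]
          by_cases h : n v = g
          · rw [if_pos h]; omega
          · rw [if_neg h, if_neg hnI]; omega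
        · rw [if_neg hvI, if_neg hv, if_neg hvI, if_pos rfl]
          omega
    · intro v c hc
      cases c with
      | nil => exact hc.ne_nil rfl
      | cons h q => exact hedge ⟨_, _, h⟩
  -- basic consequences
  have hcardV : Fintype.card V = C.card + I.card := by
    rw [← Finset.card_univ, ← hunion, Finset.card_union_of_disjoint hdisj]
  have hV2 : ∀ v : V, ∃ w : V, w ≠ v := by
    intro v
    obtain ⟨a, ha, b, hb, hab⟩ := Finset.one_lt_card.mp (by omega : 1 < C.card)
    by_cases h : a = v
    · exact ⟨b, fun hh => hab ((hh.trans h.symm)).symm⟩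
    · exact ⟨a, h⟩
  have hnadj' : ∀ v, G.Adj v (n v) := fun v => hnadj v (hnex v (hV2 v))
  have hnC : ∀ v ∈ I, n v ∈ C := by
    intro v hv
    rcases hmem (n v) with h | h
    · exact h
    · exact absurd (hnadj' v) (hindep v hv (n v) h)
  have hnuniq : ∀ v ∈ I, ∀ w, G.Adj v w → w = n v := fun v hv w hw =>
    huniq v hv w (n v) hw (hnadj' v)
  let pend : V → Finset V := fun u => I.filter (fun w => G.Adj u w)
  let P : V → ℕ := fun u => (pend u).card
  have hpend_mem : ∀ u w : V, w ∈ pend u ↔ w ∈ I ∧ G.Adj u w := by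
    intro u w; simp [pend]
  have hdegC : ∀ u ∈ C, G.degree u = C.card - 1 + P u := by
    intro u hu
    have hnb : G.neighborFinset u = (C.erase u) ∪ pend u := by
      ext w
      rw [SimpleGraph.mem_neighborFinset, Finset.mem_union, Finset.mem_erase, hpend_mem]
      constructor
      · intro hadj
        rcases hmem w with h | h
        · exact Or.inl ⟨(G.ne_of_adj hadj).symm, h⟩
        · exact Or.inr ⟨h, hadj⟩
      · rintro (⟨hne, hw⟩ | ⟨hw, hadj⟩)
        · exact hclique (Finset.mem_coe.mpr hu) (Finset.mem_coe.mpr hw) (Ne.symm hne)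
        · exact hadj
    rw [← SimpleGraph.card_neighborFinset_eq_degree, hnb,
      Finset.card_union_of_disjoint (Finset.disjoint_left.mpr fun w hw1 hw2 =>
        hCI w (Finset.mem_of_mem_erase hw1) ((hpend_mem u w).mp hw2).1),
      Finset.card_erase_of_mem hu]
  have hgoodP : ∀ u ∈ C, (G.degree u ≠ C.card ↔ P u ≠ 1) := by
    intro u hu
    rw [hdegC u hu]
    omega
  have hPsum : ∑ u ∈ C, P u = I.card := by
    have h1 : ∀ u : V, P u = ∑ w ∈ I, if G.Adj u w then 1 else 0 := by
      intro u
      show (I.filter (fun w => G.Adj u w)).card = _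
      rw [Finset.card_filter]
    calc ∑ u ∈ C, P u = ∑ u ∈ C, ∑ w ∈ I, if G.Adj u w then 1 else 0 :=
          Finset.sum_congr rfl (fun u _ => h1 u)
      _ = ∑ w ∈ I, ∑ u ∈ C, if G.Adj u w then 1 else 0 := Finset.sum_comm
      _ = ∑ w ∈ I, 1 := by
          refine Finset.sum_congr rfl fun w hw => ?_
          rw [← Finset.card_filter]
          have : C.filter (fun u => G.Adj u w) = {n w} := by
            ext u
            simp only [Finset.mem_filter, Finset.mem_singleton]
            constructor
            · rintro ⟨hu, hadj⟩
              exact hnuniq w hw u hadj.symm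
            · rintro rfl
              exact ⟨hnC w hw, (hnadj' w).symm⟩
          rw [this, Finset.card_singleton]
      _ = I.card := by simp
  constructor
  · -- forward: HIST → two good vertices
    rintro ⟨T, hle, hTconn, hTacyc, hTdeg⟩
    letI : DecidableRel T.Adj := Classical.decRel _
    have hdegncard : ∀ v, (T.neighborSet v).ncard = T.degree v := by
      intro v
      rw [Set.ncard_eq_toFinset_card', ← SimpleGraph.card_neighborFinset_eq_degree,
        SimpleGraph.neighborFinset_def]
    have hTdeg' : ∀ v, T.degree v ≠ 2 := fun v => (hdegncard v) ▸ hTdeg v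
    have hTdegI : ∀ v ∈ I, T.degree v = 1 ∧ T.Adj v (n v) := by
      intro v hv
      obtain ⟨u, hu⟩ := hV2 v
      obtain ⟨w, hw⟩ := exists_adj hTconn (Ne.symm hu)
      have hwn : w = n v := hnuniq v hv w (hle hw)
      have hsubnb : T.neighborFinset v ⊆ G.neighborFinset v := fun x hx => by
        rw [SimpleGraph.mem_neighborFinset] at *
        exact hle hx
      have h1 : T.degree v ≤ 1 := by
        rw [← SimpleGraph.card_neighborFinset_eq_degree]
        calc (T.neighborFinset v).card ≤ (G.neighborFinset v).card :=
              Finset.card_le_card hsubnb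
          _ ≤ 1 := by rw [SimpleGraph.card_neighborFinset_eq_degree]; exact hblock v hv
      have h2 : 1 ≤ T.degree v := by
        rw [← SimpleGraph.card_neighborFinset_eq_degree]
        exact Finset.card_pos.mpr ⟨w, by rwa [SimpleGraph.mem_neighborFinset]⟩
      exact ⟨le_antisymm h1 h2, hwn ▸ hw⟩
    let b : V → ℕ := fun u => (C.filter (fun w => T.Adj u w)).card
    have hsplit : ∀ u ∈ C, T.degree u = b u + P u := by
      intro u hu
      have hnb : T.neighborFinset u = C.filter (fun w => T.Adj u w) ∪ pend u := by
        ext w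
        rw [SimpleGraph.mem_neighborFinset, Finset.mem_union, Finset.mem_filter, hpend_mem]
        constructor
        · intro h
          rcases hmem w with hw | hw
          · exact Or.inl ⟨hw, h⟩
          · exact Or.inr ⟨hw, hle h⟩
        · rintro (⟨_, h⟩ | ⟨hw, h⟩)
          · exact h
          · have he : u = n w := hnuniq w hw u h.symm
            exact (he ▸ (hTdegI w hw).2).symm
      rw [← SimpleGraph.card_neighborFinset_eq_degree, hnb,
        Finset.card_union_of_disjoint (Finset.disjoint_left.mpr fun w hw1 hw2 =>
          hCI w (Finset.mem_filter.mp hw1).1 ((hpend_mem u w).mp hw2).1)]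
    have hbpos : ∀ u ∈ C, 1 ≤ b u := by
      intro u hu
      by_contra hb
      push_neg at hb
      have hb0 : ∀ w ∈ C, ¬ T.Adj u w := by
        intro w hw hadj
        have : w ∈ C.filter (fun w => T.Adj u w) := Finset.mem_filter.mpr ⟨hw, hadj⟩
        have hc := Finset.card_pos.mpr ⟨w, this⟩
        show False
        have : b u = 0 := by omega
        rw [Finset.card_eq_zero] at this
        rw [this] at hc
        simp at hc
      have hclosed : ∀ x ∈ insert u (T.neighborSet u), ∀ y, T.Adj x y →
          y ∈ insert u (T.neighborSet u) := by
        intro x hx y hxy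
        rcases hx with rfl | hx
        · exact Set.mem_insert_of_mem _ hxy
        · -- x is a T-neighbor of u, so x ∈ I (else contradicts hb0)
          have hxI : x ∈ I := by
            rcases hmem x with hxC | hxI
            · exact absurd hx (hb0 x hxC)
            · exact hxI
          have hdx := (hTdegI x hxI).1
          rw [← SimpleGraph.card_neighborFinset_eq_degree] at hdx
          have h1 : y ∈ T.neighborFinset x := by rwa [SimpleGraph.mem_neighborFinset]
          have h2 : u ∈ T.neighborFinset x := by
            rw [SimpleGraph.mem_neighborFinset]
            exact (show T.Adj u x from hx).symm
          have he : y = u := Finset.card_le_one.mp (le_of_eq hdx) y h1 u h2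
          rw [he]
          exact Set.mem_insert u _
      have hall := fun v => mem_of_closed hTconn _ hclosed (Set.mem_insert u _) v
      obtain ⟨a1, ha1, a2, ha2, ha12⟩ := Finset.one_lt_card.mp (by omega : 1 < C.card)
      have hCS : ∀ x ∈ C, x = u := by
        intro x hx
        rcases hall x with rfl | hxS
        · rfl
        · exact absurd hxS (hb0 x hx)
      exact ha12 ((hCS a1 ha1).trans (hCS a2 ha2).symm)
    -- sums
    have hedges : T.edgeFinset.card + 1 = Fintype.card V :=
      SimpleGraph.IsTree.card_edgeFinset ⟨hTconn, hTacyc⟩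
    have hhand : ∑ v, T.degree v = 2 * T.edgeFinset.card :=
      T.sum_degrees_eq_twice_card_edges
    have hsplitsum : ∑ v : V, T.degree v = ∑ v ∈ C, T.degree v + ∑ v ∈ I, T.degree v := by
      rw [← Finset.sum_union hdisj, hunion]
    have hsumI : ∑ v ∈ I, T.degree v = I.card := by
      rw [Finset.sum_congr rfl (fun v hv => (hTdegI v hv).1)]
      simp
    have hsumC : ∑ v ∈ C, T.degree v = ∑ v ∈ C, b v + I.card := by
      rw [← hPsum, ← Finset.sum_add_distrib]
      exact Finset.sum_congr rfl hsplit
    have hsumb : ∑ v ∈ C, b v + 2 * I.card + 2 = 2 * C.card + 2 * I.card := by omega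
    -- partition of C into good and bad
    set Gd := C.filter (fun u => G.degree u ≠ C.card) with hGd
    set Bd := C.filter (fun u => ¬ (G.degree u ≠ C.card)) with hBd
    have hparts : Gd ∪ Bd = C := Finset.filter_union_filter_not_eq _ C
    have hdisjGB : Disjoint Gd Bd := Finset.disjoint_filter_filter_not C C _
    have hcardGB : Gd.card + Bd.card = C.card := by
      rw [← Finset.card_union_of_disjoint hdisjGB, hparts]
    have hsplit2 : ∑ v ∈ C, b v = ∑ v ∈ Gd, b v + ∑ v ∈ Bd, b v := by
      rw [← Finset.sum_union hdisjGB, hparts]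
    have hGdsum : Gd.card ≤ ∑ v ∈ Gd, b v := by
      have := Finset.card_nsmul_le_sum Gd b 1 (fun u hu =>
        hbpos u (Finset.mem_filter.mp hu).1)
      simpa using this
    have hBdsum : 2 * Bd.card ≤ ∑ v ∈ Bd, b v := by
      have h2 : ∀ u ∈ Bd, 2 ≤ b u := by
        intro u hu
        obtain ⟨huC, hbad⟩ := Finset.mem_filter.mp hu
        have hP1 : P u = 1 := by
          by_contra h
          exact hbad ((hgoodP u huC).mpr h)
        have hdu := hsplit u huC
        have hne2 := hTdeg' u
        have := hbpos u huC
        omega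
      have := Finset.card_nsmul_le_sum Bd b 2 h2
      simpa [mul_comm] using this
    omega
  · -- backward: construction
    intro hgood
    obtain ⟨g₁, hg₁m, g₂, hg₂m, hg12⟩ := Finset.one_lt_card.mp (by omega : 1 < (C.filter (fun u => G.degree u ≠ C.card)).card)
    obtain ⟨hg₁C, hg₁d⟩ := Finset.mem_filter.mp hg₁m
    obtain ⟨hg₂C, hg₂d⟩ := Finset.mem_filter.mp hg₂m
    have hPg₁ : (pend g₁).card ≠ 1 := (hgoodP g₁ hg₁C).mp hg₁d
    have hPg₂ : (pend g₂).card ≠ 1 := (hgoodP g₂ hg₂C).mp hg₂d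
    -- generic pieces
    have hle_gen : ∀ f : V → V, (∀ v ∈ I, f v = n v) → (∀ v, v ∉ I → f v ∈ C) →
        fTree f ≤ G := by
      intro f hfI hfC a b hab
      obtain ⟨hne, h | h⟩ := hab
      · by_cases ha : a ∈ I
        · rw [hfI a ha] at h
          rw [← h]
          exact hnadj' a
        · exact hclique (Finset.mem_coe.mpr ((hmem a).resolve_right ha))
            (Finset.mem_coe.mpr (h ▸ hfC a ha)) hne
      · by_cases hb : b ∈ I
        · rw [hfI b hb] at h
          rw [← h]
          exact (hnadj' b).symm
        · exact (hclique (Finset.mem_coe.mpr ((hmem b).resolve_right hb))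
            (Finset.mem_coe.mpr (h ▸ hfC b hb)) hne.symm).symm
    have hdeg_ne2 : ∀ (T : SimpleGraph V) (v x : V), x ∈ C →
        T.neighborSet v = insert x ↑(pend v) → (pend v).card ≠ 1 →
        (T.neighborSet v).ncard ≠ 2 := by
      intro T v x hx hN hP
      rw [hN, Set.ncard_insert_of_notMem
          (fun hmemx => hCI x hx ((hpend_mem v x).mp (Finset.mem_coe.mp hmemx)).1)
          (Set.toFinite _), Set.ncard_coe_finset]
      omega
    have hpendI : ∀ v ∈ I, pend v = ∅ := by
      intro v hv
      apply Finset.eq_empty_of_forall_notMem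
      intro w hw
      obtain ⟨hwI, hadj⟩ := (hpend_mem v w).mp hw
      exact hindep v hv w hwI hadj
    have hpend_n' : ∀ u w : V, w ∈ pend u → n w = u := by
      intro u w hw
      obtain ⟨hwI, hadj⟩ := (hpend_mem u w).mp hw
      exact (hnuniq w hwI u hadj.symm).symm
    have hpend_I : ∀ u w : V, w ∈ pend u → w ∈ I := fun u w hw => ((hpend_mem u w).mp hw).1
    by_cases hB : ∃ u ∈ C, G.degree u = C.card
    · -- CASE 2 : there is a bad vertex
      obtain ⟨b0, hb0C, hb0d⟩ := hB
      set Bd := C.filter (fun u => G.degree u = C.card) with hBdDef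
      have hBdC : ∀ u ∈ Bd, u ∈ C := fun u hu => (Finset.mem_filter.mp hu).1
      have hBdI : ∀ u ∈ Bd, u ∉ I := fun u hu => hCI u (hBdC u hu)
      have hBdP : ∀ u ∈ Bd, (pend u).card = 1 := by
        intro u hu
        obtain ⟨huC, hd⟩ := Finset.mem_filter.mp hu
        by_contra h
        exact ((hgoodP u huC).mpr h) hd
      have hg₁B : g₁ ∉ Bd := fun h => hg₁d (Finset.mem_filter.mp h).2
      have hg₂B : g₂ ∉ Bd := fun h => hg₂d (Finset.mem_filter.mp h).2
      have hBne : Bd.Nonempty := ⟨b0, Finset.mem_filter.mpr ⟨hb0C, hb0d⟩⟩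
      set L := Bd.toList with hLdef
      have hLnd : L.Nodup := Finset.nodup_toList Bd
      have hLmem : ∀ x : V, x ∈ L ↔ x ∈ Bd := fun x => Finset.mem_toList
      set k := L.length with hkdef
      have hk1 : 1 ≤ k := by
        rw [hkdef, Finset.length_toList]
        exact Finset.card_pos.mpr hBne
      have hget_mem : ∀ i, i < k → L.getD i g₁ ∈ Bd := by
        intro i hi
        rw [List.getD_eq_getElem L g₁ hi]
        exact (hLmem _).mp (List.getElem_mem _)
      have hidx_lt : ∀ v ∈ Bd, L.idxOf v < k := fun v hv =>
        List.idxOf_lt_length_iff.mpr ((hLmem v).mpr hv)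
      have hget_idxv : ∀ v ∈ Bd, L.getD (L.idxOf v) g₁ = v := by
        intro v hv
        rw [List.getD_eq_getElem L g₁ (hidx_lt v hv)]
        exact List.idxOf_get (hidx_lt v hv)
      have hidx_get : ∀ i (hi : i < k), L.idxOf (L.getD i g₁) = i := by
        intro i hi
        have h1 := hget_mem i hi
        have h2 : L.idxOf (L.getD i g₁) < L.length := hidx_lt _ h1
        have h3 : L.get ⟨L.idxOf (L.getD i g₁), h2⟩ = L.get ⟨i, hi⟩ := by
          rw [List.idxOf_get h2]
          rw [List.getD_eq_getElem L g₁ hi]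
          rfl
        have h4 := List.nodup_iff_injective_get.mp hLnd h3
        exact congrArg Fin.val h4
      have hget_ne : ∀ i j (hi : i < k) (hj : j < k), i ≠ j →
          L.getD i g₁ ≠ L.getD j g₁ := by
        intro i j hi hj hij h
        have h2 : L.idxOf (L.getD i g₁) = L.idxOf (L.getD j g₁) :=
          congrArg (fun a => List.idxOf a L) h
        rw [hidx_get i hi, hidx_get j hj] at h2
        exact hij h2
      -- the parent function and measure
      let f : V → V := fun v =>
        if v ∈ I then n v
        else if v ∈ Bd then (if L.idxOf v = 0 then g₁ else L.getD (L.idxOf v - 1) g₁)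
        else if v = g₂ then L.getD (k - 1) g₁
        else if v = g₁ then g₁
        else L.getD 0 g₁
      let m : V → ℕ := fun v =>
        if v ∈ I then k + 3
        else if v ∈ Bd then L.idxOf v + 1
        else if v = g₂ then k + 1
        else if v = g₁ then 0
        else k + 2
      have hfI' : ∀ v ∈ I, f v = n v := by
        intro v hv
        show (if v ∈ I then n v else _) = n v
        rw [if_pos hv]
      have hfB' : ∀ v ∈ Bd, f v =
          (if L.idxOf v = 0 then g₁ else L.getD (L.idxOf v - 1) g₁) := by
        intro v hv
        show (if v ∈ I then n v else if v ∈ Bd then _ else _) = _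
        rw [if_neg (hBdI v hv), if_pos hv]
      have hfg₂ : f g₂ = L.getD (k - 1) g₁ := by
        show (if g₂ ∈ I then n g₂ else if g₂ ∈ Bd then _ else if g₂ = g₂ then _ else _) = _
        rw [if_neg (hCI g₂ hg₂C), if_neg hg₂B, if_pos rfl]
      have hfg₁ : f g₁ = g₁ := by
        show (if g₁ ∈ I then n g₁ else if g₁ ∈ Bd then _ else if g₁ = g₂ then _
          else if g₁ = g₁ then g₁ else _) = g₁
        rw [if_neg (hCI g₁ hg₁C), if_neg hg₁B, if_neg hg12, if_pos rfl]
      have hfX : ∀ v, v ∉ I → v ∉ Bd → v ≠ g₁ → v ≠ g₂ → f v = L.getD 0 g₁ := by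
        intro v hv hvB hv1 hv2
        show (if v ∈ I then n v else if v ∈ Bd then _ else if v = g₂ then _
          else if v = g₁ then _ else _) = _
        rw [if_neg hv, if_neg hvB, if_neg hv2, if_neg hv1]
      have hmI : ∀ v ∈ I, m v = k + 3 := by
        intro v hv
        show (if v ∈ I then k + 3 else _) = k + 3
        rw [if_pos hv]
      have hmB : ∀ v ∈ Bd, m v = L.idxOf v + 1 := by
        intro v hv
        show (if v ∈ I then _ else if v ∈ Bd then _ else _) = _
        rw [if_neg (hBdI v hv), if_pos hv]
      have hmg₂ : m g₂ = k + 1 := by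
        show (if g₂ ∈ I then _ else if g₂ ∈ Bd then _ else if g₂ = g₂ then _ else _) = _
        rw [if_neg (hCI g₂ hg₂C), if_neg hg₂B, if_pos rfl]
      have hmg₁ : m g₁ = 0 := by
        show (if g₁ ∈ I then _ else if g₁ ∈ Bd then _ else if g₁ = g₂ then _
          else if g₁ = g₁ then 0 else _) = 0
        rw [if_neg (hCI g₁ hg₁C), if_neg hg₁B, if_neg hg12, if_pos rfl]
      have hmX : ∀ v, v ∉ I → v ∉ Bd → v ≠ g₁ → v ≠ g₂ → m v = k + 2 := by
        intro v hv hvB hv1 hv2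
        show (if v ∈ I then _ else if v ∈ Bd then _ else if v = g₂ then _
          else if v = g₁ then _ else _) = _
        rw [if_neg hv, if_neg hvB, if_neg hv2, if_neg hv1]
      have hmle : ∀ v, v ∉ I → m v ≤ k + 2 := by
        intro v hv
        by_cases h1 : v ∈ Bd
        · rw [hmB v h1]
          have := hidx_lt v h1
          omega
        · by_cases h2 : v = g₂
          · subst h2; rw [hmg₂]; omega
          · by_cases h3 : v = g₁
            · subst h3; rw [hmg₁]; omega
            · rw [hmX v hv h1 h3 h2]
      have hfC' : ∀ v, v ∉ I → f v ∈ C := by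
        intro v hv
        by_cases h1 : v ∈ Bd
        · rw [hfB' v h1]
          by_cases h0 : L.idxOf v = 0
          · rw [if_pos h0]; exact hg₁C
          · rw [if_neg h0]
            exact hBdC _ (hget_mem _ (by have := hidx_lt v h1; omega))
        · by_cases h2 : v = g₂
          · subst h2; rw [hfg₂]; exact hBdC _ (hget_mem _ (by omega))
          · by_cases h3 : v = g₁
            · subst h3; rw [hfg₁]; exact hg₁C
            · rw [hfX v hv h1 h3 h2]
              exact hBdC _ (hget_mem 0 (by omega))
      have hm : ∀ v, v ≠ g₁ → m (f v) < m v := by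
        intro v hv
        by_cases hvI : v ∈ I
        · rw [hmI v hvI, hfI' v hvI]
          have hnI : n v ∉ I := hCI _ (hnC v hvI)
          have := hmle (n v) hnI
          omega
        · by_cases h1 : v ∈ Bd
          · rw [hmB v h1, hfB' v h1]
            by_cases h0 : L.idxOf v = 0
            · rw [if_pos h0, hmg₁]; omega
            · rw [if_neg h0]
              have hlt := hidx_lt v h1
              rw [hmB _ (hget_mem _ (by omega))]
              rw [hidx_get _ (by omega : L.idxOf v - 1 < k)]
              omega
          · by_cases h2 : v = g₂
            · subst h2
              rw [hmg₂, hfg₂, hmB _ (hget_mem _ (by omega)), hidx_get _ (by omega : k - 1 < k)]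
              omega
            · rw [hmX v hvI h1 hv h2, hfX v hvI h1 hv h2,
                hmB _ (hget_mem 0 (by omega)), hidx_get 0 (by omega)]
              omega
      -- neighbor-set characterization for vertices with a unique parent-type neighbor
      have hNchar : ∀ v x : V, x ≠ v → f v = x → (∀ w, w ∉ I → w ≠ v → f w ≠ v) →
          (fTree f).neighborSet v = insert x ↑(pend v) := by
        intro v x hxv hfv hno
        ext w
        simp only [SimpleGraph.mem_neighborSet, fTree_adj, Set.mem_insert_iff, Finset.mem_coe]
        constructor
        · rintro ⟨hne, h | h⟩
          · exact Or.inl (h.symm.trans hfv)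
          · by_cases hwI : w ∈ I
            · refine Or.inr ((hpend_mem v w).mpr ⟨hwI, ?_⟩)
              rw [hfI' w hwI] at h
              rw [← h]
              exact (hnadj' w).symm
            · exact absurd h (hno w hwI (Ne.symm hne))
        · rintro (rfl | hw)
          · exact ⟨Ne.symm hxv, Or.inl hfv⟩
          · refine ⟨?_, Or.inr ?_⟩
            · intro h
              rw [h] at hw
              exact G.irrefl ((hpend_mem w w).mp hw).2
            · rw [hfI' w (hpend_I v w hw), hpend_n' v w hw]
      -- f维 values on non-I vertices are in {g₁} ∪ Bd
      have hfval : ∀ w, w ∉ I → f w = g₁ ∨ f w ∈ Bd := by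
        intro w hw
        by_cases h1 : w ∈ Bd
        · rw [hfB' w h1]
          by_cases h0 : L.idxOf w = 0
          · rw [if_pos h0]; exact Or.inl rfl
          · rw [if_neg h0]
            exact Or.inr (hget_mem _ (by have := hidx_lt w h1; omega))
        · by_cases h2 : w = g₂
          · subst h2; rw [hfg₂]; exact Or.inr (hget_mem _ (by omega))
          · by_cases h3 : w = g₁
            · subst h3; rw [hfg₁]; exact Or.inl rfl
            · rw [hfX w hw h1 h3 h2]
              exact Or.inr (hget_mem 0 (by omega))
      refine ⟨fTree f, hle_gen f hfI' hfC', fTree_connected f g₁ m hm,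
        fTree_acyclic f g₁ m hfg₁ hm, ?_⟩
      intro v
      by_cases hvI : v ∈ I
      · -- v ∈ I
        refine hdeg_ne2 _ v (n v) (hnC v hvI) ?_ (by rw [hpendI v hvI]; simp)
        refine hNchar v (n v) (fun h => hIC v hvI (h ▸ hnC v hvI)) (hfI' v hvI) ?_
        intro w hw hwv h
        rcases hfval w hw with h1 | h1
        · rw [h] at h1; exact hIC v hvI (h1 ▸ hg₁C)
        · rw [h] at h1; exact hBdI v h1 hvI
      · by_cases h1 : v ∈ Bd
        · -- bad vertex: at least 3 neighbors
          have hvC := hBdC v h1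
          have hidxv := hidx_lt v h1
          obtain ⟨p, hp⟩ := Finset.card_pos.mp (by rw [hBdP v h1]; omega : 0 < (pend v).card)
          have hpI := hpend_I v p hp
          have hAp : (fTree f).Adj v p := by
            refine ⟨fun h => hCI v hvC (h ▸ hpI), Or.inr ?_⟩
            rw [hfI' p hpI, hpend_n' v p hp]
          have hAf : (fTree f).Adj v (f v) := by
            refine ⟨?_, Or.inl rfl⟩
            rw [hfB' v h1]
            by_cases h0 : L.idxOf v = 0
            · rw [if_pos h0]; exact fun h => hg₁B (h ▸ h1)
            · rw [if_neg h0]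
              intro h
              have h9 : L.idxOf v = L.idxOf (L.getD (L.idxOf v - 1) g₁) :=
                congrArg (fun a => List.idxOf a L) h
              rw [hidx_get _ (by omega : L.idxOf v - 1 < k)] at h9
              omega
          have hfvne₂ : f v ≠ g₂ := by
            rcases hfval v (hCI v hvC) with h | h
            · rw [h]; exact hg12
            · intro hh; exact hg₂B (hh ▸ h)
          -- the child
          have hfvp : f v ≠ p := fun h => hCI p (h ▸ hfC' v (hCI v hvC)) hpI
          by_cases hlast : L.idxOf v + 1 < k
          · have hwB : L.getD (L.idxOf v + 1) g₁ ∈ Bd := hget_mem _ hlast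
            have hAw : (fTree f).Adj v (L.getD (L.idxOf v + 1) g₁) := by
              refine ⟨?_, Or.inr ?_⟩
              · intro h
                have h9 : L.idxOf v = L.idxOf (L.getD (L.idxOf v + 1) g₁) :=
                  congrArg (fun a => List.idxOf a L) h
                rw [hidx_get _ hlast] at h9
                omega
              · rw [hfB' _ hwB, hidx_get _ hlast, if_neg (by omega),
                  Nat.add_sub_cancel, hget_idxv v h1]
            have hwp : L.getD (L.idxOf v + 1) g₁ ≠ p :=
              fun h => hCI _ (hBdC _ hwB) (h ▸ hpI)
            have hwf : L.getD (L.idxOf v + 1) g₁ ≠ f v := by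
              rw [hfB' v h1]
              by_cases h0 : L.idxOf v = 0
              · rw [if_pos h0]; exact fun h => hg₁B (h ▸ hwB)
              · rw [if_neg h0]
                exact hget_ne _ _ hlast (by omega) (by omega)
            have h3 : 3 ≤ ((fTree f).neighborSet v).ncard :=
              three_le_ncard hAf hAw hAp (Ne.symm hwf) hfvp hwp (Set.toFinite _)
            omega
          · -- v is the last element; child is g₂
            have hAw : (fTree f).Adj v g₂ := by
              refine ⟨fun h => hg₂B (h ▸ h1), Or.inr ?_⟩
              rw [hfg₂]
              have hkv : k - 1 = L.idxOf v := by omega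
              rw [hkv, hget_idxv v h1]
            have h3 : 3 ≤ ((fTree f).neighborSet v).ncard :=
              three_le_ncard hAf hAw hAp hfvne₂ hfvp
                (fun h => hCI g₂ hg₂C (by rw [h]; exact hpI)) (Set.toFinite _)
            omega
        · -- good clique vertices
          have hvC : v ∈ C := (hmem v).resolve_right hvI
          by_cases h2 : v = g₂
          · rw [h2]
            refine hdeg_ne2 _ g₂ (L.getD (k-1) g₁) (hBdC _ (hget_mem _ (by omega))) ?_ hPg₂
            refine hNchar g₂ (L.getD (k-1) g₁)
              (fun h => hg₂B (h ▸ hget_mem _ (by omega))) hfg₂ ?_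
            intro w hw hwv h
            rcases hfval w hw with hh | hh
            · rw [h] at hh; exact hg12 hh.symm
            · rw [h] at hh; exact hg₂B hh
          · by_cases h3 : v = g₁
            · rw [h3]
              refine hdeg_ne2 _ g₁ (L.getD 0 g₁) (hBdC _ (hget_mem 0 (by omega))) ?_ hPg₁
              have hx0 : L.getD 0 g₁ ≠ g₁ := fun h => hg₁B (h ▸ hget_mem 0 (by omega))
              ext w
              simp only [SimpleGraph.mem_neighborSet, fTree_adj, Set.mem_insert_iff,
                Finset.mem_coe]
              constructor
              · rintro ⟨hne, h | h⟩
                · rw [hfg₁] at h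
                  exact absurd h hne
                · by_cases hwI : w ∈ I
                  · refine Or.inr ((hpend_mem g₁ w).mpr ⟨hwI, ?_⟩)
                    rw [hfI' w hwI] at h
                    rw [← h]
                    exact (hnadj' w).symm
                  · left
                    by_cases hwB : w ∈ Bd
                    · rw [hfB' w hwB] at h
                      by_cases h0 : L.idxOf w = 0
                      · rw [← hget_idxv w hwB, h0]
                      · rw [if_neg h0] at h
                        exact absurd (h ▸ hget_mem (L.idxOf w - 1)
                          (by have := hidx_lt w hwB; omega)) hg₁B
                    · by_cases hw2 : w = g₂
                      · subst hw2
                        rw [hfg₂] at h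
                        exact absurd (h ▸ hget_mem (k-1) (by omega)) hg₁B
                      · rw [hfX w hwI hwB (Ne.symm hne) hw2] at h
                        exact absurd (h ▸ hget_mem 0 (by omega)) hg₁B
              · rintro (rfl | hw)
                · refine ⟨Ne.symm hx0, Or.inr ?_⟩
                  rw [hfB' _ (hget_mem 0 (by omega)), hidx_get 0 (by omega), if_pos rfl]
                · refine ⟨?_, Or.inr ?_⟩
                  · intro h
                    rw [h] at hw
                    exact G.irrefl ((hpend_mem w w).mp hw).2
                  · rw [hfI' w (hpend_I g₁ w hw), hpend_n' g₁ w hw]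
            · -- extra good vertex
              refine hdeg_ne2 _ v (L.getD 0 g₁) (hBdC _ (hget_mem 0 (by omega))) ?_
                ((hgoodP v hvC).mp (fun h => h1 (Finset.mem_filter.mpr ⟨hvC, h⟩)))
              refine hNchar v (L.getD 0 g₁) ?_ (hfX v hvI h1 h3 h2) ?_
              · intro h
                exact h1 (h ▸ hget_mem 0 (by omega))
              · intro w hw hwv h
                rcases hfval w hw with hh | hh
                · rw [h] at hh; exact h3 hh
                · rw [h] at hh; exact h1 hh
    · -- CASE 1 : no bad vertices
      push_neg at hB
      have hPne1 : ∀ u ∈ C, (pend u).card ≠ 1 := fun u hu => (hgoodP u hu).mp (hB u hu)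
      have hcenter : ∃ c ∈ C, 2 ≤ (pend c).card ∨ 4 ≤ C.card := by
        by_cases hI0 : ∃ c ∈ C, 2 ≤ (pend c).card
        · obtain ⟨c, hc, h2⟩ := hI0
          exact ⟨c, hc, Or.inl h2⟩
        · push_neg at hI0
          have hIempty : I = ∅ := by
            by_contra hne
            obtain ⟨v, hv⟩ := Finset.nonempty_iff_ne_empty.mpr hne
            have hvp : v ∈ pend (n v) := (hpend_mem (n v) v).mpr ⟨hv, (hnadj' v).symm⟩
            have h1 : 1 ≤ (pend (n v)).card := Finset.card_pos.mpr ⟨v, hvp⟩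
            have h2 := hI0 (n v) (hnC v hv)
            have h3 := hPne1 (n v) (hnC v hv)
            omega
          have hGtop : G = ⊤ := by
            ext a b
            simp only [SimpleGraph.top_adj]
            constructor
            · exact G.ne_of_adj
            · intro hne
              have haC : a ∈ C := by
                rcases hmem a with h | h
                · exact h
                · rw [hIempty] at h; exact absurd h (Finset.notMem_empty a)
              have hbC : b ∈ C := by
                rcases hmem b with h | h
                · exact h
                · rw [hIempty] at h; exact absurd h (Finset.notMem_empty b)
              exact hclique (Finset.mem_coe.mpr haC) (Finset.mem_coe.mpr hbC) hne
          have hcard4 : 4 ≤ C.card := by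
            rcases (by omega : C.card = 3 ∨ 4 ≤ C.card) with h3 | h4
            · exfalso
              apply hnotK3.false
              rw [hGtop]
              have hV3 : Fintype.card V = 3 := by
                rw [hcardV, hIempty]
                simpa using h3
              exact SimpleGraph.Iso.completeGraph (Fintype.equivFinOfCardEq hV3)
            · exact h4
          exact ⟨g₁, hg₁C, Or.inr hcard4⟩
      obtain ⟨c, hcC, hcase⟩ := hcenter
      refine ⟨fTree (fun v => if v ∈ I then n v else c), ?_, ?_, ?_, ?_⟩
      · refine hle_gen _ (fun v hv => if_pos hv) (fun v hv => ?_)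
        rw [if_neg hv]
        exact hcC
      · refine fTree_connected _ c (fun v => if v = c then 0 else if v ∈ I then 2 else 1) ?_
        intro v hv
        show (if (if v ∈ I then n v else c) = c then 0 else
            if (if v ∈ I then n v else c) ∈ I then 2 else 1) <
          (if v = c then 0 else if v ∈ I then 2 else 1)
        by_cases hvI : v ∈ I
        · have hnI : n v ∉ I := fun h => hindep v hvI (n v) h (hnadj' v)
          rw [if_pos hvI, if_neg hv, if_pos hvI]
          by_cases h : n v = c
          · rw [if_pos h]; omega
          · rw [if_neg h, if_neg hnI]; omega
        · rw [if_neg hvI, if_neg hv, if_neg hvI, if_pos rfl]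
          omega
      · refine fTree_acyclic _ c (fun v => if v = c then 0 else if v ∈ I then 2 else 1)
          (by rw [if_neg (hCI c hcC)]) ?_
        intro v hv
        show (if (if v ∈ I then n v else c) = c then 0 else
            if (if v ∈ I then n v else c) ∈ I then 2 else 1) <
          (if v = c then 0 else if v ∈ I then 2 else 1)
        by_cases hvI : v ∈ I
        · have hnI : n v ∉ I := fun h => hindep v hvI (n v) h (hnadj' v)
          rw [if_pos hvI, if_neg hv, if_pos hvI]
          by_cases h : n v = c
          · rw [if_pos h]; omega
          · rw [if_neg h, if_neg hnI]; omega
        · rw [if_neg hvI, if_neg hv, if_neg hvI, if_pos rfl]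
          omega
      · -- degrees
        intro v
        have hfwC : ∀ w, w ∉ I → (if w ∈ I then n w else c) = c := fun w hw => if_neg hw
        by_cases hvI : v ∈ I
        · -- v ∈ I : unique neighbor n v
          refine hdeg_ne2 _ v (n v) (hnC v hvI) ?_ (by rw [hpendI v hvI]; simp)
          ext w
          simp only [SimpleGraph.mem_neighborSet, fTree_adj, Set.mem_insert_iff, Finset.mem_coe]
          constructor
          · rintro ⟨hne, h | h⟩
            · rw [if_pos hvI] at h
              exact Or.inl h.symm
            · exfalso
              by_cases hwI : w ∈ I
              · rw [if_pos hwI] at h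
                exact hIC v hvI (h ▸ hnC w hwI)
              · rw [if_neg hwI] at h
                exact hIC v hvI (h ▸ hcC)
          · rintro (rfl | hw)
            · exact ⟨fun h => hIC v hvI (h ▸ hnC v hvI), Or.inl (if_pos hvI)⟩
            · rw [hpendI v hvI] at hw
              exact absurd hw (Finset.notMem_empty w)
        · have hvC : v ∈ C := (hmem v).resolve_right hvI
          by_cases hvc : v = c
          · -- center : at least 3 neighbors
            subst hvc
            intro h2
            have h3 : 3 ≤ ((fTree fun w => if w ∈ I then n w else v).neighborSet v).ncard := by
              rcases hcase with hc2 | hc4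
              · obtain ⟨p₁, hp₁, p₂, hp₂, hp12⟩ :=
                  Finset.one_lt_card.mp (by omega : 1 < (pend v).card)
                obtain ⟨u, hu⟩ := Finset.card_pos.mp (by
                  rw [Finset.card_erase_of_mem hcC]; omega : 0 < (C.erase v).card)
                obtain ⟨huv, huC⟩ := Finset.mem_erase.mp hu
                refine three_le_ncard (a := u) (b := p₁) (c := p₂) ?_ ?_ ?_ ?_ ?_ hp12
                  (Set.toFinite _)
                · exact ⟨Ne.symm huv, Or.inr (by
                    show (if u ∈ I then n u else v) = v
                    rw [if_neg (hCI u huC)])⟩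
                · exact ⟨fun h => hIC p₁ (hpend_I v p₁ hp₁) (h ▸ hcC),
                    Or.inr (by
                      show (if p₁ ∈ I then n p₁ else v) = v
                      rw [if_pos (hpend_I v p₁ hp₁), hpend_n' v p₁ hp₁])⟩
                · exact ⟨fun h => hIC p₂ (hpend_I v p₂ hp₂) (h ▸ hcC),
                    Or.inr (by
                      show (if p₂ ∈ I then n p₂ else v) = v
                      rw [if_pos (hpend_I v p₂ hp₂), hpend_n' v p₂ hp₂])⟩
                · exact fun h => hCI u huC (h ▸ hpend_I v p₁ hp₁)
                · exact fun h => hCI u huC (h ▸ hpend_I v p₂ hp₂)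
              · obtain ⟨u₁, hu₁, u₂, hu₂, u₃, hu₃, h12, h13, h23⟩ :=
                  Finset.two_lt_card.mp (by
                    rw [Finset.card_erase_of_mem hcC]; omega : 2 < (C.erase v).card)
                obtain ⟨h1v, h1C⟩ := Finset.mem_erase.mp hu₁
                obtain ⟨h2v, h2C⟩ := Finset.mem_erase.mp hu₂
                obtain ⟨h3v, h3C⟩ := Finset.mem_erase.mp hu₃
                refine three_le_ncard (a := u₁) (b := u₂) (c := u₃) ?_ ?_ ?_ h12 h13 h23
                  (Set.toFinite _)
                · exact ⟨Ne.symm h1v, Or.inr (by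
                    show (if u₁ ∈ I then n u₁ else v) = v
                    rw [if_neg (hCI u₁ h1C)])⟩
                · exact ⟨Ne.symm h2v, Or.inr (by
                    show (if u₂ ∈ I then n u₂ else v) = v
                    rw [if_neg (hCI u₂ h2C)])⟩
                · exact ⟨Ne.symm h3v, Or.inr (by
                    show (if u₃ ∈ I then n u₃ else v) = v
                    rw [if_neg (hCI u₃ h3C)])⟩
            omega
          · -- non-center clique vertex
            refine hdeg_ne2 _ v c hcC ?_ (hPne1 v hvC)
            ext w
            simp only [SimpleGraph.mem_neighborSet, fTree_adj, Set.mem_insert_iff,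
              Finset.mem_coe]
            constructor
            · rintro ⟨hne, h | h⟩
              · rw [if_neg hvI] at h
                exact Or.inl h.symm
              · by_cases hwI : w ∈ I
                · rw [if_pos hwI] at h
                  exact Or.inr ((hpend_mem v w).mpr ⟨hwI, by rw [← h]; exact (hnadj' w).symm⟩)
                · rw [if_neg hwI] at h
                  exact absurd h.symm hvc
            · rintro (rfl | hw)
              · exact ⟨hvc, Or.inl (if_neg hvI)⟩
              · refine ⟨fun h => hCI v hvC (h ▸ hpend_I v w hw), Or.inr ?_⟩
                rw [if_pos (hpend_I v w hw), hpend_n' v w hw]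

end Main
end

section
/- Let G be a connected block-split graph with clique C, |C| ≥ 3, in which every vertex of C is good (i.e., has 0 or at least 2 pendant neighbors) and G is not isomorphic to K_3. Then G admits a HIST. -/
/-- The "parent" graph of a map `p : V → V`. -/
def auxGraph {V : Type*} (p : V → V) : SimpleGraph V where
  Adj x y := x ≠ y ∧ (p x = y ∨ p y = x)
  symm := by
    refine ⟨?_⟩
    rintro x y ⟨h1, h2⟩
    exact ⟨h1.symm, h2.symm⟩
  loopless := by refine ⟨?_⟩; rintro x ⟨h, -⟩; exact h rfl

lemma auxGraph_adj {V : Type*} (p : V → V) (x y : V) :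
    (auxGraph p).Adj x y ↔ x ≠ y ∧ (p x = y ∨ p y = x) := Iff.rfl

lemma auxGraph_isAcyclic {V : Type*} [DecidableEq V] (p : V → V) (r : V)
    (hpr : p r = r) (hp2 : ∀ v, p (p v) = r) : (auxGraph p).IsAcyclic := by
  classical
  set T := auxGraph p with hT
  set h : V → ℕ := fun v => if v = r then 0 else if p v = r then 1 else 2 with hh
  have key : ∀ a b : V, a ≠ b → p a = b → h b < h a := by
    intro a b hab hpa
    have har : a ≠ r := by
      rintro rfl
      rw [hpr] at hpa
      exact hab hpa
    by_cases hpar : p a = r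
    · have hbr : b = r := by rw [← hpa, hpar]
      simp [hh, har, hpar, hbr]
    · have hbr : b ≠ r := by rw [← hpa]; exact hpar
      have hpb : p b = r := by rw [← hpa]; exact hp2 a
      simp [hh, har, hpar, hbr, hpb]
  have hparent : ∀ x y : V, T.Adj x y → h y < h x → y = p x := by
    rintro x y ⟨hxy, hor | hor⟩ hlt
    · exact hor.symm
    · exact absurd (key y x hxy.symm hor) (Nat.lt_asymm hlt)
  have hltor : ∀ x y : V, T.Adj x y → h y < h x ∨ h x < h y := by
    rintro x y ⟨hxy, hor | hor⟩
    · exact Or.inl (key x y hxy hor)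
    · exact Or.inr (key y x hxy.symm hor)
  intro v c hc
  have hsupp : c.support.toFinset.Nonempty :=
    ⟨v, List.mem_toFinset.mpr c.start_mem_support⟩
  obtain ⟨u, hu, hmax⟩ := Finset.exists_max_image c.support.toFinset h hsupp
  have hu' : u ∈ c.support := List.mem_toFinset.mp hu
  have hmax' : ∀ w ∈ c.support, h w ≤ h u := fun w hw => hmax w (List.mem_toFinset.mpr hw)
  have hc' : (c.rotate u hu').IsCycle := hc.rotate hu'
  have hmaxc' : ∀ w ∈ (c.rotate u hu').support, h w ≤ h u := by
    intro w hw
    rw [SimpleGraph.Walk.support_eq_cons] at hw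
    rcases List.mem_cons.mp hw with rfl | hw
    · exact le_refl _
    · have : w ∈ c.support.tail :=
        (SimpleGraph.Walk.support_rotate c u hu').mem_iff.mp hw
      exact hmax' w (by rw [SimpleGraph.Walk.support_eq_cons]; exact List.mem_cons_of_mem _ this)
  obtain ⟨x, ha, q, hq⟩ := SimpleGraph.Walk.not_nil_iff.mp hc'.not_nil
  rw [hq] at hc' hmaxc'
  obtain ⟨hqpath, hqe⟩ := (SimpleGraph.Walk.cons_isCycle_iff q ha).mp hc'
  have hxu : x ≠ u := ha.ne'
  obtain ⟨y, hb, d, hd⟩ :=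
    SimpleGraph.Walk.not_nil_iff.mp (SimpleGraph.Walk.not_nil_of_ne hxu.symm (p := q.reverse))
  have hyedge : s(u, y) ∈ q.edges := by
    have h1 : s(u, y) ∈ q.reverse.edges := by
      rw [hd, SimpleGraph.Walk.edges_cons]
      exact List.mem_cons_self
    rwa [SimpleGraph.Walk.edges_reverse, List.mem_reverse] at h1
  have hysupp : y ∈ (SimpleGraph.Walk.cons ha q).support := by
    rw [SimpleGraph.Walk.support_cons]
    exact List.mem_cons_of_mem _ (q.snd_mem_support_of_mem_edges hyedge)
  have hxsupp : x ∈ (SimpleGraph.Walk.cons ha q).support := by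
    rw [SimpleGraph.Walk.support_cons]
    exact List.mem_cons_of_mem _ q.start_mem_support
  have h1 : h x < h u := by
    rcases hltor u x ha with hlt | hlt
    · exact hlt
    · exact absurd hlt (Nat.not_lt.mpr (hmaxc' x hxsupp))
  have h2 : h y < h u := by
    rcases hltor u y hb with hlt | hlt
    · exact hlt
    · exact absurd hlt (Nat.not_lt.mpr (hmaxc' y hysupp))
  have hx : x = p u := hparent u x ha h1
  have hy : y = p u := hparent u y hb h2
  apply hqe
  have : s(u, x) = s(u, y) := by rw [hx, hy]
  rw [this]
  exact hyedge

lemma hist_main {V : Type*} [Fintype V] [DecidableEq V]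
    (G : SimpleGraph V)
    (C I : Finset V)
    (hunion : C ∪ I = Finset.univ) (hdisj : Disjoint C I)
    (hclique : G.IsClique (C : Set V))
    (f : V → V) (hf : ∀ v ∈ I, G.Adj v (f v)) (hfC : ∀ v ∈ I, f v ∈ C)
    (r : V) (hrC : r ∈ C)
    (hgoodf : ∀ v ∈ C, (I.filter (fun w => f w = v)).card ≠ 1)
    (hr2 : (C.card - 1) + (I.filter (fun w => f w = r)).card ≠ 2) :
    ∃ T, IsHIST G T := by
  classical
  have hmemC : ∀ v : V, v ∉ I → v ∈ C := by
    intro v hv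
    have h1 : v ∈ C ∪ I := hunion ▸ Finset.mem_univ v
    rcases Finset.mem_union.mp h1 with h | h
    · exact h
    · exact absurd h hv
  have hCnotI : ∀ v ∈ C, v ∉ I := fun v hv => Finset.disjoint_left.mp hdisj hv
  set p : V → V := fun v => if v ∈ I then f v else r with hp
  have hrI : r ∉ I := hCnotI r hrC
  have hpr : p r = r := by simp [hp, hrI]
  have hpC : ∀ v, p v ∈ C := by
    intro v
    by_cases hv : v ∈ I
    · simpa [hp, hv] using hfC v hv
    · simp [hp, hv, hrC]
  have hp2 : ∀ v, p (p v) = r := by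
    intro v
    have : p v ∉ I := hCnotI _ (hpC v)
    exact if_neg this
  have hpne : ∀ v, v ≠ r → p v ≠ v := by
    intro v hv
    by_cases h1 : v ∈ I
    · simpa [hp, h1] using (hf v h1).ne'
    · simp [hp, h1]
      exact Ne.symm hv
  refine ⟨auxGraph p, ?_, ?_, ?_, ?_⟩
  · -- T ≤ G
    have hkey : ∀ a b : V, a ≠ b → p a = b → G.Adj a b := by
      intro a b hab hpa
      by_cases ha : a ∈ I
      · have : b = f a := by rw [← hpa]; simp [hp, ha]
        rw [this]
        exact hf a ha
      · have hbr : b = r := by rw [← hpa]; simp [hp, ha]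
        exact hclique (hmemC a ha) (hbr ▸ hrC) hab
    rintro x y ⟨hxy, hor | hor⟩
    · exact hkey x y hxy hor
    · exact (hkey y x hxy.symm hor).symm
  · -- Connected
    have hstep : ∀ v : V, v ≠ r → (auxGraph p).Adj v (p v) := by
      intro v hv
      exact ⟨(hpne v hv).symm, Or.inl rfl⟩
    have hreach : ∀ v : V, (auxGraph p).Reachable v r := by
      intro v
      by_cases h1 : v = r
      · exact h1 ▸ SimpleGraph.Reachable.refl v
      · have h2 := (hstep v h1).reachable
        by_cases h3 : p v = r
        · rwa [h3] at h2
        · refine h2.trans ?_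
          have h4 := (hstep (p v) h3).reachable
          rwa [hp2 v] at h4
    haveI : Nonempty V := ⟨r⟩
    exact SimpleGraph.Connected.mk (fun a b => (hreach a).trans (hreach b).symm)
  · exact auxGraph_isAcyclic p r hpr hp2
  · -- degrees
    intro v
    by_cases hvI : v ∈ I
    · have hset : (auxGraph p).neighborSet v = {f v} := by
        ext w
        simp only [SimpleGraph.mem_neighborSet, auxGraph_adj, Set.mem_singleton_iff]
        constructor
        · rintro ⟨hne, h | h⟩
          · rw [← h]; simp [hp, hvI]
          · exfalso
            by_cases hw : w ∈ I
            · have : f w = v := by rw [← h]; simp [hp, hw]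
              exact hCnotI (f w) (hfC w hw) (this ▸ hvI)
            · have : r = v := by rw [← h]; simp [hp, hw]
              exact hrI (this ▸ hvI)
        · rintro rfl
          exact ⟨(hf v hvI).ne, Or.inl (by simp [hp, hvI])⟩
      rw [hset, Set.ncard_singleton]
      omega
    · have hvC : v ∈ C := hmemC v hvI
      by_cases hvr : v = r
      · subst hvr
        have hset : (auxGraph p).neighborSet v =
            ↑(C.erase v ∪ I.filter (fun w => f w = v)) := by
          ext w
          simp only [SimpleGraph.mem_neighborSet, auxGraph_adj, Finset.coe_union,
            Set.mem_union, Finset.mem_coe, Finset.mem_erase, Finset.mem_filter]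
          constructor
          · rintro ⟨hne, h | h⟩
            · exact absurd (by rw [← h, hpr]) hne
            · by_cases hw : w ∈ I
              · right
                refine ⟨hw, ?_⟩
                rw [← h]; simp [hp, hw]
              · left
                exact ⟨hne.symm, hmemC w hw⟩
          · rintro (⟨hwr, hwC⟩ | ⟨hw, hfw⟩)
            · exact ⟨hwr.symm, Or.inr (by simp [hp, hCnotI w hwC])⟩
            · refine ⟨fun hh => hrI (hh ▸ hw), Or.inr ?_⟩
              simp [hp, hw, hfw]
        rw [hset, Set.ncard_coe_finset,
          Finset.card_union_of_disjoint, Finset.card_erase_of_mem hrC]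
        · exact hr2
        · exact Finset.disjoint_of_subset_left (Finset.erase_subset _ _)
            (Finset.disjoint_of_subset_right (Finset.filter_subset _ _) hdisj)
      · have hset : (auxGraph p).neighborSet v =
            ↑(insert r (I.filter (fun w => f w = v))) := by
          ext w
          simp only [SimpleGraph.mem_neighborSet, auxGraph_adj, Finset.coe_insert,
            Set.mem_insert_iff, Finset.mem_coe, Finset.mem_filter]
          constructor
          · rintro ⟨hne, h | h⟩
            · left
              rw [← h]; simp [hp, hvI]
            · by_cases hw : w ∈ I
              · right
                refine ⟨hw, ?_⟩
                rw [← h]; simp [hp, hw]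
              · exfalso
                apply hvr
                rw [← h]; simp [hp, hw]
          · rintro (rfl | ⟨hw, hfw⟩)
            · exact ⟨hvr, Or.inl (by simp [hp, hvI])⟩
            · refine ⟨fun hh => hvI (hh ▸ hw), Or.inr ?_⟩
              simp [hp, hw, hfw]
        rw [hset, Set.ncard_coe_finset, Finset.card_insert_of_notMem
          (fun hh => hrI (Finset.mem_filter.mp hh).1)]
        have := hgoodf v hvC
        omega

/-- A connected block-split graph with `|C| ≥ 3` in which every clique vertex is good
(`d(u) ≠ |C|`) and which is not isomorphic to `K₃` admits a HIST. -/
theorem stmt4 {V : Type*} [Fintype V] [DecidableEq V]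
    (G : SimpleGraph V) [DecidableRel G.Adj]
    (C I : Finset V)
    (hunion : C ∪ I = Finset.univ) (hdisj : Disjoint C I)
    (hclique : G.IsClique (C : Set V))
    (hindep : ∀ v ∈ I, ∀ w ∈ I, ¬ G.Adj v w)
    (hblock : ∀ v ∈ I, G.degree v ≤ 1)
    (hconn : G.Connected)
    (hC3 : 3 ≤ C.card)
    (hgood : ∀ u ∈ C, G.degree u ≠ C.card)
    (hnotK3 : IsEmpty (G ≃g (⊤ : SimpleGraph (Fin 3)))) :
    ∃ T, IsHIST G T := by
  classical
  obtain ⟨c0, hc0⟩ : C.Nonempty := Finset.card_pos.mp (by omega)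
  have hCnotI : ∀ v ∈ C, v ∉ I := fun v hv => Finset.disjoint_left.mp hdisj hv
  have hmemC : ∀ v : V, v ∉ I → v ∈ C := by
    intro v hv
    have h1 : v ∈ C ∪ I := hunion ▸ Finset.mem_univ v
    rcases Finset.mem_union.mp h1 with h | h
    · exact h
    · exact absurd h hv
  have hex : ∀ v ∈ I, ∃ u, G.Adj v u := by
    intro v hv
    have hne : v ≠ c0 := fun h => hCnotI c0 hc0 (h ▸ hv)
    obtain ⟨w⟩ := hconn v c0
    cases w with
    | nil => exact absurd rfl hne
    | cons h _ => exact ⟨_, h⟩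
  set f : V → V := fun v => if h : ∃ u, G.Adj v u then h.choose else v with hfdef
  have hf : ∀ v ∈ I, G.Adj v (f v) := by
    intro v hv
    simp only [hfdef]
    rw [dif_pos (hex v hv)]
    exact (hex v hv).choose_spec
  have hfC : ∀ v ∈ I, f v ∈ C := by
    intro v hv
    by_cases h : f v ∈ I
    · exact absurd (hf v hv) (hindep v hv _ h)
    · exact hmemC _ h
  have huniq : ∀ w ∈ I, ∀ v, G.Adj v w → v = f w := by
    intro w hw v hvw
    have h1 : v ∈ G.neighborFinset w := (SimpleGraph.mem_neighborFinset G w v).mpr hvw.symm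
    have h2 : f w ∈ G.neighborFinset w := (SimpleGraph.mem_neighborFinset G w _).mpr (hf w hw)
    have h3 : (G.neighborFinset w).card ≤ 1 := by
      rw [SimpleGraph.card_neighborFinset_eq_degree]
      exact hblock w hw
    exact Finset.card_le_one.mp h3 _ h1 _ h2
  have hdeg : ∀ v ∈ C, G.degree v = (C.card - 1) + (I.filter (fun w => f w = v)).card := by
    intro v hv
    have hCfilter : C.filter (G.Adj v) = C.erase v := by
      ext x
      simp only [Finset.mem_filter, Finset.mem_erase]
      constructor
      · rintro ⟨hx, hadj⟩
        exact ⟨hadj.ne', hx⟩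
      · rintro ⟨hne, hx⟩
        exact ⟨hx, hclique hv hx (Ne.symm hne)⟩
    have hIfilter : I.filter (G.Adj v) = I.filter (fun w => f w = v) := by
      ext w
      simp only [Finset.mem_filter]
      constructor
      · rintro ⟨hw, hadj⟩
        exact ⟨hw, (huniq w hw v hadj).symm⟩
      · rintro ⟨hw, hfw⟩
        exact ⟨hw, hfw ▸ (hf w hw).symm⟩
    rw [← SimpleGraph.card_neighborFinset_eq_degree, SimpleGraph.neighborFinset_eq_filter,
      ← hunion, Finset.filter_union, Finset.card_union_of_disjoint
        (Finset.disjoint_filter_filter hdisj),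
      hCfilter, hIfilter, Finset.card_erase_of_mem hv]
  have hgoodf : ∀ v ∈ C, (I.filter (fun w => f w = v)).card ≠ 1 := by
    intro v hv h1
    apply hgood v hv
    rw [hdeg v hv, h1]
    omega
  by_cases hcase : ∃ u ∈ C, (I.filter (fun w => f w = u)).Nonempty
  · obtain ⟨r, hrC, hP⟩ := hcase
    refine hist_main G C I hunion hdisj hclique f hf hfC r hrC hgoodf ?_
    have := Finset.card_pos.mpr hP
    omega
  · push_neg at hcase
    have hIempty : I = ∅ := by
      by_contra h
      obtain ⟨w, hw⟩ := Finset.nonempty_iff_ne_empty.mpr h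
      have h1 : w ∈ I.filter (fun x => f x = f w) := Finset.mem_filter.mpr ⟨hw, rfl⟩
      exact absurd (hcase (f w) (hfC w hw)) (Finset.nonempty_iff_ne_empty.mp ⟨w, h1⟩)
    by_cases h4 : 4 ≤ C.card
    · refine hist_main G C I hunion hdisj hclique f hf hfC c0 hc0 hgoodf ?_
      rw [hIempty]
      simp only [Finset.filter_empty, Finset.card_empty]
      omega
    · exfalso
      have hc3 : C.card = 3 := by omega
      have hCuniv : ∀ x : V, x ∈ C := by
        intro x
        have := Finset.mem_univ x
        rw [← hunion, hIempty, Finset.union_empty] at this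
        exact this
      have hVcard : Fintype.card V = 3 := by
        rw [← hc3, ← Finset.card_univ, ← hunion, hIempty, Finset.union_empty]
      have hadj : ∀ x y : V, G.Adj x y ↔ x ≠ y := by
        intro x y
        exact ⟨SimpleGraph.Adj.ne, fun h => hclique (hCuniv x) (hCuniv y) h⟩
      exact hnotK3.false
        { toEquiv := Fintype.equivFinOfCardEq hVcard
          map_rel_iff' := by
            intro a b
            simp [hadj, SimpleGraph.top_adj] }
end

section
/- Let G = (C, I, E) be a connected split graph in which every vertex u ∈ C satisfies |N(u) ∩ I| = 1 and |C| - |I| = 1. Then G does not admit a HIST. -/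
/-- A connected split graph in which every clique vertex has exactly one neighbor in the
independent set and `|C| - |I| = 1` does not admit a HIST. -/
theorem stmt5 {V : Type*} [Fintype V] [DecidableEq V]
    (G : SimpleGraph V) [DecidableRel G.Adj]
    (C I : Finset V)
    (hunion : C ∪ I = Finset.univ) (hdisj : Disjoint C I)
    (hclique : G.IsClique (C : Set V))
    (hindep : ∀ v ∈ I, ∀ w ∈ I, ¬ G.Adj v w)
    (hconn : G.Connected)
    (hone : ∀ u ∈ C, (G.neighborFinset u ∩ I).card = 1)
    (hcard : C.card = I.card + 1) :
    ¬ ∃ T, IsHIST G T := by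
  classical
  rintro ⟨T, hTG, hTconn, hTacyc, hTdeg⟩
  -- degree version of the HIST condition
  have hdeg2 : ∀ v, T.degree v ≠ 2 := by
    intro v
    have h : (T.neighborSet v).ncard = T.degree v := by
      rw [Set.ncard_eq_toFinset_card', SimpleGraph.degree, SimpleGraph.neighborFinset_def]
    rw [← h]; exact hTdeg v
  -- nonemptiness
  have hCne : C.Nonempty := Finset.card_pos.mp (by omega)
  obtain ⟨c0, hc0⟩ := hCne
  have hIne : I.Nonempty := by
    have h1 := hone c0 hc0
    obtain ⟨i, hi⟩ := Finset.card_pos.mp (by omega : 0 < (G.neighborFinset c0 ∩ I).card)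
    exact ⟨i, (Finset.mem_inter.mp hi).2⟩
  have hI1 : 1 ≤ I.card := Finset.card_pos.mpr hIne
  have hcardV : Fintype.card V = 2 * I.card + 1 := by
    have h := Finset.card_union_of_disjoint hdisj
    rw [hunion, Finset.card_univ] at h
    omega
  have hmem : ∀ v : V, v ∈ C ∨ v ∈ I := by
    intro v
    have : v ∈ C ∪ I := by rw [hunion]; exact Finset.mem_univ v
    exact Finset.mem_union.mp this
  -- T-neighbors of vertices of I lie in C
  have hnbrC : ∀ i ∈ I, ∀ w, T.Adj i w → w ∈ C := by
    intro i hi w hw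
    rcases hmem w with h | h
    · exact h
    · exact absurd (hTG hw) (hindep i hi w h)
  -- minimum degree 1
  have hdeg1 : ∀ v, 1 ≤ T.degree v := by
    intro v
    rw [Nat.succ_le_iff, SimpleGraph.degree_pos_iff_exists_adj]
    have hex : ∃ w : V, w ≠ v :=
      Fintype.exists_ne_of_one_lt_card (by omega) v
    obtain ⟨w, hw⟩ := hex
    obtain ⟨p⟩ := hTconn v w
    cases p with
    | nil => exact absurd rfl hw
    | cons h q => exact ⟨_, h⟩
  -- double counting C–I edges of T
  have hswap : ∑ i ∈ I, T.degree i = ∑ c ∈ C, (I.filter (T.Adj c)).card := by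
    have h1 : ∀ i ∈ I, T.degree i = (C.filter (T.Adj i)).card := by
      intro i hi
      unfold SimpleGraph.degree
      congr 1
      ext w
      simp only [SimpleGraph.mem_neighborFinset, Finset.mem_filter]
      exact ⟨fun h => ⟨hnbrC i hi w h, h⟩, fun h => h.2⟩
    rw [Finset.sum_congr rfl h1]
    simp_rw [Finset.card_filter]
    rw [Finset.sum_comm]
    refine Finset.sum_congr rfl fun c _ => Finset.sum_congr rfl fun i _ => ?_
    simp [SimpleGraph.adj_comm]
  have hle1 : ∀ c ∈ C, (I.filter (T.Adj c)).card ≤ 1 := by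
    intro c hc
    have hsub : I.filter (T.Adj c) ⊆ G.neighborFinset c ∩ I := by
      intro x hx
      rw [Finset.mem_filter] at hx
      exact Finset.mem_inter.mpr ⟨(SimpleGraph.mem_neighborFinset _ _ _).mpr (hTG hx.2), hx.1⟩
    calc (I.filter (T.Adj c)).card ≤ _ := Finset.card_le_card hsub
      _ = 1 := hone c hc
  have hsum_le : ∑ c ∈ C, (I.filter (T.Adj c)).card ≤ C.card := by
    calc ∑ c ∈ C, (I.filter (T.Adj c)).card ≤ ∑ _c ∈ C, 1 := Finset.sum_le_sum hle1
      _ = C.card := by simp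
  -- every vertex of I is a leaf of T
  have hIdeg : ∀ i ∈ I, T.degree i = 1 := by
    intro i hi
    by_contra h
    have h3 : 3 ≤ T.degree i := by
      have := hdeg1 i; have := hdeg2 i; omega
    have e1 : T.degree i + ∑ j ∈ I.erase i, T.degree j = ∑ j ∈ I, T.degree j :=
      Finset.add_sum_erase I (fun j => T.degree j) hi
    have e2 : (I.erase i).card ≤ ∑ j ∈ I.erase i, T.degree j := by
      calc (I.erase i).card = ∑ _j ∈ I.erase i, 1 := by simp
        _ ≤ _ := Finset.sum_le_sum (fun j _ => hdeg1 j)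
    have e3 : (I.erase i).card = I.card - 1 := Finset.card_erase_of_mem hi
    omega
  have hsumI : ∑ i ∈ I, T.degree i = I.card := by
    rw [Finset.sum_congr rfl hIdeg]; simp
  -- handshake + tree edge count
  have htree : T.IsTree := ⟨hTconn, hTacyc⟩
  have hedges : T.edgeFinset.card + 1 = Fintype.card V := htree.card_edgeFinset
  have hhand : ∑ v, T.degree v = 2 * T.edgeFinset.card := T.sum_degrees_eq_twice_card_edges
  have hsplit : ∑ v ∈ C, T.degree v + ∑ v ∈ I, T.degree v = ∑ v, T.degree v := by
    rw [← Finset.sum_union hdisj, hunion]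
  have hsumC : ∑ v ∈ C, T.degree v = 3 * I.card := by omega
  -- at least two leaves in C
  set S := C.filter (fun c => T.degree c = 1) with hS
  have hS2 : 2 ≤ S.card := by
    have hsp : ∑ c ∈ C.filter (fun c => T.degree c = 1), T.degree c
        + ∑ c ∈ C.filter (fun c => ¬ T.degree c = 1), T.degree c = ∑ c ∈ C, T.degree c :=
      Finset.sum_filter_add_sum_filter_not C _ _
    have h1 : ∑ c ∈ C.filter (fun c => T.degree c = 1), T.degree c = S.card := by
      rw [Finset.sum_congr rfl (fun c hc => (Finset.mem_filter.mp hc).2)]; simp [hS]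
    have h2 : 3 * (C.filter (fun c => ¬ T.degree c = 1)).card
        ≤ ∑ c ∈ C.filter (fun c => ¬ T.degree c = 1), T.degree c := by
      calc 3 * (C.filter (fun c => ¬ T.degree c = 1)).card
          = ∑ _c ∈ C.filter (fun c => ¬ T.degree c = 1), 3 := by
            rw [Finset.sum_const]; ring
        _ ≤ _ := Finset.sum_le_sum (fun c hc => by
            have hne := (Finset.mem_filter.mp hc).2
            have := hdeg1 c; have := hdeg2 c; omega)
    have hcards : S.card + (C.filter (fun c => ¬ T.degree c = 1)).card = C.card := by
      rw [hS]; exact Finset.card_filter_add_card_filter_not _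
    omega
  -- at most one vertex of C without a T-neighbor in I
  set W := C.filter (fun c => (I.filter (T.Adj c)).card = 0) with hW
  have hW1 : W.card ≤ 1 := by
    have hsp := Finset.sum_filter_add_sum_filter_not C
      (fun c => (I.filter (T.Adj c)).card = 0) (fun c => (I.filter (T.Adj c)).card)
    have hz : ∑ c ∈ C.filter (fun c => (I.filter (T.Adj c)).card = 0),
        (I.filter (T.Adj c)).card = 0 :=
      Finset.sum_eq_zero (fun c hc => (Finset.mem_filter.mp hc).2)
    have hnz : ∑ c ∈ C.filter (fun c => ¬ (I.filter (T.Adj c)).card = 0),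
          (I.filter (T.Adj c)).card
        ≤ (C.filter (fun c => ¬ (I.filter (T.Adj c)).card = 0)).card := by
      calc _ ≤ ∑ _c ∈ C.filter (fun c => ¬ (I.filter (T.Adj c)).card = 0), 1 :=
            Finset.sum_le_sum (fun c hc => hle1 c (Finset.mem_filter.mp hc).1)
        _ = _ := by simp
    have hcards : W.card + (C.filter (fun c => ¬ (I.filter (T.Adj c)).card = 0)).card
        = C.card := by
      rw [hW]; exact Finset.card_filter_add_card_filter_not _
    omega
  -- every leaf of T in C has no T-neighbor in I
  have hSW : S ⊆ W := by
    intro c hcS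
    rw [hS, Finset.mem_filter] at hcS
    obtain ⟨hcC, hdc⟩ := hcS
    rw [hW, Finset.mem_filter]
    refine ⟨hcC, ?_⟩
    by_contra hne
    obtain ⟨i, himem⟩ := Finset.card_pos.mp (Nat.pos_of_ne_zero hne)
    rw [Finset.mem_filter] at himem
    obtain ⟨hiI, hadj⟩ := himem
    have hu_c : ∀ x, T.Adj c x → x = i := by
      intro x hx
      exact Finset.card_le_one.mp (le_of_eq hdc) _
        ((SimpleGraph.mem_neighborFinset _ _ _).mpr hx) _
        ((SimpleGraph.mem_neighborFinset _ _ _).mpr hadj)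
    have hu_i : ∀ x, T.Adj i x → x = c := by
      intro x hx
      exact Finset.card_le_one.mp (le_of_eq (hIdeg i hiI)) _
        ((SimpleGraph.mem_neighborFinset _ _ _).mpr hx) _
        ((SimpleGraph.mem_neighborFinset _ _ _).mpr hadj.symm)
    have h3v : ∃ w : V, w ≠ c ∧ w ≠ i := by
      by_contra h
      push_neg at h
      have hsub : (Finset.univ : Finset V) ⊆ {c, i} := by
        intro w _
        rcases eq_or_ne w c with h' | h'
        · simp [h']
        · simp [h w h']
      have : Fintype.card V ≤ 2 := by
        calc Fintype.card V = Finset.univ.card := (Finset.card_univ).symm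
          _ ≤ ({c, i} : Finset V).card := Finset.card_le_card hsub
          _ ≤ 2 := (Finset.card_insert_le _ _).trans (by simp)
      omega
    obtain ⟨w, hwc, hwi⟩ := h3v
    obtain ⟨p⟩ := hTconn c w
    obtain ⟨q, hq⟩ := p.toPath
    cases q with
    | nil => exact hwc rfl
    | cons h r =>
      have hx := hu_c _ h
      subst hx
      rw [SimpleGraph.Walk.cons_isPath_iff] at hq
      obtain ⟨hr, hcr⟩ := hq
      cases r with
      | nil => exact hwi rfl
      | cons h' r' =>
        have hy := hu_i _ h'
        subst hy
        exact hcr (by simp [SimpleGraph.Walk.support_cons,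
          SimpleGraph.Walk.start_mem_support])
  have := Finset.card_le_card hSW
  omega
end

section
/- Let G = (C, I, E) be a connected split graph that is not a block-split graph, in which every vertex u ∈ C satisfies |N(u) ∩ I| = 1 and |C| - |I| ≥ 2. Then G admits a HIST. -/
open SimpleGraph

section FunTree

variable {V : Type*} (p : V → V) (a : V)

/-- The "functional tree" graph of a parent map `p` with root `a`. -/
def funTree : SimpleGraph V :=
  SimpleGraph.fromRel (fun x y => x ≠ a ∧ p x = y)

lemma funTree_adj {x y : V} :
    (funTree p a).Adj x y ↔ x ≠ y ∧ ((x ≠ a ∧ p x = y) ∨ (y ≠ a ∧ p y = x)) :=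
  SimpleGraph.fromRel_adj _ _ _

variable {p a}

lemma funTree_pne {r : V → ℕ} (hdec : ∀ x, x ≠ a → r (p x) < r x) :
    ∀ x, x ≠ a → p x ≠ x := by
  intro x hx h
  have := hdec x hx
  rw [h] at this
  exact lt_irrefl _ this

lemma funTree_connected {r : V → ℕ} (hdec : ∀ x, x ≠ a → r (p x) < r x) :
    (funTree p a).Connected := by
  have hpne := funTree_pne hdec
  have key : ∀ n x, r x ≤ n → (funTree p a).Reachable x a := by
    intro n
    induction n with
    | zero =>
      intro x hx
      by_cases h : x = a
      · subst h; exact Reachable.refl _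
      · exact absurd (hdec x h) (by omega)
    | succ n ih =>
      intro x hx
      by_cases h : x = a
      · subst h; exact Reachable.refl x
      · have hadj : (funTree p a).Adj x (p x) :=
          (funTree_adj p a).mpr ⟨Ne.symm (hpne x h), Or.inl ⟨h, rfl⟩⟩
        exact hadj.reachable.trans (ih (p x) (by have := hdec x h; omega))
  have : Nonempty V := ⟨a⟩
  exact Connected.mk (fun x y => (key _ x le_rfl).trans (key _ y le_rfl).symm)

lemma funTree_acyclic {r : V → ℕ} (hdec : ∀ x, x ≠ a → r (p x) < r x) :
    (funTree p a).IsAcyclic := by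
  classical
  have hpne := funTree_pne hdec
  rw [SimpleGraph.isAcyclic_iff_forall_adj_isBridge]
  have key : ∀ x, x ≠ a → (funTree p a).IsBridge s(x, p x) := by
    intro x hx
    rw [SimpleGraph.isBridge_iff]
    intro hre
    set S : Set V := {y | ∃ n, p^[n] y = x ∧ ∀ m < n, p^[m] y ≠ a} with hS
    have hclosed : ∀ y z, (funTree p a \ SimpleGraph.fromEdgeSet {s(x, p x)}).Adj y z →
        y ∈ S → z ∈ S := by
      intro y z hyz hy
      obtain ⟨n, hn, hm⟩ := hy
      rw [SimpleGraph.sdiff_adj, SimpleGraph.fromEdgeSet_adj] at hyz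
      obtain ⟨hadj, hne⟩ := hyz
      have hedge : s(y, z) ≠ s(x, p x) := by
        intro h
        exact hne ⟨by rw [h]; exact Set.mem_singleton _, hadj.ne⟩
      rw [funTree_adj] at hadj
      obtain ⟨hyz', h1 | h2⟩ := hadj
      · obtain ⟨hya, hpy⟩ := h1
        have hyx : y ≠ x := by
          rintro rfl
          exact hedge (by rw [hpy])
        cases n with
        | zero =>
          rw [Function.iterate_zero_apply] at hn
          exact absurd hn hyx
        | succ n' =>
          refine ⟨n', ?_, ?_⟩
          · rw [← hpy, ← Function.iterate_succ_apply]
            exact hn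
          · intro m hm'
            rw [← hpy, ← Function.iterate_succ_apply]
            exact hm (m + 1) (by omega)
      · obtain ⟨hza, hpz⟩ := h2
        refine ⟨n + 1, ?_, ?_⟩
        · rw [Function.iterate_succ_apply, hpz]; exact hn
        · intro m hm'
          cases m with
          | zero => simpa using hza
          | succ m' =>
            rw [Function.iterate_succ_apply, hpz]
            exact hm m' (by omega)
    have hwalk : ∀ (u v : V) (w : (funTree p a \ SimpleGraph.fromEdgeSet {s(x, p x)}).Walk u v),
        u ∈ S → v ∈ S := by
      intro u v w
      induction w with
      | nil => exact id
      | cons h q ih => exact fun hu => ih (hclosed _ _ h hu)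
    obtain ⟨w⟩ := hre
    have hxS : x ∈ S := ⟨0, rfl, by omega⟩
    obtain ⟨n, hn, hm⟩ : p x ∈ S := hwalk _ _ w hxS
    have iter_lt : ∀ n y, 0 < n → (∀ m < n, p^[m] y ≠ a) → r (p^[n] y) < r y := by
      intro n
      induction n with
      | zero => omega
      | succ n' ih =>
        intro y _ hma
        have hya : y ≠ a := by simpa using hma 0 (by omega)
        rcases Nat.eq_zero_or_pos n' with h0 | hpos
        · subst h0; simpa using hdec y hya
        · have h1 : r (p^[n'] (p y)) < r (p y) := by
            refine ih (p y) hpos (fun m hm => ?_)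
            rw [← Function.iterate_succ_apply]
            exact hma (m + 1) (by omega)
          have h2 : r (p y) < r y := hdec y hya
          calc r (p^[n' + 1] y) = r (p^[n'] (p y)) := by rw [Function.iterate_succ_apply]
            _ < r (p y) := h1
            _ < r y := h2
    cases n with
    | zero =>
      rw [Function.iterate_zero_apply] at hn
      exact hpne x hx hn
    | succ n' =>
      have h1 := iter_lt (n' + 1) (p x) (by omega) hm
      rw [hn] at h1
      have h2 := hdec x hx
      omega
  intro v w hvw
  rw [funTree_adj] at hvw
  obtain ⟨hne, h1 | h2⟩ := hvw
  · obtain ⟨hva, hpv⟩ := h1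
    rw [← hpv]
    exact key v hva
  · obtain ⟨hwa, hpw⟩ := h2
    rw [Sym2.eq_swap, ← hpw]
    exact key w hwa

end FunTree
/-- A connected split graph that is not a block-split graph, in which every clique vertex
has exactly one neighbor in the independent set and `|C| - |I| ≥ 2`, admits a HIST. -/
theorem stmt7 {V : Type*} [Fintype V] [DecidableEq V]
    (G : SimpleGraph V) [DecidableRel G.Adj]
    (C I : Finset V)
    (hunion : C ∪ I = Finset.univ) (hdisj : Disjoint C I)
    (hclique : G.IsClique (C : Set V))
    (hindep : ∀ v ∈ I, ∀ w ∈ I, ¬ G.Adj v w)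
    (hconn : G.Connected)
    (hnotBlock : ¬ ∀ v ∈ I, G.degree v ≤ 1)
    (hone : ∀ u ∈ C, (G.neighborFinset u ∩ I).card = 1)
    (hcard : I.card + 2 ≤ C.card) :
    ∃ T, IsHIST G T := by
  classical
  have hcases : ∀ x : V, x ∈ C ∨ x ∈ I := by
    intro x
    have hx : x ∈ C ∪ I := hunion ▸ Finset.mem_univ x
    exact Finset.mem_union.mp hx
  have hIC : ∀ v, v ∈ I → v ∉ C := fun v hv hc => Finset.disjoint_left.mp hdisj hc hv
  have hCI : ∀ v, v ∈ C → v ∉ I := fun v hv => Finset.disjoint_left.mp hdisj hv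
  have hCne : C.Nonempty := Finset.card_pos.mp (by omega)
  obtain ⟨u0, hu0⟩ := hCne
  -- every vertex of I has a neighbor in C
  have hex : ∀ v : V, ∃ u, v ∈ I → u ∈ C ∧ G.Adj u v := by
    intro v
    by_cases hv : v ∈ I
    · have hvu0 : v ≠ u0 := fun h => hIC v hv (h ▸ hu0)
      obtain ⟨w⟩ := hconn.preconnected v u0
      have hnn : ¬ w.Nil := SimpleGraph.Walk.not_nil_of_ne hvu0
      have hadj : G.Adj v (w.getVert 1) := SimpleGraph.Walk.adj_snd hnn
      rcases hcases (w.getVert 1) with hz | hz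
      · exact ⟨w.getVert 1, fun _ => ⟨hz, hadj.symm⟩⟩
      · exact absurd hadj (hindep v hv _ hz)
    · exact ⟨v, fun h => absurd h hv⟩
  choose h hh using hex
  have hhC : ∀ v, v ∈ I → h v ∈ C := fun v hv => (hh v hv).1
  have hhAdj : ∀ v, v ∈ I → G.Adj (h v) v := fun v hv => (hh v hv).2
  have hinj : ∀ v ∈ I, ∀ w ∈ I, h v = h w → v = w := by
    intro v hv w hw hvw
    have h1 := hone (h v) (hhC v hv)
    have hv' : v ∈ G.neighborFinset (h v) ∩ I := by
      simp only [Finset.mem_inter, SimpleGraph.mem_neighborFinset]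
      exact ⟨hhAdj v hv, hv⟩
    have hw' : w ∈ G.neighborFinset (h v) ∩ I := by
      simp only [Finset.mem_inter, SimpleGraph.mem_neighborFinset]
      exact ⟨by rw [hvw]; exact hhAdj w hw, hw⟩
    exact Finset.card_le_one.mp (le_of_eq h1) v hv' w hw'
  -- choose the two special clique vertices a and b outside the set of hosts
  have hHsub : I.image h ⊆ C := by
    intro x hx
    obtain ⟨v, hv, rfl⟩ := Finset.mem_image.mp hx
    exact hhC v hv
  have himg : (I.image h).card = I.card :=
    Finset.card_image_of_injOn (fun v hv w hw => hinj v hv w hw)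
  have hcard2 : 1 < (C \ I.image h).card := by
    rw [Finset.card_sdiff_of_subset hHsub, himg]
    omega
  obtain ⟨a, ha, b, hb, hab⟩ := Finset.one_lt_card.mp hcard2
  rw [Finset.mem_sdiff] at ha hb
  have hIne : I.Nonempty := by
    rcases I.eq_empty_or_nonempty with hI | hI
    · exact absurd (fun v hv => by simp [hI] at hv) hnotBlock
    · exact hI
  -- lists
  set l : List V := I.toList with hl_def
  set hl : List V := l.map h with hhl_def
  set k : ℕ := l.length with hk_def
  have hkcard : k = I.card := Finset.length_toList I
  have hk1 : 1 ≤ k := by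
    rw [hkcard]
    exact Finset.card_pos.mpr hIne
  have hmeml : ∀ x : V, x ∈ l ↔ x ∈ I := fun x => Finset.mem_toList
  have hnodl : l.Nodup := I.nodup_toList
  have hnodhl : hl.Nodup :=
    hnodl.map_on (fun x hx y hy hxy => hinj x ((hmeml x).mp hx) y ((hmeml y).mp hy) hxy)
  have hlenhl : hl.length = k := by rw [hhl_def, List.length_map, hk_def]
  have hmemhlC : ∀ x, x ∈ hl → x ∈ C := by
    intro x hx
    obtain ⟨v, hv, rfl⟩ := List.mem_map.mp hx
    exact hhC v ((hmeml v).mp hv)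
  have hanotl : a ∉ l := fun hx => hCI a ha.1 ((hmeml a).mp hx)
  have hbnotl : b ∉ l := fun hx => hCI b hb.1 ((hmeml b).mp hx)
  have hanothl : a ∉ hl := by
    intro hx
    obtain ⟨v, hv, heq⟩ := List.mem_map.mp hx
    exact ha.2 (Finset.mem_image.mpr ⟨v, (hmeml v).mp hv, heq⟩)
  have hbnothl : b ∉ hl := by
    intro hx
    obtain ⟨v, hv, heq⟩ := List.mem_map.mp hx
    exact hb.2 (Finset.mem_image.mpr ⟨v, (hmeml v).mp hv, heq⟩)
  have hhlnotl : ∀ x, x ∈ hl → x ∉ l := fun x hx hx' =>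
    hCI x (hmemhlC x hx) ((hmeml x).mp hx')
  have hhv_mem : ∀ v, v ∈ l → h v ∈ hl := fun v hv => by
    rw [hhl_def]
    exact List.mem_map_of_mem hv
  have hgetl : ∀ i, i < k → l.getD i a ∈ l := by
    intro i hi
    rw [List.getD_eq_getElem _ _ (by rwa [← hk_def])]
    exact List.getElem_mem _
  have hgethl_mem : ∀ i, i < k → hl.getD i a ∈ hl := by
    intro i hi
    rw [List.getD_eq_getElem _ _ (by rwa [hlenhl])]
    exact List.getElem_mem _
  have hgethl : ∀ i, i < k → hl.getD i a = h (l.getD i a) := by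
    intro i hi
    rw [List.getD_eq_getElem _ _ (by rwa [hlenhl]), List.getD_eq_getElem _ _ (by rwa [← hk_def])]
    simp only [hhl_def, List.getElem_map]
  have hidxhl : ∀ i, i < k → hl.idxOf (hl.getD i a) = i := by
    intro i hi
    rw [List.getD_eq_getElem _ _ (by rwa [hlenhl])]
    exact List.Nodup.idxOf_getElem hnodhl _ _
  have hidxl_lt : ∀ x, x ∈ hl → hl.idxOf x < k := by
    intro x hx
    rw [← hlenhl]
    exact List.idxOf_lt_length_iff.mpr hx
  have hgetidx : ∀ x, x ∈ hl → hl.getD (hl.idxOf x) a = x := by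
    intro x hx
    rw [List.getD_eq_getElem _ _ (List.idxOf_lt_length_iff.mpr hx)]
    exact List.getElem_idxOf _
  have hidxh : ∀ v, v ∈ l → hl.idxOf (h v) = l.idxOf v := by
    intro v hv
    have hj : l.idxOf v < l.length := List.idxOf_lt_length_iff.mpr hv
    have h1 : hl[l.idxOf v]'(by rw [hlenhl, hk_def]; exact hj) = h v := by
      simp only [hhl_def, List.getElem_map]
      rw [List.getElem_idxOf hj]
    rw [← h1]
    exact List.Nodup.idxOf_getElem hnodhl _ _
  have hidxl_lt' : ∀ v, v ∈ l → l.idxOf v < k := by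
    intro v hv
    rw [hk_def]
    exact List.idxOf_lt_length_iff.mpr hv
  -- the parent map and rank function
  set p : V → V := fun x =>
    if x ∈ l then h x
    else if x = b then hl.getD (k - 1) a
    else if x ∈ hl then
      (if hl.idxOf x = 0 then a else hl.getD (hl.idxOf x - 1) a)
    else if x = a then a
    else hl.getD 0 a
    with hp_def
  set r : V → ℕ := fun x =>
    if x ∈ l then l.idxOf x + 2
    else if x = a then 0
    else if x = b then k + 1
    else if x ∈ hl then hl.idxOf x + 1
    else 2
    with hr_def
  have hpI : ∀ v, v ∈ l → p v = h v := by
    intro v hv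
    simp only [hp_def]
    rw [if_pos hv]
  have hpb : p b = hl.getD (k - 1) a := by
    simp only [hp_def]
    rw [if_neg hbnotl]
    simp
  have hpH : ∀ x, x ∈ hl →
      p x = if hl.idxOf x = 0 then a else hl.getD (hl.idxOf x - 1) a := by
    intro x hx
    simp only [hp_def]
    rw [if_neg (hhlnotl x hx), if_neg (by intro hxb; rw [hxb] at hx; exact hbnothl hx), if_pos hx]
  have hpa : p a = a := by
    simp only [hp_def]
    rw [if_neg hanotl, if_neg hab, if_neg hanothl]
    simp
  have hpe : ∀ x, x ∉ l → x ≠ b → x ∉ hl → x ≠ a → p x = hl.getD 0 a := by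
    intro x h1 h2 h3 h4
    simp only [hp_def]
    rw [if_neg h1, if_neg h2, if_neg h3, if_neg h4]
  have hrI : ∀ v, v ∈ l → r v = l.idxOf v + 2 := by
    intro v hv
    simp only [hr_def]
    rw [if_pos hv]
  have hra : r a = 0 := by
    simp only [hr_def]
    rw [if_neg hanotl]
    simp
  have hrb : r b = k + 1 := by
    simp only [hr_def]
    rw [if_neg hbnotl, if_neg (Ne.symm hab)]
    simp
  have hrH : ∀ x, x ∈ hl → r x = hl.idxOf x + 1 := by
    intro x hx
    simp only [hr_def]
    rw [if_neg (hhlnotl x hx), if_neg (by intro hxa; rw [hxa] at hx; exact hanothl hx),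
      if_neg (by intro hxb; rw [hxb] at hx; exact hbnothl hx), if_pos hx]
  have hre : ∀ x, x ∉ l → x ≠ a → x ≠ b → x ∉ hl → r x = 2 := by
    intro x h1 h2 h3 h4
    simp only [hr_def]
    rw [if_neg h1, if_neg h2, if_neg h3, if_neg h4]
  have hrhost : ∀ i, i < k → r (hl.getD i a) = i + 1 := by
    intro i hi
    rw [hrH _ (hgethl_mem i hi), hidxhl i hi]
  -- the rank decreases along the parent map
  have hdec : ∀ x, x ≠ a → r (p x) < r x := by
    intro x hxa
    by_cases hxl : x ∈ l
    · rw [hpI x hxl, hrI x hxl, hrH _ (hhv_mem x hxl), hidxh x hxl]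
      omega
    · by_cases hxb : x = b
      · subst hxb
        rw [hpb, hrb, hrhost (k - 1) (by omega)]
        omega
      · by_cases hxhl : x ∈ hl
        · have hik := hidxl_lt x hxhl
          rw [hpH x hxhl, hrH x hxhl]
          by_cases h0 : hl.idxOf x = 0
          · rw [if_pos h0, hra]
            omega
          · rw [if_neg h0, hrhost _ (by omega)]
            omega
        · rw [hpe x hxl hxb hxhl hxa, hre x hxl hxa hxb hxhl, hrhost 0 (by omega)]
          omega
  set T : SimpleGraph V := funTree p a with hT_def
  have hTadj : ∀ x y : V, T.Adj x y ↔ x ≠ y ∧ ((x ≠ a ∧ p x = y) ∨ (y ≠ a ∧ p y = x)) :=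
    fun x y => funTree_adj p a
  have hpne : ∀ x, x ≠ a → p x ≠ x := funTree_pne hdec
  -- range of the parent map
  have prange : ∀ z : V, p z = a ∨ p z ∈ hl := by
    intro z
    by_cases h1 : z ∈ l
    · right; rw [hpI z h1]; exact hhv_mem z h1
    · by_cases h2 : z = b
      · right; subst h2; rw [hpb]; exact hgethl_mem _ (by omega)
      · by_cases h3 : z ∈ hl
        · rw [hpH z h3]
          by_cases h0 : hl.idxOf z = 0
          · left; rw [if_pos h0]
          · right
            rw [if_neg h0]
            exact hgethl_mem _ (by have := hidxl_lt z h3; omega)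
        · by_cases h4 : z = a
          · left; subst h4; exact hpa
          · right; rw [hpe z h1 h2 h3 h4]; exact hgethl_mem 0 (by omega)
  have hC_adj : ∀ x y : V, x ∈ C → y ∈ C → x ≠ y → G.Adj x y := by
    intro x y hx hy hxy
    exact hclique (Finset.mem_coe.mpr hx) (Finset.mem_coe.mpr hy) hxy
  have hpC : ∀ z : V, p z ∈ C := by
    intro z
    rcases prange z with h1 | h1
    · rw [h1]; exact ha.1
    · exact hmemhlC _ h1
  have hGadj : ∀ x, x ≠ a → x ≠ p x → G.Adj x (p x) := by
    intro x hxa hxpx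
    by_cases hxl : x ∈ l
    · rw [hpI x hxl]
      exact (hhAdj x ((hmeml x).mp hxl)).symm
    · have hxC : x ∈ C := by
        rcases hcases x with hcc | hcc
        · exact hcc
        · exact absurd ((hmeml x).mpr hcc) hxl
      exact hC_adj x (p x) hxC (hpC x) hxpx
  have hsub : T ≤ G := by
    intro x y hxy
    rw [hTadj] at hxy
    obtain ⟨hne, h1 | h2⟩ := hxy
    · obtain ⟨hxa, hpx⟩ := h1
      rw [← hpx]
      exact hGadj x hxa (by rw [hpx]; exact hne)
    · obtain ⟨hya, hpy⟩ := h2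
      have hg := hGadj y hya (by rw [hpy]; exact hne.symm)
      rw [hpy] at hg
      exact hg.symm
  -- neighborhood computations
  have hsingle : ∀ x t : V, T.neighborSet x = {t} → (T.neighborSet x).ncard ≠ 2 := by
    intro x t hxt
    rw [hxt, Set.ncard_singleton]
    omega
  have hnochild : ∀ x : V, x ≠ a → x ∉ hl → ∀ z, p z ≠ x := by
    intro x hxa hxhl z hpz
    rcases prange z with h1 | h1
    · rw [hpz] at h1; exact hxa h1
    · rw [hpz] at h1; exact hxhl h1
  have hns_leafy : ∀ x, x ≠ a → x ∉ hl → T.neighborSet x = {p x} := by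
    intro x hxa hxhl
    ext z
    simp only [SimpleGraph.mem_neighborSet, Set.mem_singleton_iff]
    rw [hTadj]
    constructor
    · rintro ⟨hne, ⟨_, hpx⟩ | ⟨hza, hpz⟩⟩
      · exact hpx.symm
      · exact absurd hpz (hnochild x hxa hxhl z)
    · rintro rfl
      exact ⟨Ne.symm (hpne x hxa), Or.inl ⟨hxa, rfl⟩⟩
  have hfirst : hl.getD 0 a ∈ hl := hgethl_mem 0 (by omega)
  have hpfirst : p (hl.getD 0 a) = a := by
    rw [hpH _ hfirst, if_pos (hidxhl 0 (by omega))]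
  have hns_a : T.neighborSet a = {hl.getD 0 a} := by
    ext z
    simp only [SimpleGraph.mem_neighborSet, Set.mem_singleton_iff]
    rw [hTadj]
    constructor
    · rintro ⟨hne, ⟨haa, _⟩ | ⟨hza, hpz⟩⟩
      · exact absurd rfl haa
      · by_cases h1 : z ∈ l
        · rw [hpI z h1] at hpz
          exact absurd (hpz ▸ hhv_mem z h1) hanothl
        · by_cases h2 : z = b
          · subst h2
            rw [hpb] at hpz
            exact absurd (hpz ▸ hgethl_mem (k - 1) (by omega)) hanothl
          · by_cases h3 : z ∈ hl
            · rw [hpH z h3] at hpz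
              by_cases h0 : hl.idxOf z = 0
              · have hg := hgetidx z h3
                rw [h0] at hg
                exact hg.symm
              · rw [if_neg h0] at hpz
                exact absurd (hpz ▸ hgethl_mem _ (by have := hidxl_lt z h3; omega)) hanothl
            · rw [hpe z h1 h2 h3 hza] at hpz
              exact absurd (hpz ▸ hgethl_mem 0 (by omega)) hanothl
    · rintro rfl
      refine ⟨fun haf => hanothl (haf ▸ hfirst), Or.inr ⟨fun haf => hanothl (haf ▸ hfirst), hpfirst⟩⟩
  -- hosts have at least three neighbors
  have hns_host : ∀ x, x ∈ hl → (T.neighborSet x).ncard ≠ 2 := by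
    intro x hx
    have hxa : x ≠ a := fun hxx => hanothl (hxx ▸ hx)
    have hxC : x ∈ C := hmemhlC x hx
    have hik : hl.idxOf x < k := hidxl_lt x hx
    have hfin : ∀ z1 z2 z3 : V, T.Adj x z1 → T.Adj x z2 → T.Adj x z3 →
        z1 ≠ z2 → z1 ≠ z3 → z2 ≠ z3 → (T.neighborSet x).ncard ≠ 2 := by
      intro z1 z2 z3 h1 h2 h3 h12 h13 h23 hcon
      have hsub3 : ({z1, z2, z3} : Set V) ⊆ T.neighborSet x := by
        intro z hz
        simp only [Set.mem_insert_iff, Set.mem_singleton_iff] at hz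
        rcases hz with rfl | rfl | rfl <;> assumption
      have h3le : ({z1, z2, z3} : Set V).ncard ≤ (T.neighborSet x).ncard :=
        Set.ncard_le_ncard hsub3 (Set.toFinite _)
      have h3eq : ({z1, z2, z3} : Set V).ncard = 3 :=
        Set.ncard_eq_three.mpr ⟨z1, z2, z3, h12, h13, h23, rfl⟩
      rw [h3eq, hcon] at h3le
      omega
    -- first neighbor : the leaf
    have hvl : l.getD (hl.idxOf x) a ∈ l := hgetl _ hik
    have hvI : l.getD (hl.idxOf x) a ∈ I := (hmeml _).mp hvl
    have hleaf : h (l.getD (hl.idxOf x) a) = x := by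
      rw [← hgethl _ hik]
      exact hgetidx x hx
    have he1 : T.Adj x (l.getD (hl.idxOf x) a) := by
      rw [hTadj]
      refine ⟨fun hh' => hIC _ hvI (hh' ▸ hxC), Or.inr ⟨fun hh' => hIC a (hh' ▸ hvI) ha.1, ?_⟩⟩
      rw [hpI _ hvl]
      exact hleaf
    -- second neighbor : the parent
    have he2 : T.Adj x (p x) := by
      rw [hTadj]
      exact ⟨Ne.symm (hpne x hxa), Or.inl ⟨hxa, rfl⟩⟩
    have hd12 : l.getD (hl.idxOf x) a ≠ p x := fun hh' => hIC _ hvI (hh' ▸ hpC x)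
    by_cases hlast : hl.idxOf x + 1 < k
    · -- third neighbor : the next host
      have hz3hl : hl.getD (hl.idxOf x + 1) a ∈ hl := hgethl_mem _ hlast
      have hiz3 : hl.idxOf (hl.getD (hl.idxOf x + 1) a) = hl.idxOf x + 1 := hidxhl _ hlast
      have hpz3 : p (hl.getD (hl.idxOf x + 1) a) = x := by
        rw [hpH _ hz3hl, hiz3, if_neg (by omega), Nat.add_sub_cancel]
        exact hgetidx x hx
      have hne3 : hl.getD (hl.idxOf x + 1) a ≠ x := by
        intro hh'
        rw [hh'] at hiz3
        omega
      have he3 : T.Adj x (hl.getD (hl.idxOf x + 1) a) := by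
        rw [hTadj]
        exact ⟨Ne.symm hne3, Or.inr ⟨fun hh' => hanothl (hh' ▸ hz3hl), hpz3⟩⟩
      have hd13 : l.getD (hl.idxOf x) a ≠ hl.getD (hl.idxOf x + 1) a :=
        fun hh' => hIC _ hvI (hh' ▸ hmemhlC _ hz3hl)
      have hd23 : p x ≠ hl.getD (hl.idxOf x + 1) a := by
        rw [hpH x hx]
        by_cases h0 : hl.idxOf x = 0
        · rw [if_pos h0]
          exact fun hh' => hanothl (hh' ▸ hz3hl)
        · rw [if_neg h0]
          intro hh'
          have h1 := hidxhl (hl.idxOf x - 1) (by omega)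
          rw [hh', hiz3] at h1
          omega
      exact hfin _ _ _ he1 he2 he3 hd12 hd13 hd23
    · -- third neighbor : b
      have hpz3 : p b = x := by
        rw [hpb]
        have hkk : k - 1 = hl.idxOf x := by omega
        rw [hkk]
        exact hgetidx x hx
      have he3 : T.Adj x b := by
        rw [hTadj]
        exact ⟨fun hh' => hbnothl (hh' ▸ hx), Or.inr ⟨Ne.symm hab, hpz3⟩⟩
      have hd13 : l.getD (hl.idxOf x) a ≠ b := fun hh' => hCI b hb.1 (hh' ▸ hvI)
      have hd23 : p x ≠ b := by
        rcases prange x with h1 | h1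
        · rw [h1]; exact hab
        · exact fun hh' => hbnothl (hh' ▸ h1)
      exact hfin _ _ _ he1 he2 he3 hd12 hd13 hd23
  refine ⟨T, hsub, funTree_connected hdec, funTree_acyclic hdec, ?_⟩
  intro x
  by_cases hxhl : x ∈ hl
  · exact hns_host x hxhl
  · by_cases hxa : x = a
    · subst hxa
      exact hsingle _ _ hns_a
    · exact hsingle _ _ (hns_leafy x hxa hxhl)
end

section
/- Let G' be a chordal bipartite graph with parts U' and V'. Let G'' be obtained from G' by adding all edges within U' (making U' a clique). Then G'' contains no k-sun as an induced subgraph for any k ≥ 3; in particular G'' is a strongly chordal split graph. -/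
section
open SimpleGraph

namespace StrChord

variable {V : Type*} {G : SimpleGraph V}

lemma walk_support_getElem {u v : V} (p : G.Walk u v) :
    ∀ i, (h : i < p.support.length) → p.support[i] = p.getVert i := by
  induction p with
  | nil => intro i h; simp at h; subst h; rfl
  | cons hadj q ih =>
    intro i h
    match i with
    | 0 => simp [Walk.getVert_zero]
    | (i+1) =>
      simp only [Walk.support_cons, List.getElem_cons_succ, Walk.getVert_cons_succ]
      exact ih i (by simpa [Walk.support_cons] using h)

lemma mem_edges_getVert {u v a b : V} (p : G.Walk u v) (h : s(a,b) ∈ p.edges) :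
    ∃ i < p.length, (p.getVert i = a ∧ p.getVert (i+1) = b) ∨
      (p.getVert i = b ∧ p.getVert (i+1) = a) := by
  induction p with
  | nil => simp at h
  | cons hadj q ih =>
    rw [Walk.edges_cons, List.mem_cons] at h
    rcases h with h | h
    · refine ⟨0, by simp, ?_⟩
      rw [Sym2.eq_iff] at h
      simp only [Walk.getVert_zero, Walk.getVert_cons_succ]
      rcases h with ⟨ha, hb⟩ | ⟨ha, hb⟩
      · exact Or.inl ⟨ha.symm, by simp [← hb]⟩
      · exact Or.inr ⟨hb.symm, by simp [← ha]⟩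
    · obtain ⟨i, hi, hc⟩ := ih h
      exact ⟨i+1, by simp; omega, by simpa [Walk.getVert_cons_succ] using hc⟩

lemma getVert_mem_edges {u v : V} (p : G.Walk u v) :
    ∀ i, i < p.length → s(p.getVert i, p.getVert (i+1)) ∈ p.edges := by
  induction p with
  | nil => intro i hi; simp at hi
  | cons hadj q ih =>
    intro i hi
    match i with
    | 0 => simp [Walk.getVert_zero, Walk.getVert_cons_succ]
    | (i+1) =>
      rw [Walk.getVert_cons_succ, Walk.getVert_cons_succ, Walk.edges_cons]
      exact List.mem_cons_of_mem _ (ih i (by simp at hi; omega))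

lemma cycle_getVert_inj {v : V} {p : G.Walk v v} (hp : p.IsCycle)
    {i j : ℕ} (hi : i < p.length) (hj : j < p.length) (h : p.getVert i = p.getVert j) :
    i = j := by
  have hnd := hp.support_nodup
  have hlen : p.support.length = p.length + 1 := p.length_support
  have htl : p.support.tail.length = p.length := by simp [List.length_tail, hlen]
  have htail : ∀ m, (hm : m < p.length) → p.support.tail[m]'(by omega) = p.getVert (m+1) := by
    intro m hm
    rw [List.getElem_tail, walk_support_getElem]
  have hvn : p.getVert p.length = p.getVert 0 := by
    rw [Walk.getVert_length, Walk.getVert_zero]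
  have key : ∀ a, a ≤ p.length → 1 ≤ a → ∀ b, b ≤ p.length → 1 ≤ b →
      p.getVert a = p.getVert b → a = b := by
    intro a ha ha1 b hb hb1 hab
    have h1 : p.support.tail[a-1]'(by omega) = p.support.tail[b-1]'(by omega) := by
      rw [htail (a-1) (by omega), htail (b-1) (by omega)]
      have : a - 1 + 1 = a := by omega
      rw [this]
      have : b - 1 + 1 = b := by omega
      rw [this]
      exact hab
    have := (List.Nodup.getElem_inj_iff hnd).mp h1
    omega
  rcases Nat.eq_zero_or_pos i with hi0 | hi1
  · rcases Nat.eq_zero_or_pos j with hj0 | hj1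
    · omega
    · subst hi0
      have : p.getVert p.length = p.getVert j := by rw [hvn]; exact h
      have := key p.length (le_refl _) (by omega) j (by omega) hj1 this
      omega
  · rcases Nat.eq_zero_or_pos j with hj0 | hj1
    · subst hj0
      have : p.getVert i = p.getVert p.length := by rw [hvn]; exact h
      have := key i (by omega) hi1 p.length (le_refl _) (by omega) this
      omega
    · exact key i (by omega) hi1 j (by omega) hj1 h


lemma cycle_dist2 {v : V} {p : G.Walk v v} (hp : p.IsCycle) (hn : 4 ≤ p.length)
    {i : ℕ} (h2 : i + 2 ≤ p.length) :
    p.getVert i ≠ p.getVert (i+2) ∧ s(p.getVert i, p.getVert (i+2)) ∉ p.edges := by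
  have hvn : p.getVert p.length = p.getVert 0 := by
    rw [Walk.getVert_length, Walk.getVert_zero]
  have inj := fun {a b : ℕ} (ha : a < p.length) (hb : b < p.length) =>
    cycle_getVert_inj hp ha hb
  constructor
  · intro h
    rcases Nat.lt_or_ge (i+2) p.length with hlt | hge
    · have := inj (by omega) hlt h
      omega
    · have hi2 : i + 2 = p.length := by omega
      rw [hi2, hvn] at h
      have := inj (by omega) (by omega) h
      omega
  · intro h
    obtain ⟨j, hj, hc⟩ := mem_edges_getVert p h
    rcases hc with ⟨h1, h2'⟩ | ⟨h1, h2'⟩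
    · have hji : j = i := inj hj (by omega) h1
      subst hji
      rcases Nat.lt_or_ge (j+2) p.length with hlt | hge
      · have := inj (by omega) hlt h2'
        omega
      · have hi2 : j + 2 = p.length := by omega
        rw [hi2, hvn] at h2'
        have := inj (by omega) (by omega) h2'
        omega
    · rcases Nat.lt_or_ge (i+2) p.length with hlt | hge
      · have hji : j = i + 2 := inj hj hlt h1
        subst hji
        rcases Nat.lt_or_ge (i+3) p.length with hlt3 | hge3
        · have := inj (a := i+2+1) (b := i) (by omega) (by omega) h2'
          omega
        · have hi3 : i + 2 + 1 = p.length := by omega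
          rw [hi3, hvn] at h2'
          have := inj (a := 0) (b := i) (by omega) (by omega) h2'
          omega
      · have hi2 : i + 2 = p.length := by omega
        rw [hi2, hvn] at h1
        have hj0 : j = 0 := inj (a := j) (b := 0) hj (by omega) h1
        subst hj0
        have := inj (a := 1) (b := i) (by omega) (by omega) h2'
        omega

lemma exists_walk_seg (f : ℕ → V) (n : ℕ)
    (hadj : ∀ i < n, G.Adj (f i) (f (i+1))) :
    ∀ d m, m + d = n → ∃ q : G.Walk (f m) (f n), q.length = n - m ∧
      ∀ i, q.getVert i = f (min (m + i) n) := by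
  intro d
  induction d with
  | zero =>
    intro m hm
    obtain rfl : m = n := by omega
    refine ⟨Walk.nil, by simp, fun i => ?_⟩
    rw [Walk.getVert_of_length_le _ (by simp)]
    congr 1
    omega
  | succ d ih =>
    intro m hm
    obtain ⟨q, hql, hqg⟩ := ih (m+1) (by omega)
    refine ⟨Walk.cons (hadj m (by omega)) q, by simp [hql]; omega, fun i => ?_⟩
    match i with
    | 0 =>
      rw [Walk.getVert_zero]
      congr 1
      omega
    | (i+1) =>
      rw [Walk.getVert_cons_succ, hqg]
      congr 1
      omega

lemma exists_cycle_of_fn (f : ℕ → V) (n : ℕ) (hn : 3 ≤ n)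
    (hadj : ∀ i < n, G.Adj (f i) (f (i+1))) (hcl : f n = f 0)
    (hinj : ∀ i < n, ∀ j < n, f i = f j → i = j) :
    ∃ p : G.Walk (f 0) (f 0), p.IsCycle ∧ p.length = n ∧ ∀ i, p.getVert i = f (min i n) := by
  obtain ⟨q, hql, hqg⟩ := exists_walk_seg f n hadj (n-1) 1 (by omega)
  let q' : G.Walk (f 1) (f 0) := q.copy rfl hcl
  have hq'g : ∀ i, q'.getVert i = f (min (1 + i) n) := fun i => by
    rw [Walk.getVert_copy]; exact hqg i
  have hq'l : q'.length = n - 1 := by simpa [q'] using hql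
  have hpath : q'.IsPath := by
    apply Walk.IsPath.mk'
    rw [List.nodup_iff_injective_get]
    intro a b hab
    have hsl : q'.support.length = n := by rw [Walk.length_support, hq'l]; omega
    have ha : (a : ℕ) < n := by have := a.2; omega
    have hb : (b : ℕ) < n := by have := b.2; omega
    simp only [List.get_eq_getElem] at hab
    have h1 : f (min (1 + a.1) n) = f (min (1 + b.1) n) := by
      calc f (min (1 + a.1) n) = q'.getVert a.1 := (hq'g a.1).symm
        _ = q'.support[a.1] := (walk_support_getElem q' a.1 a.2).symm
        _ = q'.support[b.1] := hab
        _ = q'.getVert b.1 := walk_support_getElem q' b.1 b.2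
        _ = f (min (1 + b.1) n) := hq'g b.1
    have heq : (a : ℕ) = b := by
      rcases Nat.lt_or_ge (1 + a.1) n with h1a | h1a
      · rcases Nat.lt_or_ge (1 + b.1) n with h1b | h1b
        · have := hinj (1 + a.1) (by omega) (1 + b.1) (by omega)
            (by rwa [min_eq_left (by omega), min_eq_left (by omega)] at h1)
          omega
        · rw [min_eq_left (by omega), min_eq_right (by omega)] at h1
          rw [hcl] at h1
          have := hinj (1 + a.1) h1a 0 (by omega) h1
          omega
      · rcases Nat.lt_or_ge (1 + b.1) n with h1b | h1b
        · rw [min_eq_right (by omega), min_eq_left (by omega)] at h1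
          rw [hcl] at h1
          have := hinj (1 + b.1) h1b 0 (by omega) h1.symm
          omega
        · omega
    exact Fin.ext heq
  have hne : s(f 0, f 1) ∉ q'.edges := by
    intro hmem
    obtain ⟨i, hi, hc⟩ := mem_edges_getVert q' hmem
    rw [hq'l] at hi
    have hgi : q'.getVert i = f (1 + i) := by rw [hq'g, min_eq_left (by omega)]
    have hgi1 : q'.getVert (i+1) = f (1 + (i+1)) := by rw [hq'g, min_eq_left (by omega)]
    rcases hc with ⟨h1, _⟩ | ⟨h1, h2⟩
    · rw [hgi] at h1
      have := hinj _ (by omega) 0 (by omega) h1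
      omega
    · rw [hgi] at h1
      have hieq := hinj _ (by omega) 1 (by omega) h1
      rw [hgi1] at h2
      have := hinj _ (by omega) 0 (by omega) h2
      omega
  refine ⟨Walk.cons (hadj 0 (by omega)) q', ?_, ?_, fun i => ?_⟩
  · rw [Walk.cons_isCycle_iff]
    exact ⟨hpath, hne⟩
  · rw [Walk.length_cons, hq'l]; omega
  · match i with
    | 0 => rw [Walk.getVert_zero]; congr 1
    | (i+1) =>
      rw [Walk.getVert_cons_succ, hq'g]
      congr 1
      omega

end StrChord

end

open Fin.NatCast



/-- A graph is chordal if every cycle of length at least 4 has a chord. -/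
def IsChordal {V : Type*} (G : SimpleGraph V) : Prop :=
  ∀ ⦃v : V⦄ (p : G.Walk v v), p.IsCycle → 4 ≤ p.length →
    ∃ a b, a ∈ p.support ∧ b ∈ p.support ∧ G.Adj a b ∧ s(a, b) ∉ p.edges

/-- `G` contains a `k`-sun as an induced subgraph: a clique `x 0, …, x (k-1)` together with
an independent set `y 0, …, y (k-1)`, all distinct, where `y i` is adjacent exactly to
`x i` and `x (i+1)` (indices mod `k`). -/
def HasInducedSun {V : Type*} (G : SimpleGraph V) (k : ℕ) [NeZero k] : Prop :=
  ∃ x y : Fin k → V,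
    Function.Injective x ∧ Function.Injective y ∧ (∀ i j, x i ≠ y j) ∧
    (∀ i j, i ≠ j → G.Adj (x i) (x j)) ∧
    (∀ i j, i ≠ j → ¬ G.Adj (y i) (y j)) ∧
    (∀ i j, G.Adj (y i) (x j) ↔ j = i ∨ j = i + 1)

/-- Let `G'` be chordal bipartite with parts `U` and `W`, and let `G''` be obtained from
`G'` by making `U` a clique. Then `G''` contains no `k`-sun (`k ≥ 3`) as an induced
subgraph; in particular `G''` is a strongly chordal (chordal and sun-free) split graph. -/

theorem stmt11 {V : Type*} (G' : SimpleGraph V) (U W : Set V)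
    (hpart : ∀ v, v ∈ U ↔ v ∉ W)
    (hbip : ∀ u v, G'.Adj u v → (u ∈ U ∧ v ∈ W) ∨ (u ∈ W ∧ v ∈ U))
    (hchordalbip : ∀ ⦃v : V⦄ (p : G'.Walk v v), p.IsCycle → 6 ≤ p.length →
      ∃ a b, a ∈ p.support ∧ b ∈ p.support ∧ G'.Adj a b ∧ s(a, b) ∉ p.edges)
    (G'' : SimpleGraph V)
    (hG'' : ∀ a b, G''.Adj a b ↔ G'.Adj a b ∨ (a ≠ b ∧ a ∈ U ∧ b ∈ U)) :
    (∀ (k : ℕ) [NeZero k], 3 ≤ k → ¬ HasInducedSun G'' k) ∧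
      IsChordal G'' ∧
      G''.IsClique U ∧ (∀ v ∈ W, ∀ w ∈ W, ¬ G''.Adj v w) := by
  have hUW : ∀ v : V, v ∉ U → v ∈ W := by
    intro v hv
    by_contra h
    exact hv ((hpart v).mpr h)
  have hWind : ∀ v ∈ W, ∀ w ∈ W, ¬ G''.Adj v w := by
    intro a ha b hb hadj
    rw [hG''] at hadj
    rcases hadj with h | ⟨_, hU, _⟩
    · rcases hbip _ _ h with ⟨hU, _⟩ | ⟨_, hU⟩
      · exact (hpart a).mp hU ha
      · exact (hpart b).mp hU hb
    · exact (hpart a).mp hU ha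
  have hUclq : G''.IsClique U := by
    intro a ha b hb hne
    exact (hG'' a b).mpr (Or.inr ⟨hne, ha, hb⟩)
  refine ⟨?_, ?_, hUclq, hWind⟩
  · -- no induced sun
    intro k _ hk3 hsun
    obtain ⟨x, y, hxinj, hyinj, hxy, hxcl, hyind, hyx⟩ := hsun
    have hk : 0 < k := by omega
    have hval : ∀ m : ℕ, m < k → ((m : Fin k) : ℕ) = m := fun m hm => Fin.val_cast_of_lt hm
    have h2ne : (2 : Fin k) ≠ 0 := by
      intro h
      have h2 : ((2 : ℕ) : Fin k) = 0 := by exact_mod_cast h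
      have := congrArg Fin.val h2
      rw [hval 2 (by omega)] at this
      simp at this
    have h1ne : (1 : Fin k) ≠ 0 := by
      intro h
      have h2 : ((1 : ℕ) : Fin k) = 0 := by exact_mod_cast h
      have := congrArg Fin.val h2
      rw [hval 1 (by omega)] at this
      simp at this
    have h21ne : (2 : Fin k) ≠ 1 := by
      intro h
      have h2 : ((2 : ℕ) : Fin k) = ((1 : ℕ) : Fin k) := by exact_mod_cast h
      have := congrArg Fin.val h2
      rw [hval 2 (by omega), hval 1 (by omega)] at this
      omega
    -- all x's are in U
    have hxU : ∀ i, x i ∈ U := by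
      intro a
      by_contra hxa
      have hxaW : x a ∈ W := hUW _ hxa
      have h1 : G''.Adj (y a) (x a) := (hyx a a).mpr (Or.inl rfl)
      have hyaU : y a ∈ U := by
        by_contra h
        exact hWind _ (hUW _ h) _ hxaW h1
      have h2 : G''.Adj (y (a-1)) (x a) := (hyx (a-1) a).mpr (Or.inr (by rw [sub_add_cancel]))
      have hya1U : y (a-1) ∈ U := by
        by_contra h
        exact hWind _ (hUW _ h) _ hxaW h2
      have hne : a - 1 ≠ a := by
        intro h
        exact h1ne (by rwa [sub_eq_self] at h)
      exact hyind _ _ hne ((hG'' _ _).mpr (Or.inr ⟨hyinj.ne hne, hya1U, hyaU⟩))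
    -- all y's are in W
    have hyW : ∀ i, y i ∈ W := by
      intro i
      by_contra h
      have hyiU : y i ∈ U := (hpart _).mpr h
      have hadj : G''.Adj (y i) (x (i+2)) :=
        (hG'' _ _).mpr (Or.inr ⟨(hxy (i+2) i).symm, hyiU, hxU _⟩)
      rcases (hyx i (i+2)).mp hadj with h' | h'
      · exact h2ne (by rwa [add_eq_left] at h')
      · exact h21ne (add_left_cancel h')
    -- G'-level adjacency of the sun cycle
    have hyxG' : ∀ i j, j = i ∨ j = i + 1 → G'.Adj (y i) (x j) := by
      intro i j hj
      have := (hyx i j).mpr hj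
      rw [hG''] at this
      rcases this with h | ⟨_, hU, _⟩
      · exact h
      · exact absurd ((hpart _).mp hU) (not_not.mpr (hyW i))
    -- build the 2k-cycle in G'
    set n := 2 * k with hn
    set f : ℕ → V := fun m => if Even m then x ((m / 2 : ℕ) : Fin k) else y ((m / 2 : ℕ) : Fin k)
      with hf
    have hfeven : ∀ t : ℕ, f (2 * t) = x ((t : ℕ) : Fin k) := by
      intro t
      rw [hf]
      simp only
      rw [if_pos ⟨t, (two_mul t)⟩, Nat.mul_div_cancel_left t (by norm_num)]
    have hfodd : ∀ t : ℕ, f (2 * t + 1) = y ((t : ℕ) : Fin k) := by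
      intro t
      rw [hf]
      simp only
      rw [if_neg (by rw [Nat.even_iff]; omega), Nat.mul_add_div (by norm_num) t 1]
      norm_num
    have hadjf : ∀ m < n, G'.Adj (f m) (f (m+1)) := by
      intro m hm
      rcases Nat.even_or_odd m with hm2 | hm2
      · have h1 : m = 2 * (m / 2) := by rw [Nat.even_iff] at hm2; omega
        rw [h1, hfeven, hfodd]
        exact (hyxG' _ _ (Or.inl rfl)).symm
      · have h1 : m = 2 * (m / 2) + 1 := by rw [Nat.odd_iff] at hm2; omega
        have h2 : 2 * (m / 2) + 1 + 1 = 2 * (m / 2 + 1) := by ring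
        rw [h1, h2, hfodd, hfeven]
        exact hyxG' _ _ (Or.inr (by push_cast; ring))
    have hcl : f n = f 0 := by
      have h1 : n = 2 * k := hn
      have h2 : (0 : ℕ) = 2 * 0 := rfl
      rw [h1, h2, hfeven, hfeven]
      simp
    have hinjf : ∀ i < n, ∀ j < n, f i = f j → i = j := by
      intro i hi j hj hij
      rcases Nat.even_or_odd i with hi2 | hi2 <;> rcases Nat.even_or_odd j with hj2 | hj2
      · rw [Nat.even_iff] at hi2 hj2
        have e1 : i = 2 * (i / 2) := by omega
        have e2 : j = 2 * (j / 2) := by omega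
        rw [e1, e2, hfeven, hfeven] at hij
        have := congrArg Fin.val (hxinj hij)
        rw [hval _ (by omega), hval _ (by omega)] at this
        omega
      · rw [Nat.even_iff] at hi2
        rw [Nat.odd_iff] at hj2
        have e1 : i = 2 * (i / 2) := by omega
        have e2 : j = 2 * (j / 2) + 1 := by omega
        rw [e1, e2, hfeven, hfodd] at hij
        exact absurd hij (hxy _ _)
      · rw [Nat.odd_iff] at hi2
        rw [Nat.even_iff] at hj2
        have e1 : i = 2 * (i / 2) + 1 := by omega
        have e2 : j = 2 * (j / 2) := by omega
        rw [e1, e2, hfodd, hfeven] at hij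
        exact absurd hij.symm (hxy _ _)
      · rw [Nat.odd_iff] at hi2 hj2
        have e1 : i = 2 * (i / 2) + 1 := by omega
        have e2 : j = 2 * (j / 2) + 1 := by omega
        rw [e1, e2, hfodd, hfodd] at hij
        have := congrArg Fin.val (hyinj hij)
        rw [hval _ (by omega), hval _ (by omega)] at this
        omega
    obtain ⟨p, hcyc, hplen, hgv⟩ :=
      StrChord.exists_cycle_of_fn f n (by omega) hadjf hcl hinjf
    obtain ⟨a, b, hain, hbin, hab, hnab⟩ := hchordalbip p hcyc (by omega)
    have hsup : ∀ c, c ∈ p.support → ∃ i < n, f i = c := by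
      intro c hc
      obtain ⟨m, hm, hmle⟩ := SimpleGraph.Walk.mem_support_iff_exists_getVert.mp hc
      rw [hgv] at hm
      by_cases h : min m n = n
      · exact ⟨0, by omega, by rw [← hcl, ← h]; exact hm⟩
      · refine ⟨min m n, by omega, hm⟩
    have hedge : ∀ m < n, s(f m, f (m+1)) ∈ p.edges := by
      intro m hm
      have := StrChord.getVert_mem_edges p m (by omega)
      rwa [hgv, hgv, min_eq_left (by omega), min_eq_left (by omega)] at this
    have hmix : ∀ s t : ℕ, s < k → t < k → G'.Adj (x (s : Fin k)) (y (t : Fin k)) →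
        s(x ((s:ℕ) : Fin k), y ((t:ℕ) : Fin k)) ∈ p.edges := by
      intro s t hs ht hadj
      have hG2 : G''.Adj (y (t : Fin k)) (x (s : Fin k)) := (hG'' _ _).mpr (Or.inl hadj.symm)
      rcases (hyx _ _).mp hG2 with h | h
      · have hst : s = t := by
          have := congrArg Fin.val h
          rwa [hval _ hs, hval _ ht] at this
        subst hst
        have := hedge (2*s) (by omega)
        rwa [hfeven, hfodd] at this
      · by_cases htk : t + 1 < k
        · have hst : s = t + 1 := by
            have h' : ((s:ℕ) : Fin k) = ((t+1 : ℕ) : Fin k) := by push_cast; exact h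
            have := congrArg Fin.val h'
            rwa [hval _ hs, hval _ htk] at this
          subst hst
          have he := hedge (2*t+1) (by omega)
          rw [hfodd] at he
          have h22 : 2*t+1+1 = 2*(t+1) := by ring
          rw [h22, hfeven] at he
          rw [Sym2.eq_swap]
          push_cast at he ⊢
          exact he
        · have htk' : t + 1 = k := by omega
          have hs0 : ((s:ℕ) : Fin k) = 0 := by
            rw [h]
            have : ((t:ℕ) : Fin k) + 1 = ((t + 1 : ℕ) : Fin k) := by push_cast; ring
            rw [this, htk', Fin.natCast_self]
          have he := hedge (2*t+1) (by omega)
          rw [hfodd] at he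
          have h22 : 2*t+1+1 = 2*k := by omega
          rw [h22, hfeven, Fin.natCast_self] at he
          rw [hs0, Sym2.eq_swap]
          exact he
    obtain ⟨i, hi, hfi⟩ := hsup a hain
    obtain ⟨j, hj, hfj⟩ := hsup b hbin
    subst hfi
    subst hfj
    rcases Nat.even_or_odd i with hi2 | hi2 <;> rcases Nat.even_or_odd j with hj2 | hj2
    · -- both even: two x's adjacent in G', impossible
      rw [Nat.even_iff] at hi2
      rw [Nat.even_iff] at hj2
      have e1 : i = 2 * (i / 2) := by omega
      have e2 : j = 2 * (j / 2) := by omega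
      rw [e1, e2, hfeven, hfeven] at hab
      rcases hbip _ _ hab with ⟨_, hW'⟩ | ⟨hW', _⟩ <;>
        exact (hpart _).mp (hxU _) hW'
    · -- i even, j odd
      rw [Nat.even_iff] at hi2
      rw [Nat.odd_iff] at hj2
      have e1 : i = 2 * (i / 2) := by omega
      have e2 : j = 2 * (j / 2) + 1 := by omega
      rw [e1, e2, hfeven, hfodd] at hab hnab
      exact hnab (hmix _ _ (by omega) (by omega) hab)
    · -- i odd, j even
      rw [Nat.odd_iff] at hi2
      rw [Nat.even_iff] at hj2
      have e1 : i = 2 * (i / 2) + 1 := by omega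
      have e2 : j = 2 * (j / 2) := by omega
      rw [e1, e2, hfodd, hfeven] at hab hnab
      rw [Sym2.eq_swap] at hnab
      exact hnab (hmix _ _ (by omega) (by omega) hab.symm)
    · -- both odd: two y's adjacent in G', impossible
      rw [Nat.odd_iff] at hi2 hj2
      have e1 : i = 2 * (i / 2) + 1 := by omega
      have e2 : j = 2 * (j / 2) + 1 := by omega
      rw [e1, e2, hfodd, hfodd] at hab
      rcases hbip _ _ hab with ⟨hU', _⟩ | ⟨_, hU'⟩ <;>
        exact (hpart _).mp hU' (hyW _)
  · -- chordality
    intro v p hp hlen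
    by_cases hWc : ∃ i, 1 ≤ i ∧ i + 1 ≤ p.length ∧ p.getVert i ∈ W
    · obtain ⟨i, hi1, hin, hiW⟩ := hWc
      have hD := StrChord.cycle_dist2 hp hlen (i := i - 1) (by omega)
      have e1 : i - 1 + 1 = i := by omega
      have e2 : i - 1 + 2 = i + 1 := by omega
      rw [e2] at hD
      have haU : p.getVert (i-1) ∈ U := by
        by_contra h
        have hadj : G''.Adj (p.getVert (i-1)) (p.getVert i) := by
          have := p.adj_getVert_succ (i := i-1) (by omega)
          rwa [e1] at this
        exact hWind _ (hUW _ h) _ hiW hadj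
      have hbU : p.getVert (i+1) ∈ U := by
        by_contra h
        have hadj : G''.Adj (p.getVert i) (p.getVert (i+1)) :=
          p.adj_getVert_succ (i := i) (by omega)
        exact hWind _ (hUW _ h) _ hiW hadj.symm
      refine ⟨p.getVert (i-1), p.getVert (i+1), ?_, ?_, ?_, hD.2⟩
      · exact SimpleGraph.Walk.mem_support_iff_exists_getVert.mpr ⟨i-1, rfl, by omega⟩
      · exact SimpleGraph.Walk.mem_support_iff_exists_getVert.mpr ⟨i+1, rfl, by omega⟩
      · exact (hG'' _ _).mpr (Or.inr ⟨hD.1, haU, hbU⟩)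
    · push_neg at hWc
      have hU : ∀ i, 1 ≤ i → i + 1 ≤ p.length → p.getVert i ∈ U :=
        fun i h1 h2 => (hpart _).mpr (hWc i h1 h2)
      have hD := StrChord.cycle_dist2 hp hlen (i := 1) (by omega)
      refine ⟨p.getVert 1, p.getVert 3, ?_, ?_, ?_, hD.2⟩
      · exact SimpleGraph.Walk.mem_support_iff_exists_getVert.mpr ⟨1, rfl, by omega⟩
      · exact SimpleGraph.Walk.mem_support_iff_exists_getVert.mpr ⟨3, rfl, by omega⟩
      · exact (hG'' _ _).mpr (Or.inr ⟨hD.1, hU 1 (by omega) (by omega), hU 3 (by omega) (by omega)⟩)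
end

section
/- Let G' be a graph on N := 2m+2 vertices, for some m ≥ 1, including designated vertices s' and t. Let H be obtained from G' by attaching one new pendant vertex to each vertex of V(G') \ {t} and one additional new pendant vertex to s', so that s' receives two pendant vertices in total. Then H admits a HIST if and only if G' has a Hamiltonian path from s' to t. -/
open SimpleGraph Walk

section Helpers
variable {α : Type*} [DecidableEq α] {G : SimpleGraph α}

lemma exists_adj_of_reachable {x y : α} (h : G.Reachable x y) (hxy : x ≠ y) :
    ∃ z, G.Adj x z := by
  obtain ⟨w⟩ := h
  cases w with
  | nil => exact absurd rfl hxy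
  | cons h _ => exact ⟨_, h⟩

lemma unique_start_edge {a b : α} {p : G.Walk a b} (hp : p.IsPath) (hn : ¬ p.Nil) :
    ∃ z, z ∈ p.support.tail ∧ s(a, z) ∈ p.edges ∧ ∀ w, s(a, w) ∈ p.edges → w = z := by
  obtain ⟨z, h, q, rfl⟩ := Walk.not_nil_iff.mp hn
  rw [Walk.cons_isPath_iff] at hp
  refine ⟨z, by simp, by simp, ?_⟩
  intro w hw
  rw [Walk.edges_cons, List.mem_cons] at hw
  rcases hw with hw | hw
  · exact Sym2.congr_right.mp hw
  · exact absurd (Walk.fst_mem_support_of_mem_edges q hw) hp.2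

lemma internal_two {a b v : α} {p : G.Walk a b} (hp : p.IsPath) (hv : v ∈ p.support)
    (ha : v ≠ a) (hb : v ≠ b) :
    ∃ z₁ z₂, z₁ ≠ z₂ ∧ s(v, z₁) ∈ p.edges ∧ s(v, z₂) ∈ p.edges := by
  have hq₁ : (p.takeUntil v hv).reverse.IsPath := (hp.takeUntil hv).reverse
  have hq₂ : (p.dropUntil v hv).IsPath := hp.dropUntil hv
  have hn₁ : ¬ (p.takeUntil v hv).reverse.Nil := Walk.not_nil_of_ne ha
  have hn₂ : ¬ (p.dropUntil v hv).Nil := Walk.not_nil_of_ne hb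
  obtain ⟨z₁, hz₁s, hz₁e, -⟩ := unique_start_edge hq₁ hn₁
  obtain ⟨z₂, hz₂s, hz₂e, -⟩ := unique_start_edge hq₂ hn₂
  rw [Walk.edges_reverse, List.mem_reverse] at hz₁e
  have hz₁e' : s(v, z₁) ∈ p.edges := p.edges_takeUntil_subset hv hz₁e
  have hz₂e' : s(v, z₂) ∈ p.edges := p.edges_dropUntil_subset hv hz₂e
  have hz₁s' : z₁ ∈ (p.takeUntil v hv).support := by
    have := List.mem_of_mem_tail hz₁s
    rwa [Walk.support_reverse, List.mem_reverse] at this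
  have hnd : ((p.takeUntil v hv).support ++ (p.dropUntil v hv).support.tail).Nodup := by
    rw [← Walk.support_append, p.take_spec hv]; exact hp.support_nodup
  refine ⟨z₁, z₂, ?_, hz₁e', hz₂e'⟩
  intro hz
  exact (List.disjoint_of_nodup_append hnd) hz₁s' (hz ▸ hz₂s)

lemma cycle_two {v : α} {c : G.Walk v v} (hc : c.IsCycle) {x} (hx : x ∈ c.support) :
    ∃ z₁ z₂, z₁ ≠ z₂ ∧ s(x, z₁) ∈ c.edges ∧ s(x, z₂) ∈ c.edges := by
  suffices h : ∃ z₁ z₂, z₁ ≠ z₂ ∧ s(x, z₁) ∈ (c.rotate x hx).edges ∧ s(x, z₂) ∈ (c.rotate x hx).edges by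
    obtain ⟨z₁, z₂, h1, h2, h3⟩ := h
    exact ⟨z₁, z₂, h1, (c.rotate_edges x hx).mem_iff.mp h2, (c.rotate_edges x hx).mem_iff.mp h3⟩
  have hc' := hc.rotate hx
  obtain ⟨u, h, q, he⟩ := Walk.not_nil_iff.mp hc'.not_nil
  rw [he] at hc'
  obtain ⟨hq, hne⟩ := (Walk.cons_isCycle_iff q h).mp hc'
  have hql : 2 ≤ q.length := by
    have h3 := hc'.three_le_length
    rw [Walk.length_cons] at h3; omega
  have hn : ¬ q.reverse.Nil := by
    rw [Walk.nil_iff_length_eq, Walk.length_reverse]; omega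
  obtain ⟨z, hzs, hze, -⟩ := unique_start_edge hq.reverse hn
  rw [Walk.edges_reverse, List.mem_reverse] at hze
  refine ⟨u, z, ?_, ?_, ?_⟩
  · rintro rfl; exact hne hze
  · rw [he, Walk.edges_cons]; exact List.mem_cons_self
  · rw [he, Walk.edges_cons]; exact List.mem_cons_of_mem _ hze

lemma pathgraph_acyclic {a b : α} (p : G.Walk a b) (hp : p.IsPath) :
    (SimpleGraph.fromEdgeSet {e | e ∈ p.edges}).IsAcyclic := by
  induction p with
  | @nil u =>
    have h0 : {e | e ∈ (Walk.nil : G.Walk u u).edges} = (∅ : Set (Sym2 α)) := by simp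
    rw [h0, fromEdgeSet_empty]
    exact isAcyclic_bot
  | @cons u v w h q ih =>
    rw [Walk.cons_isPath_iff] at hp
    obtain ⟨hq, hu⟩ := hp
    intro x c hc
    by_cases hux : u ∈ c.support
    · obtain ⟨z₁, z₂, hzne, hz₁, hz₂⟩ := cycle_two hc hux
      have key : ∀ z, s(u, z) ∈ c.edges → z = v := by
        intro z hz
        have h1 := c.edges_subset_edgeSet hz
        rw [edgeSet_fromEdgeSet] at h1
        have h2 := h1.1
        simp only [Set.mem_setOf_eq, Walk.edges_cons, List.mem_cons] at h2
        rcases h2 with h2 | h2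
        · exact Sym2.congr_right.mp h2
        · exact absurd (Walk.fst_mem_support_of_mem_edges q h2) hu
      exact hzne ((key _ hz₁).trans (key _ hz₂).symm)
    · have hsub : ∀ e ∈ c.edges, e ∈ (SimpleGraph.fromEdgeSet {e | e ∈ q.edges}).edgeSet := by
        intro e he
        have h1 := c.edges_subset_edgeSet he
        rw [edgeSet_fromEdgeSet] at h1 ⊢
        refine ⟨?_, h1.2⟩
        have h2 := h1.1
        simp only [Set.mem_setOf_eq, Walk.edges_cons, List.mem_cons] at h2
        rcases h2 with h2 | h2
        · exact absurd (Walk.fst_mem_support_of_mem_edges c (h2 ▸ he)) hux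
        · exact h2
      exact ih hq (c.transfer _ hsub) (hc.transfer hsub)

end Helpers

/-- Let `G` be a graph on `N = 2m + 2` vertices (`m ≥ 1`) with designated vertices `s'`
and `t`, and let `H` be obtained from `G` by attaching one new pendant vertex to each
vertex other than `t`, and two pendant vertices to `s'`. (Here `H` lives on `V ⊕ V`:
`Sum.inl` are the original vertices, `Sum.inr u` is the pendant attached to `u` for
`u ≠ t`, and `Sum.inr t` is the extra pendant attached to `s'`.) Then `H` admits a HIST
iff `G` has a Hamiltonian path from `s'` to `t`. -/
theorem stmt12 {V : Type*} [Fintype V] [DecidableEq V] (m : ℕ) (hm : 1 ≤ m)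
    (hcard : Fintype.card V = 2 * m + 2)
    (G : SimpleGraph V) (s' t : V) (hst : s' ≠ t)
    (H : SimpleGraph (V ⊕ V))
    (hH : ∀ x y : V ⊕ V, H.Adj x y ↔
      (∃ u v, x = Sum.inl u ∧ y = Sum.inl v ∧ G.Adj u v) ∨
      (∃ u, u ≠ t ∧ ((x = Sum.inl u ∧ y = Sum.inr u) ∨ (x = Sum.inr u ∧ y = Sum.inl u))) ∨
      ((x = Sum.inl s' ∧ y = Sum.inr t) ∨ (x = Sum.inr t ∧ y = Sum.inl s'))) :
    (∃ T, IsHIST H T) ↔ ∃ p : G.Walk s' t, p.IsHamiltonian := by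
  classical
  set a : V → V := fun u => if u = t then s' else u with ha_def
  have hat : a t = s' := by simp [ha_def]
  have hau : ∀ u, u ≠ t → a u = u := fun u hu => by simp [ha_def, hu]
  have hcard4 : 4 ≤ Fintype.card V := by omega
  -- adjacency decodes for H
  have hHll : ∀ u v : V, H.Adj (Sum.inl u) (Sum.inl v) ↔ G.Adj u v := by
    intro u v
    rw [hH]
    constructor
    · rintro (⟨u', v', h1, h2, h3⟩ | ⟨u', -, (⟨-, h2⟩ | ⟨h1, -⟩)⟩ | (⟨-, h2⟩ | ⟨h1, -⟩)) <;>
        first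
          | (obtain rfl := Sum.inl_injective h1; obtain rfl := Sum.inl_injective h2; exact h3)
          | simp at h1
          | simp at h2
    · intro h; exact Or.inl ⟨u, v, rfl, rfl, h⟩
  have hHr : ∀ (u : V) (y : V ⊕ V), H.Adj (Sum.inr u) y ↔ y = Sum.inl (a u) := by
    intro u y
    rw [hH]
    constructor
    · rintro (⟨u', v', h1, -, -⟩ | ⟨u', hu', (⟨h1, -⟩ | ⟨h1, h2⟩)⟩ | (⟨h1, -⟩ | ⟨h1, h2⟩))
      · simp at h1
      · simp at h1
      · obtain rfl := Sum.inr_injective h1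
        rw [h2, hau u hu']
      · simp at h1
      · obtain rfl := Sum.inr_injective h1
        rw [h2, hat]
    · rintro rfl
      by_cases hu : u = t
      · subst hu; right; right; right; exact ⟨rfl, by rw [hat]⟩
      · right; left; exact ⟨u, hu, Or.inr ⟨rfl, by rw [hau u hu]⟩⟩
  have hHlr : ∀ (v u : V), H.Adj (Sum.inl v) (Sum.inr u) ↔ v = a u := by
    intro v u
    rw [H.adj_comm, hHr]
    simp
  -- counting sets for pendants
  have hcnt_s : ({u | a u = s'} : Set V).ncard = 2 := by
    have : ({u | a u = s'} : Set V) = {s', t} := by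
      ext u
      simp only [Set.mem_setOf_eq, Set.mem_insert_iff, Set.mem_singleton_iff, ha_def]
      by_cases hu : u = t <;> simp [hu]
    rw [this, Set.ncard_pair hst]
  have hcnt_t : ({u | a u = t} : Set V).ncard = 0 := by
    have : ({u | a u = t} : Set V) = ∅ := by
      ext u
      simp only [Set.mem_setOf_eq, Set.mem_empty_iff_false, iff_false, ha_def]
      by_cases hu : u = t <;> simp [hu, hst]
    rw [this, Set.ncard_empty]
  have hcnt_o : ∀ v, v ≠ s' → v ≠ t → ({u | a u = v} : Set V).ncard = 1 := by
    intro v hvs hvt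
    have : ({u | a u = v} : Set V) = {v} := by
      ext u
      simp only [Set.mem_setOf_eq, Set.mem_singleton_iff, ha_def]
      by_cases hu : u = t
      · subst hu; simp only [if_pos rfl]
        constructor
        · exact fun h => absurd h.symm hvs
        · exact fun h => absurd h.symm hvt
      · simp [hu]
    rw [this, Set.ncard_singleton]
  have hdisj : ∀ (s₁ s₂ : Set V), Disjoint (Sum.inl '' s₁ : Set (V ⊕ V)) (Sum.inr '' s₂) := by
    intro s₁ s₂
    rw [Set.disjoint_left]
    rintro x ⟨w, -, rfl⟩ ⟨u, -, h⟩
    simp at h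
  constructor
  · rintro ⟨T, hTH, hTconn, hTacyc, hTdeg⟩
    -- all pendant edges belong to T
    have hpend : ∀ u : V, T.Adj (Sum.inr u) (Sum.inl (a u)) := by
      intro u
      obtain ⟨z, hz⟩ := exists_adj_of_reachable
        (hTconn.preconnected (Sum.inr u) (Sum.inl s')) (by simp)
      have hz' := (hHr u z).mp (hTH hz)
      exact hz' ▸ hz
    -- restriction of T to original vertices
    set T₀ : SimpleGraph V :=
      { Adj := fun u v => T.Adj (Sum.inl u) (Sum.inl v)
        symm := ⟨fun u v h => h.symm⟩
        loopless := ⟨fun u h => T.loopless.irrefl _ h⟩ } with hT₀def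
    have hT₀G : T₀ ≤ G := fun {u v} h => (hHll u v).mp (hTH h)
    -- projection of reachability
    have hproj : ∀ x y : V ⊕ V, T.Reachable x y →
        T₀.Reachable (Sum.elim id a x) (Sum.elim id a y) := by
      intro x y hr
      obtain ⟨w⟩ := hr
      induction w with
      | nil => exact Reachable.refl _
      | cons hadj w' ih =>
        refine Reachable.trans ?_ ih
        have hH' := hTH hadj
        rw [hH] at hH'
        rcases hH' with ⟨u', v', rfl, rfl, -⟩ | ⟨u', hu', (⟨rfl, rfl⟩ | ⟨rfl, rfl⟩)⟩ |
          (⟨rfl, rfl⟩ | ⟨rfl, rfl⟩)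
        · exact Adj.reachable (by exact hadj)
        · simp only [Sum.elim_inl, Sum.elim_inr, id_eq, hau u' hu']
          exact Reachable.refl _
        · simp only [Sum.elim_inl, Sum.elim_inr, id_eq, hau u' hu']
          exact Reachable.refl _
        · simp only [Sum.elim_inl, Sum.elim_inr, id_eq, hat]
          exact Reachable.refl _
        · simp only [Sum.elim_inl, Sum.elim_inr, id_eq, hat]
          exact Reachable.refl _
    have hT₀conn : T₀.Connected := by
      rw [connected_iff]
      refine ⟨fun u v => ?_, ⟨s'⟩⟩
      have := hproj (Sum.inl u) (Sum.inl v) (hTconn.preconnected _ _)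
      simpa using this
    have hT₀acyc : T₀.IsAcyclic := by
      intro v c hc
      have hmap : ((c.map ⟨Sum.inl, fun {u v} h => h⟩ : T.Walk _ _)).IsCycle :=
        (Walk.map_isCycle_iff_of_injective Sum.inl_injective).mpr hc
      exact hTacyc _ hmap
    have hT₀tree : T₀.IsTree := ⟨hT₀conn, hT₀acyc⟩
    -- neighbor sets in T of original vertices
    have hnbr : ∀ v : V, T.neighborSet (Sum.inl v) =
        Sum.inl '' (T₀.neighborSet v) ∪ Sum.inr '' {u | a u = v} := by
      intro v
      ext y
      constructor
      · intro hy
        match y with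
        | Sum.inl w => exact Or.inl ⟨w, hy, rfl⟩
        | Sum.inr u => exact Or.inr ⟨u, ((hHlr v u).mp (hTH hy)).symm, rfl⟩
      · rintro (⟨w, hw, rfl⟩ | ⟨u, hu, rfl⟩)
        · exact hw
        · exact (hu ▸ hpend u).symm
    have hNval : ∀ v : V, (T.neighborSet (Sum.inl v)).ncard =
        (T₀.neighborSet v).ncard + ({u | a u = v} : Set V).ncard := by
      intro v
      rw [hnbr v, Set.ncard_union_eq (hdisj _ _) (Set.toFinite _) (Set.toFinite _),
        Set.ncard_image_of_injective _ Sum.inl_injective,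
        Set.ncard_image_of_injective _ Sum.inr_injective]
    -- degree bounds
    have hd1 : ∀ v : V, 1 ≤ (T₀.neighborSet v).ncard := by
      intro v
      obtain ⟨u, hu⟩ := Fintype.exists_ne_of_one_lt_card (by omega) v
      obtain ⟨z, hz⟩ := exists_adj_of_reachable (hT₀conn.preconnected v u) (Ne.symm hu)
      rw [Nat.one_le_iff_ne_zero, Ne, Set.ncard_eq_zero (Set.toFinite _)]
      intro h0
      exact absurd (h0 ▸ hz : z ∈ (∅ : Set V)) (Set.notMem_empty z)
    have hd2 : ∀ v : V, v ≠ s' → v ≠ t → 2 ≤ (T₀.neighborSet v).ncard := by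
      intro v hvs hvt
      have h := hTdeg (Sum.inl v)
      rw [hNval v, hcnt_o v hvs hvt] at h
      have := hd1 v
      omega
    -- sum of degrees
    haveI : DecidableRel T₀.Adj := Classical.decRel _
    have hdeg_eq : ∀ v, (T₀.neighborSet v).ncard = T₀.degree v := by
      intro v
      rw [← card_neighborSet_eq_degree, Set.ncard_eq_toFinset_card', Set.toFinset_card]
    have hsum : ∑ v, (T₀.neighborSet v).ncard = 2 * (Fintype.card V - 1) := by
      have h1 : ∑ v, T₀.degree v = 2 * T₀.edgeFinset.card :=
        T₀.sum_degrees_eq_twice_card_edges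
      have h2 := hT₀tree.card_edgeFinset
      calc ∑ v, (T₀.neighborSet v).ncard = ∑ v, T₀.degree v := by
            exact Finset.sum_congr rfl fun v _ => hdeg_eq v
        _ = 2 * (Fintype.card V - 1) := by rw [h1]; omega
    -- exact degrees
    have hgsum : ∑ v : V, (if v = s' ∨ v = t then 1 else 2) = 2 * (Fintype.card V - 1) := by
      rw [Finset.sum_ite]
      have hfil : Finset.univ.filter (fun v : V => v = s' ∨ v = t) = {s', t} := by
        ext v; simp [Finset.mem_insert, Finset.mem_singleton]
      have hfil' : Finset.univ.filter (fun v : V => ¬(v = s' ∨ v = t)) = ({s', t} : Finset V)ᶜ := by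
        ext v; simp
      rw [hfil, hfil']
      simp only [Finset.sum_const, smul_eq_mul, mul_one]
      rw [Finset.card_compl, Finset.card_insert_of_notMem (by simp [hst]),
        Finset.card_singleton]
      omega
    have hexact : ∀ v : V, (T₀.neighborSet v).ncard = if v = s' ∨ v = t then 1 else 2 := by
      by_contra hcon
      push_neg at hcon
      obtain ⟨v₀, hv₀⟩ := hcon
      have hge : ∀ v ∈ Finset.univ, (if v = s' ∨ v = t then 1 else 2) ≤ (T₀.neighborSet v).ncard := by
        intro v _
        by_cases h : v = s' ∨ v = t
        · rw [if_pos h]; exact hd1 v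
        · push_neg at h
          rw [if_neg (by tauto)]
          exact hd2 v h.1 h.2
      have hlt : ∑ v : V, (if v = s' ∨ v = t then 1 else 2) < ∑ v, (T₀.neighborSet v).ncard :=
        Finset.sum_lt_sum hge ⟨v₀, Finset.mem_univ v₀,
          lt_of_le_of_ne (hge v₀ (Finset.mem_univ v₀)) (Ne.symm hv₀)⟩
      rw [hsum, hgsum] at hlt
      omega
    have hds : (T₀.neighborSet s').ncard = 1 := by
      have := hexact s'; simpa using this
    have hdt : (T₀.neighborSet t).ncard = 1 := by
      have := hexact t; simpa using this
    have hdo : ∀ v, v ≠ s' → v ≠ t → (T₀.neighborSet v).ncard = 2 := by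
      intro v h1 h2
      have := hexact v
      rwa [if_neg (by tauto)] at this
    -- the Hamiltonian path
    obtain ⟨w0⟩ := hT₀conn.preconnected s' t
    obtain ⟨p₀, hp₀⟩ : ∃ p : T₀.Walk s' t, p.IsPath := ⟨w0.toPath, w0.toPath.2⟩
    have hall : ∀ v : V, v ∈ p₀.support := by
      by_contra hcon
      push_neg at hcon
      obtain ⟨v, hv⟩ := hcon
      obtain ⟨w1⟩ := hT₀conn.preconnected v s'
      have claim : ∀ (x b : V) (w : T₀.Walk x b), b ∈ p₀.support → x ∉ p₀.support → False := by
        intro x b w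
        induction w with
        | nil => intro hb hx; exact hx hb
        | @cons x y _ hadj w' ih =>
          intro hb hx
          by_cases hy : y ∈ p₀.support
          · rcases eq_or_ne y s' with heq | hys
            · rw [heq] at hadj
              obtain ⟨z, hzs, hze, -⟩ :=
                unique_start_edge hp₀ (Walk.not_nil_of_ne hst)
              have hxz : x ≠ z := fun h => hx (h ▸ List.mem_of_mem_tail hzs)
              have hsub2 : ({x, z} : Set V) ⊆ T₀.neighborSet s' := by
                rintro w (rfl | rfl)
                · exact hadj.symm
                · exact p₀.adj_of_mem_edges hze
              have hle2 := Set.ncard_le_ncard hsub2 (Set.toFinite _)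
              rw [Set.ncard_pair hxz, hds] at hle2
              omega
            rcases eq_or_ne y t with heq | hyt
            · rw [heq] at hadj
              obtain ⟨z, hzs, hze, -⟩ :=
                unique_start_edge hp₀.reverse (Walk.not_nil_of_ne (Ne.symm hst))
              rw [Walk.edges_reverse, List.mem_reverse] at hze
              have hzs' : z ∈ p₀.support := by
                have := List.mem_of_mem_tail hzs
                rwa [Walk.support_reverse, List.mem_reverse] at this
              have hxz : x ≠ z := fun h => hx (h ▸ hzs')
              have hsub2 : ({x, z} : Set V) ⊆ T₀.neighborSet t := by
                rintro w (rfl | rfl)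
                · exact hadj.symm
                · exact p₀.adj_of_mem_edges hze
              have hle2 := Set.ncard_le_ncard hsub2 (Set.toFinite _)
              rw [Set.ncard_pair hxz, hdt] at hle2
              omega
            · obtain ⟨z₁, z₂, hz12, he₁, he₂⟩ := internal_two hp₀ hy hys hyt
              have hz₁s : z₁ ∈ p₀.support := p₀.snd_mem_support_of_mem_edges he₁
              have hz₂s : z₂ ∈ p₀.support := p₀.snd_mem_support_of_mem_edges he₂
              have hxz₁ : x ≠ z₁ := fun h => hx (h ▸ hz₁s)
              have hxz₂ : x ≠ z₂ := fun h => hx (h ▸ hz₂s)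
              have hsub3 : ({x, z₁, z₂} : Set V) ⊆ T₀.neighborSet y := by
                rintro w (rfl | rfl | rfl)
                · exact hadj.symm
                · exact p₀.adj_of_mem_edges he₁
                · exact p₀.adj_of_mem_edges he₂
              have hle3 := Set.ncard_le_ncard hsub3 (Set.toFinite _)
              rw [Set.ncard_insert_of_notMem (by simp [hxz₁, hxz₂]) (Set.toFinite _),
                Set.ncard_pair hz12, hdo y hys hyt] at hle3
              omega
          · exact ih hb hy
      exact claim v s' w1 p₀.start_mem_support hv
    have hham₀ : p₀.IsHamiltonian := hp₀.isHamiltonian_iff.mpr hall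
    refine ⟨p₀.mapLe hT₀G, ?_⟩
    exact hham₀.map _ (by exact Function.bijective_id)
  · rintro ⟨p, hp⟩
    have hpath : p.IsPath := hp.isPath
    set E : Set (Sym2 (V ⊕ V)) :=
      {e | ∃ c d, e = s(Sum.inl c, Sum.inl d) ∧ s(c, d) ∈ p.edges} ∪
      {e | ∃ u, e = s(Sum.inl (a u), Sum.inr u)} with hEdef
    set T : SimpleGraph (V ⊕ V) := SimpleGraph.fromEdgeSet E with hTdef
    -- adjacency characterizations of T
    have hTll : ∀ c d : V, T.Adj (Sum.inl c) (Sum.inl d) ↔ s(c, d) ∈ p.edges := by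
      intro c d
      rw [hTdef, fromEdgeSet_adj]
      constructor
      · rintro ⟨⟨c', d', heq, hmem⟩ | ⟨u, heq⟩, hne⟩
        · rw [Sym2.eq_iff] at heq
          rcases heq with ⟨h1, h2⟩ | ⟨h1, h2⟩
          · obtain rfl := Sum.inl_injective h1
            obtain rfl := Sum.inl_injective h2
            exact hmem
          · obtain rfl := Sum.inl_injective h1
            obtain rfl := Sum.inl_injective h2
            rwa [Sym2.eq_swap]
        · rw [Sym2.eq_iff] at heq
          rcases heq with ⟨h1, h2⟩ | ⟨h1, h2⟩ <;> simp at h1 h2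
      · intro h
        exact ⟨Or.inl ⟨c, d, rfl, h⟩, by simp [(p.adj_of_mem_edges h).ne]⟩
    have hTlr : ∀ (v u : V), T.Adj (Sum.inl v) (Sum.inr u) ↔ v = a u := by
      intro v u
      rw [hTdef, fromEdgeSet_adj]
      constructor
      · rintro ⟨⟨c', d', heq, -⟩ | ⟨u', heq⟩, -⟩
        · rw [Sym2.eq_iff] at heq
          rcases heq with ⟨h1, h2⟩ | ⟨h1, h2⟩ <;> simp at h1 h2
        · rw [Sym2.eq_iff] at heq
          rcases heq with ⟨h1, h2⟩ | ⟨h1, h2⟩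
          · obtain rfl := Sum.inr_injective h2
            exact Sum.inl_injective h1
          · simp at h1
      · rintro rfl
        exact ⟨Or.inr ⟨u, rfl⟩, by simp⟩
    have hTrr : ∀ u w : V, ¬ T.Adj (Sum.inr u) (Sum.inr w) := by
      intro u w h
      rw [hTdef, fromEdgeSet_adj] at h
      rcases h with ⟨⟨c', d', heq, -⟩ | ⟨u', heq⟩, -⟩
      · rw [Sym2.eq_iff] at heq
        rcases heq with ⟨h1, h2⟩ | ⟨h1, h2⟩ <;> simp at h1 h2
      · rw [Sym2.eq_iff] at heq
        rcases heq with ⟨h1, h2⟩ | ⟨h1, h2⟩ <;> simp at h1 h2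
    -- T ≤ H
    have hTH : T ≤ H := by
      intro x y h
      match x, y with
      | Sum.inl c, Sum.inl d => exact (hHll c d).mpr (p.adj_of_mem_edges ((hTll c d).mp h))
      | Sum.inl c, Sum.inr u => exact (hHlr c u).mpr ((hTlr c u).mp h)
      | Sum.inr u, Sum.inl c => exact ((hHlr c u).mpr ((hTlr c u).mp h.symm)).symm
      | Sum.inr u, Sum.inr w => exact absurd h (hTrr u w)
    -- the lifted Hamiltonian path in T
    have htrans : ∀ e ∈ p.edges, e ∈ (SimpleGraph.fromEdgeSet {e | e ∈ p.edges}).edgeSet := by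
      intro e he
      rw [edgeSet_fromEdgeSet]
      exact ⟨he, G.not_isDiag_of_mem_edgeSet (p.edges_subset_edgeSet he)⟩
    set φ : SimpleGraph.fromEdgeSet {e | e ∈ p.edges} →g T :=
      ⟨Sum.inl, fun {c d} h => (hTll c d).mpr (((fromEdgeSet_adj _).mp h).1)⟩ with hφdef
    set q : T.Walk (Sum.inl s') (Sum.inl t) := (p.transfer _ htrans).map φ with hqdef
    have hqsup : q.support = p.support.map Sum.inl := by
      rw [hqdef, Walk.support_map, Walk.support_transfer]
      rfl
    have hqedges : q.edges = p.edges.map (Sym2.map Sum.inl) := by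
      rw [hqdef, Walk.edges_map, Walk.edges_transfer]
      rfl
    have hqpath : q.IsPath := by
      rw [hqdef]
      exact Walk.map_isPath_of_injective Sum.inl_injective (hpath.transfer htrans)
    -- connectivity
    have hreach_l : ∀ v : V, T.Reachable (Sum.inl s') (Sum.inl v) := by
      intro v
      have hv : Sum.inl v ∈ q.support := by
        rw [hqsup]; exact List.mem_map_of_mem (hp.mem_support v)
      exact ⟨q.takeUntil _ hv⟩
    have hreach : ∀ x : V ⊕ V, T.Reachable (Sum.inl s') x := by
      intro x
      match x with
      | Sum.inl v => exact hreach_l v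
      | Sum.inr u => exact (hreach_l (a u)).trans (Adj.reachable ((hTlr (a u) u).mpr rfl))
    have hTconn : T.Connected := by
      rw [connected_iff]
      exact ⟨fun x y => (hreach x).symm.trans (hreach y), ⟨Sum.inl s'⟩⟩
    -- acyclicity
    have hTacyc : T.IsAcyclic := by
      intro x c hc
      have hnoinr : ∀ u : V, Sum.inr u ∉ c.support := by
        intro u hu
        obtain ⟨z₁, z₂, hne, he₁, he₂⟩ := cycle_two hc hu
        have hz : ∀ z, T.Adj (Sum.inr u) z → z = Sum.inl (a u) := by
          intro z hz
          match z with
          | Sum.inl v => rw [← (hTlr v u).mp hz.symm]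
          | Sum.inr w => exact absurd hz (hTrr u w)
        exact hne ((hz _ (c.adj_of_mem_edges he₁)).trans (hz _ (c.adj_of_mem_edges he₂)).symm)
      have hsub : ∀ e ∈ c.edges, e ∈ (SimpleGraph.fromEdgeSet {e | e ∈ q.edges}).edgeSet := by
        intro e he
        rw [edgeSet_fromEdgeSet]
        refine ⟨?_, T.not_isDiag_of_mem_edgeSet (c.edges_subset_edgeSet he)⟩
        obtain ⟨⟨x₁, y₁⟩, rfl⟩ := e.exists_rep
        have hx₁ : x₁ ∈ c.support := c.fst_mem_support_of_mem_edges he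
        have hy₁ : y₁ ∈ c.support := c.snd_mem_support_of_mem_edges he
        match x₁, y₁ with
        | Sum.inr u, _ => exact absurd hx₁ (hnoinr u)
        | Sum.inl cx, Sum.inr u => exact absurd hy₁ (hnoinr u)
        | Sum.inl cx, Sum.inl cy =>
          have hadj : T.Adj (Sum.inl cx) (Sum.inl cy) := c.adj_of_mem_edges he
          have hmem : s(cx, cy) ∈ p.edges := (hTll cx cy).mp hadj
          rw [hqedges]
          simp only [Set.mem_setOf_eq, List.mem_map]
          exact ⟨s(cx, cy), hmem, by rw [Sym2.map_pair_eq]⟩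
      exact pathgraph_acyclic q hqpath (c.transfer _ hsub) (hc.transfer hsub)
    -- degrees
    have hnbrr : ∀ u : V, T.neighborSet (Sum.inr u) = {Sum.inl (a u)} := by
      intro u
      ext z
      simp only [mem_neighborSet, Set.mem_singleton_iff]
      constructor
      · intro hz
        match z with
        | Sum.inl v => rw [← (hTlr v u).mp hz.symm]
        | Sum.inr w => exact absurd hz (hTrr u w)
      · rintro rfl
        exact ((hTlr (a u) u).mpr rfl).symm
    have hnbrl : ∀ v : V, T.neighborSet (Sum.inl v) =
        Sum.inl '' {w | s(v, w) ∈ p.edges} ∪ Sum.inr '' {u | a u = v} := by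
      intro v
      ext z
      constructor
      · intro hz
        match z with
        | Sum.inl w => exact Or.inl ⟨w, (hTll v w).mp hz, rfl⟩
        | Sum.inr u => exact Or.inr ⟨u, ((hTlr v u).mp hz).symm, rfl⟩
      · rintro (⟨w, hw, rfl⟩ | ⟨u, hu, rfl⟩)
        · exact (hTll v w).mpr hw
        · exact (hTlr v u).mpr hu.symm
    have hNval : ∀ v : V, (T.neighborSet (Sum.inl v)).ncard =
        ({w | s(v, w) ∈ p.edges} : Set V).ncard + ({u | a u = v} : Set V).ncard := by
      intro v
      rw [hnbrl v, Set.ncard_union_eq (hdisj _ _) (Set.toFinite _) (Set.toFinite _),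
        Set.ncard_image_of_injective _ Sum.inl_injective,
        Set.ncard_image_of_injective _ Sum.inr_injective]
    -- path-degree facts
    have hpds : ({w | s(s', w) ∈ p.edges} : Set V).ncard = 1 := by
      obtain ⟨z, -, hze, huniq⟩ := unique_start_edge hpath (Walk.not_nil_of_ne hst)
      have : ({w | s(s', w) ∈ p.edges} : Set V) = {z} := by
        ext w
        simp only [Set.mem_setOf_eq, Set.mem_singleton_iff]
        exact ⟨fun h => huniq w h, fun h => h ▸ hze⟩
      rw [this, Set.ncard_singleton]
    have hpdt : ({w | s(t, w) ∈ p.edges} : Set V).ncard = 1 := by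
      obtain ⟨z, -, hze, huniq⟩ := unique_start_edge hpath.reverse
        (Walk.not_nil_of_ne (Ne.symm hst))
      have : ({w | s(t, w) ∈ p.edges} : Set V) = {z} := by
        ext w
        simp only [Set.mem_setOf_eq, Set.mem_singleton_iff]
        constructor
        · intro h
          exact huniq w (by rwa [Walk.edges_reverse, List.mem_reverse])
        · intro h
          subst h
          rwa [Walk.edges_reverse, List.mem_reverse] at hze
      rw [this, Set.ncard_singleton]
    have hpdo : ∀ v : V, v ≠ s' → v ≠ t → 2 ≤ ({w | s(v, w) ∈ p.edges} : Set V).ncard := by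
      intro v hvs hvt
      obtain ⟨z₁, z₂, hz12, he₁, he₂⟩ := internal_two hpath (hp.mem_support v) hvs hvt
      have hsub2 : ({z₁, z₂} : Set V) ⊆ {w | s(v, w) ∈ p.edges} := by
        rintro w (rfl | rfl)
        · exact he₁
        · exact he₂
      have := Set.ncard_le_ncard hsub2 (Set.toFinite _)
      rwa [Set.ncard_pair hz12] at this
    have hdeg : ∀ x : V ⊕ V, (T.neighborSet x).ncard ≠ 2 := by
      intro x
      match x with
      | Sum.inr u => rw [hnbrr u, Set.ncard_singleton]; omega
      | Sum.inl v =>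
        rw [hNval v]
        rcases eq_or_ne v s' with rfl | hvs
        · rw [hpds, hcnt_s]; omega
        rcases eq_or_ne v t with rfl | hvt
        · rw [hpdt, hcnt_t]; omega
        · rw [hcnt_o v hvs hvt]
          have := hpdo v hvs hvt
          omega
    exact ⟨T, hTH, hTconn, hTacyc, hdeg⟩
end

section
/- Let T be a HIST of a graph H rooted at a vertex r with deg_T(r) ≥ 3, and let M be a module of H (every vertex outside M is adjacent either to all or to none of M). Suppose u, v ∈ M both have degree at least 3 in T, with u an ancestor-side vertex closest to the root among degree-≥3 vertices of M and u' the parent of u. Then reattaching each child w of v to u' (if w ∈ M) or to u (if w ∉ M) yields another spanning tree T' of H that is a HIST with strictly fewer degree-≥3 vertices in M. -/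
/-- In a tree `T` rooted at `r`, `w` is a child of `v` iff they are adjacent and `w` is
one step further from the root. -/
def IsChildOf {V : Type*} (T : SimpleGraph V) (r v w : V) : Prop :=
  T.Adj v w ∧ T.dist r w = T.dist r v + 1

/-- Rewiring lemma for modules: if `T` is a HIST of `H` rooted at `r` with `deg_T r ≥ 3`,
`M` is a module of `H`, `u, v ∈ M` both have degree at least 3 in `T`, `u` is closest to
the root among degree-≥3 vertices of `M`, and `u'` is the parent of `u`, then reattaching
each child `w` of `v` to `u'` (if `w ∈ M`) or to `u` (if `w ∉ M`) yields a spanning tree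
`T'` of `H` that is a HIST with strictly fewer degree-≥3 vertices in `M`. -/
theorem stmt14 {V : Type*} [Fintype V] (H T : SimpleGraph V) (r : V)
    (hT : IsHIST H T) (hr : 3 ≤ (T.neighborSet r).ncard)
    (M : Set V)
    (hmodule : ∀ x ∉ M, (∀ y ∈ M, H.Adj x y) ∨ (∀ y ∈ M, ¬ H.Adj x y))
    (u v : V) (hu : u ∈ M) (hv : v ∈ M) (huv : u ≠ v)
    (hdegu : 3 ≤ (T.neighborSet u).ncard) (hdegv : 3 ≤ (T.neighborSet v).ncard)
    (hclosest : ∀ w ∈ M, 3 ≤ (T.neighborSet w).ncard → T.dist r u ≤ T.dist r w)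
    (u' : V) (hparent : IsChildOf T r u' u)
    (T' : SimpleGraph V)
    (hT' : ∀ x y : V, T'.Adj x y ↔
      (T.Adj x y ∧ ¬(x = v ∧ IsChildOf T r v y) ∧ ¬(y = v ∧ IsChildOf T r v x)) ∨
      (∃ w, IsChildOf T r v w ∧ w ∈ M ∧ ((x = u' ∧ y = w) ∨ (x = w ∧ y = u'))) ∨
      (∃ w, IsChildOf T r v w ∧ w ∉ M ∧ ((x = u ∧ y = w) ∨ (x = w ∧ y = u)))) :
    IsHIST H T' ∧
      {x ∈ M | 3 ≤ (T'.neighborSet x).ncard}.ncard <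
        {x ∈ M | 3 ≤ (T.neighborSet x).ncard}.ncard := by
  classical
  obtain ⟨hle, hconn, hacyc, hdeg2⟩ := hT
  obtain ⟨hadj_pu, hdu⟩ := hparent
  -- basic distance helpers
  have hzero : ∀ x : V, T.dist r x = 0 → x = r := by
    intro x hx
    rcases SimpleGraph.dist_eq_zero_iff_eq_or_not_reachable.mp hx with h | h
    · exact h.symm
    · exact absurd (hconn r x) h
  have pathTo : ∀ x : V, ∃ P : T.Walk r x, P.IsPath ∧ P.length = T.dist r x := by
    intro x
    obtain ⟨w, hw⟩ := hconn.exists_walk_length_eq_dist r x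
    exact ⟨w.bypass, w.bypass_isPath,
      le_antisymm (hw ▸ w.length_bypass_le) (SimpleGraph.dist_le _)⟩
  have hsupp : ∀ (x y : V) (P : T.Walk r x), y ∈ P.support → T.dist r y ≤ P.length := by
    intro x y P hy
    exact le_trans (SimpleGraph.dist_le _) (P.length_takeUntil_le hy)
  have hstep : ∀ x y : V, T.Adj x y → T.dist r y ≤ T.dist r x + 1 := by
    intro x y hxy
    obtain ⟨P, _, hPl⟩ := pathTo x
    have h := SimpleGraph.dist_le (P.concat hxy)
    rwa [SimpleGraph.Walk.length_concat, hPl] at h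
  have hconcat : ∀ {x y : V} (P : T.Walk r x) (h : T.Adj x y),
      P.IsPath → y ∉ P.support → (P.concat h).IsPath := by
    intro x y P h hP hy
    rw [← SimpleGraph.Walk.isPath_reverse_iff, SimpleGraph.Walk.reverse_concat,
      SimpleGraph.Walk.cons_isPath_iff]
    exact ⟨hP.reverse, by simpa [SimpleGraph.Walk.support_reverse] using hy⟩
  have factB : ∀ x y : V, T.Adj x y →
      T.dist r x + 1 = T.dist r y ∨ T.dist r y + 1 = T.dist r x := by
    intro x y hxy
    have h1 := hstep x y hxy
    have h2 := hstep y x hxy.symm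
    by_contra hcon
    push_neg at hcon
    obtain ⟨hc1, hc2⟩ := hcon
    have heq : T.dist r x = T.dist r y := by omega
    obtain ⟨P, hP, hPl⟩ := pathTo x
    obtain ⟨Q, hQ, hQl⟩ := pathTo y
    have hy : y ∉ P.support := by
      intro hy
      have h3 : T.dist r y ≤ (P.takeUntil y hy).length := SimpleGraph.dist_le _
      have h4 : (P.takeUntil y hy).length + (P.dropUntil y hy).length = P.length := by
        have h5 := congrArg SimpleGraph.Walk.length (P.take_spec hy)
        rwa [SimpleGraph.Walk.length_append] at h5
      have h5 : (P.dropUntil y hy).length = 0 := by omega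
      exact hxy.ne' (SimpleGraph.Walk.eq_of_length_eq_zero h5)
    have hP' : (P.concat hxy).IsPath := hconcat P hxy hP hy
    have he := hacyc.path_unique ⟨P.concat hxy, hP'⟩ ⟨Q, hQ⟩
    have hlen := congrArg SimpleGraph.Walk.length (congrArg Subtype.val he)
    rw [SimpleGraph.Walk.length_concat] at hlen
    simp only at hlen
    omega
  have factC : ∀ x p q : V, T.Adj p x → T.Adj q x →
      T.dist r p + 1 = T.dist r x → T.dist r q + 1 = T.dist r x → p = q := by
    intro x p q hpx hqx hp hq
    obtain ⟨P, hP, hPl⟩ := pathTo p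
    obtain ⟨Q, hQ, hQl⟩ := pathTo q
    have hxP : x ∉ P.support := fun h => by have := hsupp p x P h; omega
    have hxQ : x ∉ Q.support := fun h => by have := hsupp q x Q h; omega
    have h1 : (P.concat hpx).IsPath := hconcat P hpx hP hxP
    have h2 : (Q.concat hqx).IsPath := hconcat Q hqx hQ hxQ
    have he := hacyc.path_unique ⟨P.concat hpx, h1⟩ ⟨Q.concat hqx, h2⟩
    have he' : P.concat hpx = Q.concat hqx := congrArg Subtype.val he
    obtain ⟨hpq, -⟩ := SimpleGraph.Walk.concat_inj he'
    exact hpq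
  have factA : ∀ x : V, x ≠ r → ∃ p : V, T.Adj p x ∧ T.dist r p + 1 = T.dist r x := by
    intro x hx
    obtain ⟨w, hw⟩ := hconn.exists_walk_length_eq_dist x r
    cases w with
    | nil => exact absurd rfl hx
    | @cons _ b _ h t =>
      refine ⟨b, h.symm, ?_⟩
      have h1 : T.dist b r ≤ t.length := SimpleGraph.dist_le t
      rw [SimpleGraph.Walk.length_cons] at hw
      have h2 : T.dist r b ≤ t.length := by rwa [SimpleGraph.dist_comm]
      have h3 : T.dist r x ≤ T.dist r b + 1 := hstep b x h.symm
      have h4 : T.dist r x = T.dist x r := SimpleGraph.dist_comm ..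
      omega
  -- basic vertex facts
  have hdless : T.dist r u ≤ T.dist r v := hclosest v hv hdegv
  have hvr : v ≠ r := by
    intro h
    subst h
    rw [SimpleGraph.dist_self] at hdless
    omega
  have hdegu' : 3 ≤ (T.neighborSet u').ncard := by
    by_cases h : u' = r
    · subst h; exact hr
    · obtain ⟨p', hp', hdp'⟩ := factA u' h
      have hne : u ≠ p' := by intro h'; subst h'; omega
      have hsub : {u, p'} ⊆ T.neighborSet u' := by
        intro z hz
        rcases hz with rfl | rfl
        · exact hadj_pu
        · exact hp'.symm
      have h2 : ({u, p'} : Set V).ncard = 2 := Set.ncard_pair hne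
      have h3 := Set.ncard_le_ncard hsub (Set.toFinite _)
      have h4 := hdeg2 u'
      omega
  have hMu' : u' ∉ M := by
    intro h
    have := hclosest u' h hdegu'
    omega
  have hvu' : u' ≠ v := by
    intro h
    subst h
    omega
  have hnotchild_u : ¬ IsChildOf T r v u := fun h => by have := h.2; omega
  have hnotchild_u' : ¬ IsChildOf T r v u' := fun h => by have := h.2; omega
  have hnotchild_v : ¬ IsChildOf T r v v := fun h => h.1.ne rfl
  have hchild_ne_u : ∀ w, IsChildOf T r v w → w ≠ u := by
    intro w hw h
    subst h
    exact hnotchild_u hw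
  have hchild_ne_u' : ∀ w, IsChildOf T r v w → w ≠ u' := by
    intro w hw h
    subst h
    exact hnotchild_u' hw
  have hnadj_u : ∀ w, IsChildOf T r v w → ¬ T.Adj u w := by
    intro w hw h
    have hd := hw.2
    rcases factB u w h with hb | hb
    · have huveq : T.dist r u = T.dist r v := by omega
      exact huv (factC w u v h hw.1 hb (by omega))
    · omega
  have hnadj_u' : ∀ w, IsChildOf T r v w → ¬ T.Adj u' w := by
    intro w hw h
    have := hstep u' w h
    have := hw.2
    omega
  obtain ⟨p, hpv, hdp⟩ := factA v hvr
  -- neighbor set characterizations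
  have Ngen : ∀ x : V, x ≠ v → x ≠ u → x ≠ u' → ¬IsChildOf T r v x →
      T'.neighborSet x = T.neighborSet x := by
    intro x hxv hxu hxu' hxc
    ext y
    constructor
    · intro hy
      rcases (hT' x y).mp hy with ⟨h, -, -⟩ | ⟨w, hw, hwM, (⟨hx, hy'⟩ | ⟨hx, hy'⟩)⟩ |
        ⟨w, hw, hwM, (⟨hx, hy'⟩ | ⟨hx, hy'⟩)⟩
      · exact h
      · exact absurd hx hxu'
      · exact absurd (hx ▸ hw) hxc
      · exact absurd hx hxu
      · exact absurd (hx ▸ hw) hxc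
    · intro h
      exact (hT' x y).mpr (Or.inl ⟨h, fun hc => hxv hc.1, fun hc => hxc hc.2⟩)
  have Nv : T'.neighborSet v = {p} := by
    ext y
    constructor
    · intro hy
      rcases (hT' v y).mp hy with ⟨h, h1, -⟩ | ⟨w, hw, hwM, (⟨hx, hy'⟩ | ⟨hx, hy'⟩)⟩ |
        ⟨w, hw, hwM, (⟨hx, hy'⟩ | ⟨hx, hy'⟩)⟩
      · have hyc : ¬ IsChildOf T r v y := fun hc => h1 ⟨rfl, hc⟩
        rcases factB v y h with hb | hb
        · exact absurd ⟨h, hb.symm⟩ hyc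
        · exact factC v y p h.symm hpv hb hdp
      · exact absurd hx.symm hvu'
      · exact absurd (hx ▸ hw) hnotchild_v
      · exact absurd hx.symm huv
      · exact absurd (hx ▸ hw) hnotchild_v
    · intro hy
      have hyp : y = p := hy
      refine (hT' v y).mpr (Or.inl ⟨hyp ▸ hpv.symm, fun hc => ?_, fun hc => (hyp ▸ hpv.ne : y ≠ v) hc.1⟩)
      have h6 := hc.2.2
      rw [hyp] at h6
      omega
  have Nu : T'.neighborSet u = T.neighborSet u ∪ {w | IsChildOf T r v w ∧ w ∉ M} := by
    ext y
    constructor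
    · intro hy
      rcases (hT' u y).mp hy with ⟨h, -, -⟩ | ⟨w, hw, hwM, (⟨hx, hy'⟩ | ⟨hx, hy'⟩)⟩ |
        ⟨w, hw, hwM, (⟨hx, hy'⟩ | ⟨hx, hy'⟩)⟩
      · exact Or.inl h
      · exact absurd (hx.symm ▸ hadj_pu) (T.loopless.irrefl u)
      · exact absurd (hx ▸ hw) hnotchild_u
      · exact Or.inr ⟨hy' ▸ hw, hy' ▸ hwM⟩
      · exact absurd (hx ▸ hw) hnotchild_u
    · rintro (h | ⟨hw, hwM⟩)
      · exact (hT' u y).mpr (Or.inl ⟨h, fun hc => huv hc.1, fun hc => hnotchild_u hc.2⟩)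
      · exact (hT' u y).mpr (Or.inr (Or.inr ⟨y, hw, hwM, Or.inl ⟨rfl, rfl⟩⟩))
  have Nu' : T'.neighborSet u' = T.neighborSet u' ∪ {w | IsChildOf T r v w ∧ w ∈ M} := by
    ext y
    constructor
    · intro hy
      rcases (hT' u' y).mp hy with ⟨h, -, -⟩ | ⟨w, hw, hwM, (⟨hx, hy'⟩ | ⟨hx, hy'⟩)⟩ |
        ⟨w, hw, hwM, (⟨hx, hy'⟩ | ⟨hx, hy'⟩)⟩
      · exact Or.inl h
      · exact Or.inr ⟨hy' ▸ hw, hy' ▸ hwM⟩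
      · exact absurd (hx ▸ hw) hnotchild_u'
      · exact absurd hx hadj_pu.ne
      · exact absurd (hx ▸ hw) hnotchild_u'
    · rintro (h | ⟨hw, hwM⟩)
      · exact (hT' u' y).mpr
          (Or.inl ⟨h, fun hc => hvu' hc.1, fun hc => hnotchild_u' hc.2⟩)
      · exact (hT' u' y).mpr (Or.inr (Or.inl ⟨y, hw, hwM, Or.inl ⟨rfl, rfl⟩⟩))
  have NchildM : ∀ w, IsChildOf T r v w → w ∈ M →
      T'.neighborSet w = insert u' (T.neighborSet w \ {v}) := by
    intro w hw hM
    ext y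
    constructor
    · intro hy
      rcases (hT' w y).mp hy with ⟨h, -, h2⟩ | ⟨w', hw', hwM', (⟨hx, hy'⟩ | ⟨hx, hy'⟩)⟩ |
        ⟨w', hw', hwM', (⟨hx, hy'⟩ | ⟨hx, hy'⟩)⟩
      · exact Or.inr ⟨h, fun hy0 => h2 ⟨hy0, hw⟩⟩
      · exact absurd hx (hchild_ne_u' w hw)
      · exact Or.inl hy'
      · exact absurd hx (hchild_ne_u w hw)
      · exact absurd (hx ▸ hM : w' ∈ M) hwM'
    · rintro (hy1 | ⟨h, hy⟩)
      · exact (hT' w y).mpr (Or.inr (Or.inl ⟨w, hw, hM, Or.inr ⟨rfl, hy1⟩⟩))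
      · exact (hT' w y).mpr
          (Or.inl ⟨h, fun hc => hw.1.ne' hc.1, fun hc => hy hc.1⟩)
  have NchildNM : ∀ w, IsChildOf T r v w → w ∉ M →
      T'.neighborSet w = insert u (T.neighborSet w \ {v}) := by
    intro w hw hM
    ext y
    constructor
    · intro hy
      rcases (hT' w y).mp hy with ⟨h, -, h2⟩ | ⟨w', hw', hwM', (⟨hx, hy'⟩ | ⟨hx, hy'⟩)⟩ |
        ⟨w', hw', hwM', (⟨hx, hy'⟩ | ⟨hx, hy'⟩)⟩
      · exact Or.inr ⟨h, fun hy0 => h2 ⟨hy0, hw⟩⟩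
      · exact absurd hx (hchild_ne_u' w hw)
      · exact absurd (hx ▸ hwM' : w ∈ M) hM
      · exact absurd hx (hchild_ne_u w hw)
      · exact Or.inl hy'
    · rintro (hy1 | ⟨h, hy⟩)
      · exact (hT' w y).mpr (Or.inr (Or.inr ⟨w, hw, hM, Or.inr ⟨rfl, hy1⟩⟩))
      · exact (hT' w y).mpr
          (Or.inl ⟨h, fun hc => hw.1.ne' hc.1, fun hc => hy hc.1⟩)
  have Ncard_child : ∀ w, IsChildOf T r v w →
      (T'.neighborSet w).ncard = (T.neighborSet w).ncard := by
    intro w hw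
    have hvmem : v ∈ T.neighborSet w := hw.1.symm
    have hdiff : (T.neighborSet w \ {v}).ncard + 1 = (T.neighborSet w).ncard :=
      Set.ncard_diff_singleton_add_one hvmem (Set.toFinite _)
    by_cases hM : w ∈ M
    · rw [NchildM w hw hM, Set.ncard_insert_of_notMem
        (fun hc => hnadj_u' w hw hc.1.symm) (Set.toFinite _)]
      omega
    · rw [NchildNM w hw hM, Set.ncard_insert_of_notMem
        (fun hc => hnadj_u w hw hc.1.symm) (Set.toFinite _)]
      omega
  -- connectivity of T'
  have reach : ∀ n : ℕ, ∀ x : V, T.dist r x = n → T'.Reachable r x := by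
    intro n
    induction n using Nat.strong_induction_on with
    | _ n ih =>
      intro x hx
      rcases Nat.eq_zero_or_pos n with rfl | hpos
      · rw [hzero x hx]
      · have hxr : x ≠ r := by
          intro h
          subst h
          rw [SimpleGraph.dist_self] at hx
          omega
        obtain ⟨q, hq, hdq⟩ := factA x hxr
        by_cases hc : q = v ∧ IsChildOf T r v x
        · obtain ⟨hqv, hcx⟩ := hc
          have hdx := hcx.2
          by_cases hM : x ∈ M
          · have h1 : T'.Adj u' x :=
              (hT' u' x).mpr (Or.inr (Or.inl ⟨x, hcx, hM, Or.inl ⟨rfl, rfl⟩⟩))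
            have h2 := ih (T.dist r u') (by omega) u' rfl
            exact h2.trans h1.reachable
          · have h1 : T'.Adj u x :=
              (hT' u x).mpr (Or.inr (Or.inr ⟨x, hcx, hM, Or.inl ⟨rfl, rfl⟩⟩))
            have h2 := ih (T.dist r u) (by omega) u rfl
            exact h2.trans h1.reachable
        · have h1 : T'.Adj q x := by
            refine (hT' q x).mpr (Or.inl ⟨hq, fun hh => hc ⟨hh.1, hh.2⟩, fun hh => ?_⟩)
            have h3 := hh.2.2
            have h4 : T.dist r x = T.dist r v := by rw [hh.1]
            omega
          exact (ih (T.dist r q) (by omega) q rfl).trans h1.reachable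
  have hT'conn : T'.Connected := by
    rw [SimpleGraph.connected_iff]
    exact ⟨fun a b => ((reach _ a rfl).symm.trans (reach _ b rfl)), ⟨r⟩⟩
  -- every edge of T' changes the distance-to-root
  have edge_ne : ∀ x y : V, T'.Adj x y → T.dist r x ≠ T.dist r y := by
    intro x y h
    rcases (hT' x y).mp h with ⟨h, -, -⟩ | ⟨w, hw, hwM, (⟨hx, hy⟩ | ⟨hx, hy⟩)⟩ |
      ⟨w, hw, hwM, (⟨hx, hy⟩ | ⟨hx, hy⟩)⟩
    · rcases factB x y h with hb | hb <;> omega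
    · have := hw.2
      subst hx; subst hy
      omega
    · have := hw.2
      subst hx; subst hy
      omega
    · have := hw.2
      subst hx; subst hy
      omega
    · have := hw.2
      subst hx; subst hy
      omega
  -- unique smaller neighbor
  have uniqueDown : ∀ z a b : V, T'.Adj z a → T'.Adj z b →
      T.dist r a < T.dist r z → T.dist r b < T.dist r z → a = b := by
    intro z a b hza hzb hda hdb
    have key : ∀ c : V, T'.Adj z c → T.dist r c < T.dist r z →
        (T.Adj z c ∧ T.dist r c + 1 = T.dist r z) ∨
        (IsChildOf T r v z ∧ z ∈ M ∧ c = u') ∨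
        (IsChildOf T r v z ∧ z ∉ M ∧ c = u) := by
      intro c hzc hdc
      rcases (hT' z c).mp hzc with ⟨h, -, -⟩ | ⟨w, hw, hwM, (⟨hx, hy⟩ | ⟨hx, hy⟩)⟩ |
        ⟨w, hw, hwM, (⟨hx, hy⟩ | ⟨hx, hy⟩)⟩
      · rcases factB z c h with hb | hb
        · omega
        · exact Or.inl ⟨h, hb⟩
      · -- z = u', c = w : child is higher, contradiction
        have := hw.2
        subst hx; subst hy
        omega
      · -- z = w child, c = u'
        subst hy
        exact Or.inr (Or.inl ⟨hx ▸ hw, hx ▸ hwM, rfl⟩)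
      · have := hw.2
        subst hx; subst hy
        omega
      · subst hy
        exact Or.inr (Or.inr ⟨hx ▸ hw, hx ▸ hwM, rfl⟩)
    have hnov : ∀ c : V, IsChildOf T r v c → ¬ T'.Adj c v := by
      intro c hc hadj
      have hm : v ∈ T'.neighborSet c := hadj
      by_cases hM : c ∈ M
      · rw [NchildM c hc hM] at hm
        rcases hm with h | h
        · exact hvu' h.symm
        · exact h.2 rfl
      · rw [NchildNM c hc hM] at hm
        rcases hm with h | h
        · exact huv h.symm
        · exact h.2 rfl
    have hparentv : ∀ c : V, IsChildOf T r v c → ∀ e : V, T.Adj e c →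
        T.dist r e + 1 = T.dist r c → e = v := by
      intro c hc e he hde
      exact factC c e v he hc.1 hde (by have := hc.2; omega)
    rcases key a hza hda with ⟨h1, h2⟩ | ⟨hcz, hzM, rfl⟩ | ⟨hcz, hzM, rfl⟩ <;>
      rcases key b hzb hdb with ⟨h3, h4⟩ | ⟨hcz', hzM', rfl⟩ | ⟨hcz', hzM', rfl⟩
    · exact factC z a b h1.symm h3.symm h2 h4
    · exact absurd ((hparentv z hcz' a h1.symm h2) ▸ hza) (hnov z hcz')
    · exact absurd ((hparentv z hcz' a h1.symm h2) ▸ hza) (hnov z hcz')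
    · exact absurd ((hparentv z hcz b h3.symm h4) ▸ hzb) (hnov z hcz)
    · rfl
    · exact absurd hzM hzM'
    · exact absurd ((hparentv z hcz b h3.symm h4) ▸ hzb) (hnov z hcz)
    · exact absurd hzM' hzM
    · rfl
  -- acyclicity
  have hT'acyc : T'.IsAcyclic := by
    intro x c hc
    -- choose a support vertex of maximal distance from r
    obtain ⟨z, hzmem, hzmax⟩ := Finset.exists_max_image c.support.toFinset
      (fun y => T.dist r y) ⟨x, by simp [c.start_mem_support]⟩
    simp only [List.mem_toFinset] at hzmem
    have hzmax' : ∀ y ∈ c.support, T.dist r y ≤ T.dist r z := by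
      intro y hy
      exact hzmax y (by simpa using hy)
    set c' := c.rotate z hzmem with hc'def
    have hc' : c'.IsCycle := hc.rotate hzmem
    have hsup : ∀ y ∈ c'.support, T.dist r y ≤ T.dist r z := by
      intro y hy
      rw [c'.support_eq_cons] at hy
      rcases List.mem_cons.mp hy with rfl | hy2
      · exact le_refl _
      · exact hzmax' y (List.mem_of_mem_tail
          (((SimpleGraph.Walk.support_rotate c z hzmem).mem_iff).mp hy2))
    have hlen3 : 3 ≤ c'.length := hc'.three_le_length
    obtain ⟨b, hzb, q, hq⟩ := SimpleGraph.Walk.not_nil_iff.mp hc'.not_nil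
    have hqpath : q.IsPath ∧ _ := (SimpleGraph.Walk.cons_isCycle_iff q hzb).mp (hq ▸ hc')
    have hql : 2 ≤ q.length := by
      have := congrArg SimpleGraph.Walk.length hq
      rw [SimpleGraph.Walk.length_cons] at this
      omega
    have hqrevnil : ¬ q.reverse.Nil := by
      rw [SimpleGraph.Walk.not_nil_iff_lt_length, SimpleGraph.Walk.length_reverse]
      omega
    obtain ⟨a, hza, q2, hq2⟩ := SimpleGraph.Walk.not_nil_iff.mp hqrevnil
    have hab : a ≠ b := by
      intro h
      subst h
      have hrevpath : q.reverse.IsPath := hqpath.1.reverse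
      rw [hq2, SimpleGraph.Walk.cons_isPath_iff] at hrevpath
      have : q2 = SimpleGraph.Walk.nil := (SimpleGraph.Walk.isPath_iff_eq_nil (p := q2)).mp hrevpath.1
      have hl := congrArg SimpleGraph.Walk.length hq2
      rw [this] at hl
      simp [SimpleGraph.Walk.length_reverse] at hl
      omega
    have hbmem : b ∈ c'.support := by
      rw [hq, SimpleGraph.Walk.support_cons]
      exact List.mem_cons_of_mem _ q.start_mem_support
    have hamem : a ∈ c'.support := by
      have h1 : a ∈ q.reverse.support := by
        rw [hq2, SimpleGraph.Walk.support_cons]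
        exact List.mem_cons_of_mem _ q2.start_mem_support
      rw [SimpleGraph.Walk.support_reverse, List.mem_reverse] at h1
      rw [hq, SimpleGraph.Walk.support_cons]
      exact List.mem_cons_of_mem _ h1
    have hb_lt : T.dist r b < T.dist r z :=
      lt_of_le_of_ne (hsup b hbmem) (fun h => edge_ne z b hzb h.symm)
    have ha_lt : T.dist r a < T.dist r z :=
      lt_of_le_of_ne (hsup a hamem) (fun h => edge_ne z a hza h.symm)
    exact hab (uniqueDown z a b hza hzb ha_lt hb_lt)
  -- T' is a subgraph of H
  have hT'le : T' ≤ H := by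
    intro x y h
    rcases (hT' x y).mp h with ⟨h, -, -⟩ | ⟨w, hw, hwM, hcase⟩ | ⟨w, hw, hwM, hcase⟩
    · exact hle h
    · have hu'w : H.Adj u' w := by
        rcases hmodule u' hMu' with hall | hnone
        · exact hall w hwM
        · exact absurd (hle hadj_pu) (hnone u hu)
      rcases hcase with ⟨hx, hy⟩ | ⟨hx, hy⟩
      · subst hx; subst hy; exact hu'w
      · subst hx; subst hy; exact hu'w.symm
    · have hwu : H.Adj w u := by
        rcases hmodule w hwM with hall | hnone
        · exact hall u hu
        · exact absurd (hle hw.1.symm) (hnone v hv)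
      rcases hcase with ⟨hx, hy⟩ | ⟨hx, hy⟩
      · subst hx; subst hy; exact hwu.symm
      · subst hx; subst hy; exact hwu
  -- degree conditions
  have hdeg'v : (T'.neighborSet v).ncard = 1 := by
    rw [Nv]
    exact Set.ncard_singleton p
  have hdeg'u : 3 ≤ (T'.neighborSet u).ncard := by
    refine le_trans hdegu (Set.ncard_le_ncard ?_ (Set.toFinite _))
    rw [Nu]
    exact Set.subset_union_left
  have hdeg'u' : 3 ≤ (T'.neighborSet u').ncard := by
    refine le_trans hdegu' (Set.ncard_le_ncard ?_ (Set.toFinite _))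
    rw [Nu']
    exact Set.subset_union_left
  have hT'deg : ∀ x : V, (T'.neighborSet x).ncard ≠ 2 := by
    intro x
    by_cases hxc : IsChildOf T r v x
    · rw [Ncard_child x hxc]
      exact hdeg2 x
    by_cases hxv : x = v
    · subst hxv
      omega
    by_cases hxu : x = u
    · subst hxu
      omega
    by_cases hxu' : x = u'
    · subst hxu'
      omega
    · rw [Ngen x hxv hxu hxu' hxc]
      exact hdeg2 x
  refine ⟨⟨hT'le, hT'conn, hT'acyc, hT'deg⟩, ?_⟩
  -- the counting argument
  have hsub : {x ∈ M | 3 ≤ (T'.neighborSet x).ncard} ⊆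
      {x ∈ M | 3 ≤ (T.neighborSet x).ncard} := by
    rintro x ⟨hxM, hx3⟩
    refine ⟨hxM, ?_⟩
    by_cases hxc : IsChildOf T r v x
    · rwa [Ncard_child x hxc] at hx3
    by_cases hxv : x = v
    · subst hxv
      omega
    by_cases hxu : x = u
    · subst hxu
      exact hdegu
    by_cases hxu' : x = u'
    · exact absurd (hxu' ▸ hxM) hMu'
    · rwa [Ngen x hxv hxu hxu' hxc] at hx3
  have hvS : v ∈ {x ∈ M | 3 ≤ (T.neighborSet x).ncard} := ⟨hv, hdegv⟩
  have hvS' : v ∉ {x ∈ M | 3 ≤ (T'.neighborSet x).ncard} := by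
    rintro ⟨-, h3⟩
    omega
  exact Set.ncard_lt_ncard ⟨hsub, fun h => hvS' (h hvS)⟩ (Set.toFinite _)
end
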